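/- arXiv:2210.11131 — 5 statements merged into one kernel-verified Lean document; each statement's English description precedes it below -/
import Mathlib

section
/- Let X be a real Banach space which is uniformly convex with modulus η and let b ≥ 1/2 be a real number. Define, for all ε ∈ (0,2], ψ_{b,η}(ε) := min( (min(ε/2, (ε²/(72b))·η(ε/(2b))²))²/4 , (ε²/48)·η(ε/(2b))² ). Then for all ε ∈ (0,2]: (a) ψ_{b,η}(ε) > 0; and (b) for all x, y ∈ X with ‖x‖ ≤ b, ‖y‖ ≤ b and ‖x − y‖ ≥ ε, one has ‖(x+y)/2‖² + ψ_{b,η}(ε) ≤ (1/2)‖x‖² + (1/2)‖y‖². -/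
/-!
Assume `‖y‖ ≤ ‖x‖` and write `η` for `η (ε / (2b))` and `δ = min (ε / 2) (ε² η² / (72 b))`.
If `‖x‖ - ‖y‖ ≥ δ`, the identity `((s + t) / 2)² + ((s - t) / 2)² = (s² + t²) / 2` already yields
the gap `δ² / 4`. Otherwise `‖y‖` is close to `‖x‖ ≥ ε / 2`; rescaling by `‖x‖` and applying
uniform convexity at `ε / (2b)` gives `‖(x + y) / 2‖ ≤ (1 - η) ‖x‖`, and the loss
`η ‖x‖² ≥ η² ε² / 4` dominates both `ε² η² / 48` and the defect `‖x‖ δ ≤ b δ` caused by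
`‖y‖ < ‖x‖`.
-/

/-- The quantity ψ_{b,η}(ε) from Proposition 2.4 of Kohlenbach–Sipoş. -/
noncomputable def psiModulus (η : ℝ → ℝ) (b ε : ℝ) : ℝ :=
  min ((min (ε / 2) (ε ^ 2 / (72 * b) * η (ε / (2 * b)) ^ 2)) ^ 2 / 4)
      (ε ^ 2 / 48 * η (ε / (2 * b)) ^ 2)

section Midpoint

variable {E : Type*} [SeminormedAddCommGroup E] [NormedSpace ℝ E]

lemma norm_midpoint_le_add_div_two (x y : E) :
    ‖(1 / 2 : ℝ) • (x + y)‖ ≤ (‖x‖ + ‖y‖) / 2 := by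
  rw [norm_smul, Real.norm_of_nonneg (by norm_num)]
  linarith [norm_add_le x y]

lemma sq_norm_midpoint_add_sq_le (x y : E) :
    ‖(1 / 2 : ℝ) • (x + y)‖ ^ 2 + ((‖x‖ - ‖y‖) / 2) ^ 2 ≤
      (1 / 2) * ‖x‖ ^ 2 + (1 / 2) * ‖y‖ ^ 2 := by
  have hmid := norm_midpoint_le_add_div_two x y
  have hsq : ‖(1 / 2 : ℝ) • (x + y)‖ ^ 2 ≤ ((‖x‖ + ‖y‖) / 2) ^ 2 :=
    pow_le_pow_left₀ (norm_nonneg _) hmid 2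
  nlinarith

lemma norm_midpoint_le_of_uniformConvex {δ θ r : ℝ}
    (huc : ∀ u v : E, ‖u‖ ≤ 1 → ‖v‖ ≤ 1 → δ ≤ ‖u - v‖ → ‖(1 / 2 : ℝ) • (u + v)‖ ≤ 1 - θ)
    (hr : 0 < r) {x y : E} (hx : ‖x‖ ≤ r) (hy : ‖y‖ ≤ r) (hxy : r * δ ≤ ‖x - y‖) :
    ‖(1 / 2 : ℝ) • (x + y)‖ ≤ (1 - θ) * r := by
  have hscale : ∀ z : E, ‖r⁻¹ • z‖ = ‖z‖ / r := fun z => by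
    rw [norm_smul, norm_inv, Real.norm_of_nonneg hr.le, inv_mul_eq_div]
  have h := huc (r⁻¹ • x) (r⁻¹ • y)
    (by rw [hscale, div_le_one hr]; exact hx) (by rw [hscale, div_le_one hr]; exact hy)
    (by rw [← smul_sub, hscale, le_div_iff₀ hr, mul_comm]; exact hxy)
  rwa [← smul_add, smul_comm, hscale, div_le_iff₀ hr] at h

end Midpoint

lemma psiModulus_pos {η : ℝ → ℝ} {b ε : ℝ} (hb : 0 < b) (hε : 0 < ε)
    (hη : 0 < η (ε / (2 * b))) : 0 < psiModulus η b ε := by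
  have hδ : 0 < min (ε / 2) (ε ^ 2 / (72 * b) * η (ε / (2 * b)) ^ 2) :=
    lt_min (by positivity) (by positivity)
  exact lt_min (by positivity) (by positivity)

lemma sq_norm_midpoint_add_psiModulus_le {X : Type*} [SeminormedAddCommGroup X]
    [NormedSpace ℝ X] {η : ℝ → ℝ} {b ε : ℝ} (hb : 0 < b) (hε : 0 < ε)
    (hη : 0 < η (ε / (2 * b))) (hη_le : η (ε / (2 * b)) ≤ 1)
    (huc : ∀ u v : X, ‖u‖ ≤ 1 → ‖v‖ ≤ 1 → ε / (2 * b) ≤ ‖u - v‖ →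
      ‖(1 / 2 : ℝ) • (u + v)‖ ≤ 1 - η (ε / (2 * b)))
    ⦃x y : X⦄ (hx : ‖x‖ ≤ b) (hyx : ‖y‖ ≤ ‖x‖) (hxy : ε ≤ ‖x - y‖) :
    ‖(1 / 2 : ℝ) • (x + y)‖ ^ 2 + psiModulus η b ε ≤
      (1 / 2) * ‖x‖ ^ 2 + (1 / 2) * ‖y‖ ^ 2 := by
  set θ := η (ε / (2 * b))
  set δ := min (ε / 2) (ε ^ 2 / (72 * b) * θ ^ 2)
  have hψδ : psiModulus η b ε ≤ δ ^ 2 / 4 := min_le_left _ _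
  have hψθ : psiModulus η b ε ≤ ε ^ 2 / 48 * θ ^ 2 := min_le_right _ _
  have hδ : 0 < δ := lt_min (by positivity) (by positivity)
  have hx_ge : ε / 2 ≤ ‖x‖ := by linarith [norm_sub_le x y]
  rcases le_or_gt δ (‖x‖ - ‖y‖) with hfar | hclose
  · have hgap : δ ^ 2 / 4 ≤ ((‖x‖ - ‖y‖) / 2) ^ 2 := by nlinarith
    linarith [sq_norm_midpoint_add_sq_le x y]
  · have hmid : ‖(1 / 2 : ℝ) • (x + y)‖ ≤ (1 - θ) * ‖x‖ := by
      refine norm_midpoint_le_of_uniformConvex huc (by linarith) le_rfl hyx ?_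
      calc ‖x‖ * (ε / (2 * b)) ≤ b * (ε / (2 * b)) := by gcongr
        _ = ε / 2 := by field_simp
        _ ≤ ‖x - y‖ := by linarith
    have hmid_sq : ‖(1 / 2 : ℝ) • (x + y)‖ ^ 2 ≤ ‖x‖ ^ 2 - θ * ‖x‖ ^ 2 :=
      calc ‖(1 / 2 : ℝ) • (x + y)‖ ^ 2 ≤ ((1 - θ) * ‖x‖) ^ 2 :=
            pow_le_pow_left₀ (norm_nonneg _) hmid 2
        _ = (1 - θ) ^ 2 * ‖x‖ ^ 2 := by ring
        _ ≤ (1 - θ) * ‖x‖ ^ 2 := by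
            gcongr; exact pow_le_of_le_one (by linarith) (by linarith) two_ne_zero
        _ = ‖x‖ ^ 2 - θ * ‖x‖ ^ 2 := by ring
    -- `‖y‖² ≥ (‖x‖ - δ)² ≥ ‖x‖² - 2 ‖x‖ δ`
    have hy_sq : ‖x‖ ^ 2 - ‖x‖ * δ ≤ (1 / 2) * ‖x‖ ^ 2 + (1 / 2) * ‖y‖ ^ 2 := by
      nlinarith [norm_nonneg y]
    have hdefect : ‖x‖ * δ ≤ ε ^ 2 / 72 * θ ^ 2 :=
      calc ‖x‖ * δ ≤ b * (ε ^ 2 / (72 * b) * θ ^ 2) := by gcongr; exact min_le_right _ _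
        _ = ε ^ 2 / 72 * θ ^ 2 := by field_simp
    have hloss : ε ^ 2 / 4 * θ ^ 2 ≤ θ * ‖x‖ ^ 2 :=
      calc ε ^ 2 / 4 * θ ^ 2 = (ε / 2) ^ 2 * θ ^ 2 := by ring
        _ ≤ (ε / 2) ^ 2 * θ := by gcongr; exact pow_le_of_le_one hη.le hη_le two_ne_zero
        _ ≤ ‖x‖ ^ 2 * θ := by gcongr
        _ = θ * ‖x‖ ^ 2 := mul_comm _ _
    nlinarith

theorem psiModulus_spec_general
    {X : Type*} [NormedAddCommGroup X] [NormedSpace ℝ X]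
    (η : ℝ → ℝ)
    (hη_range : ∀ ε : ℝ, 0 < ε → ε ≤ 2 → 0 < η ε ∧ η ε ≤ 1)
    (hX_uc : ∀ ε : ℝ, 0 < ε → ε ≤ 2 → ∀ x y : X, ‖x‖ ≤ 1 → ‖y‖ ≤ 1 →
      ε ≤ ‖x - y‖ → ‖(1 / 2 : ℝ) • (x + y)‖ ≤ 1 - η ε)
    (b : ℝ) (hb : (1 / 2 : ℝ) ≤ b) :
    ∀ ε : ℝ, 0 < ε → ε ≤ 2 →
      (0 < psiModulus η b ε) ∧
      (∀ x y : X, ‖x‖ ≤ b → ‖y‖ ≤ b → ε ≤ ‖x - y‖ →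
        ‖(1 / 2 : ℝ) • (x + y)‖ ^ 2 + psiModulus η b ε ≤
          (1 / 2) * ‖x‖ ^ 2 + (1 / 2) * ‖y‖ ^ 2) := by
  intro ε hε hε2
  have hb0 : 0 < b := by linarith
  have hε' : 0 < ε / (2 * b) := by positivity
  have hε'2 : ε / (2 * b) ≤ 2 := by rw [div_le_iff₀ (by linarith)]; linarith
  obtain ⟨hη, hη_le⟩ := hη_range _ hε' hε'2
  have key := sq_norm_midpoint_add_psiModulus_le hb0 hε hη hη_le (hX_uc _ hε' hε'2)
  refine ⟨psiModulus_pos hb0 hε hη, fun x y hx hy hxy => ?_⟩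
  rcases le_total ‖y‖ ‖x‖ with hyx | hxy'
  · exact key hx hyx hxy
  · have := key hy hxy' (by rwa [norm_sub_rev])
    rw [add_comm y x] at this
    linarith

theorem psiModulus_spec
    {X : Type*} [NormedAddCommGroup X] [NormedSpace ℝ X] [CompleteSpace X]
    (η : ℝ → ℝ)
    (hη_range : ∀ ε : ℝ, 0 < ε → ε ≤ 2 → 0 < η ε ∧ η ε ≤ 1)
    (hX_uc : ∀ ε : ℝ, 0 < ε → ε ≤ 2 → ∀ x y : X, ‖x‖ ≤ 1 → ‖y‖ ≤ 1 →
      ε ≤ ‖x - y‖ → ‖(1 / 2 : ℝ) • (x + y)‖ ≤ 1 - η ε)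
    (b : ℝ) (hb : (1 / 2 : ℝ) ≤ b) :
    ∀ ε : ℝ, 0 < ε → ε ≤ 2 →
      (0 < psiModulus η b ε) ∧
      (∀ x y : X, ‖x‖ ≤ b → ‖y‖ ≤ b → ε ≤ ‖x - y‖ →
        ‖(1 / 2 : ℝ) • (x + y)‖ ^ 2 + psiModulus η b ε ≤
          (1 / 2) * ‖x‖ ^ 2 + (1 / 2) * ‖y‖ ^ 2) :=
  psiModulus_spec_general η hη_range hX_uc b hb
end

section
/- Let X be a real Banach space which is uniformly smooth with modulus τ, let C ⊆ X be a closed, convex, nonempty subset and let E ⊆ C be nonempty. Then there is at most one sunny nonexpansive retraction from C onto E: if Q₁, Q₂ : C → E are both sunny nonexpansive retractions, then Q₁ = Q₂. -/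
set_option maxHeartbeats 1000000


theorem sunny_nonexpansive_retraction_unique
    {X : Type*} [NormedAddCommGroup X] [NormedSpace ℝ X] [CompleteSpace X]
    (τ : ℝ → ℝ) (hτ_pos : ∀ ε : ℝ, 0 < ε → 0 < τ ε)
    (hX_us : ∀ ε : ℝ, 0 < ε → ∀ x y : X, ‖x‖ = 1 → ‖y‖ ≤ τ ε →
      ‖x + y‖ + ‖x - y‖ ≤ 2 + ε * ‖y‖)
    (C : Set X) (hC_closed : IsClosed C) (hC_convex : Convex ℝ C)
    (hC_ne : C.Nonempty)
    (E : Set X) (hEC : E ⊆ C) (hE_ne : E.Nonempty)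
    (Q₁ Q₂ : X → X)
    (hQ₁_maps : ∀ x ∈ C, Q₁ x ∈ E)
    (hQ₂_maps : ∀ x ∈ C, Q₂ x ∈ E)
    (hQ₁_retr : ∀ x ∈ E, Q₁ x = x)
    (hQ₂_retr : ∀ x ∈ E, Q₂ x = x)
    (hQ₁_ne : ∀ x ∈ C, ∀ y ∈ C, ‖Q₁ x - Q₁ y‖ ≤ ‖x - y‖)
    (hQ₂_ne : ∀ x ∈ C, ∀ y ∈ C, ‖Q₂ x - Q₂ y‖ ≤ ‖x - y‖)
    (hQ₁_sunny : ∀ x ∈ C, ∀ t : ℝ, 0 ≤ t → Q₁ x + t • (x - Q₁ x) ∈ C →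
      Q₁ (Q₁ x + t • (x - Q₁ x)) = Q₁ x)
    (hQ₂_sunny : ∀ x ∈ C, ∀ t : ℝ, 0 ≤ t → Q₂ x + t • (x - Q₂ x) ∈ C →
      Q₂ (Q₂ x + t • (x - Q₂ x)) = Q₂ x) :
    ∀ x ∈ C, Q₁ x = Q₂ x := by
  intro x hx
  by_contra hne
  set p := Q₁ x with hp
  set q := Q₂ x with hq
  have hpE : p ∈ E := hQ₁_maps x hx
  have hqE : q ∈ E := hQ₂_maps x hx
  set v := p - q with hv
  have hvne : v ≠ 0 := sub_ne_zero.mpr hne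
  have hvpos : 0 < ‖v‖ := norm_pos_iff.mpr hvne
  set h₁ := x - p with hh1
  set h₂ := q - x with hh2
  set M := ‖h₁‖ + ‖h₂‖ + 1 with hM
  have hMpos : 0 < M := by positivity
  set ε := ‖v‖ / M with hε
  have hεpos : 0 < ε := by positivity
  have hτ : 0 < τ ε := hτ_pos ε hεpos
  set t := min 1 (τ ε * ‖v‖ / M) with ht
  have htpos : 0 < t := lt_min one_pos (by positivity)
  have ht1 : t ≤ 1 := min_le_left _ _
  -- scaled uniform smoothness
  have smooth : ∀ h : X, ‖h‖ ≤ M →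
      ‖v + t • h‖ + ‖v - t • h‖ ≤ 2 * ‖v‖ + ε * (t * ‖h‖) := by
    intro h hh
    have hu : ‖‖v‖⁻¹ • v‖ = 1 := norm_smul_inv_norm hvne
    have hynorm : ‖(t / ‖v‖) • h‖ = t * ‖h‖ / ‖v‖ := by
      rw [norm_smul, Real.norm_eq_abs, abs_of_pos (by positivity)]
      ring
    have hy : ‖(t / ‖v‖) • h‖ ≤ τ ε := by
      rw [hynorm, div_le_iff₀ hvpos]
      have h1 : t * ‖h‖ ≤ (τ ε * ‖v‖ / M) * M := by
        apply mul_le_mul (min_le_right _ _) hh (norm_nonneg _)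
        positivity
      calc t * ‖h‖ ≤ (τ ε * ‖v‖ / M) * M := h1
        _ = τ ε * ‖v‖ := by field_simp
    have key := hX_us ε hεpos (‖v‖⁻¹ • v) ((t / ‖v‖) • h) hu hy
    have e1 : ‖v‖ • (‖v‖⁻¹ • v + (t / ‖v‖) • h) = v + t • h := by
      rw [smul_add, smul_smul, smul_smul, mul_inv_cancel₀ hvpos.ne', one_smul,
        mul_div_cancel₀ _ hvpos.ne']
    have e2 : ‖v‖ • (‖v‖⁻¹ • v - (t / ‖v‖) • h) = v - t • h := by
      rw [smul_sub, smul_smul, smul_smul, mul_inv_cancel₀ hvpos.ne', one_smul,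
        mul_div_cancel₀ _ hvpos.ne']
    have n1 : ‖v + t • h‖ = ‖v‖ * ‖‖v‖⁻¹ • v + (t / ‖v‖) • h‖ := by
      rw [← e1, norm_smul, Real.norm_eq_abs, abs_of_pos hvpos]
    have n2 : ‖v - t • h‖ = ‖v‖ * ‖‖v‖⁻¹ • v - (t / ‖v‖) • h‖ := by
      rw [← e2, norm_smul, Real.norm_eq_abs, abs_of_pos hvpos]
    have hyv : ‖v‖ * ‖(t / ‖v‖) • h‖ = t * ‖h‖ := by
      rw [hynorm]; field_simp
    calc ‖v + t • h‖ + ‖v - t • h‖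
        = ‖v‖ * (‖‖v‖⁻¹ • v + (t / ‖v‖) • h‖ + ‖‖v‖⁻¹ • v - (t / ‖v‖) • h‖) := by
          rw [n1, n2]; ring
      _ ≤ ‖v‖ * (2 + ε * ‖(t / ‖v‖) • h‖) := by
          apply mul_le_mul_of_nonneg_left key hvpos.le
      _ = 2 * ‖v‖ + ε * (‖v‖ * ‖(t / ‖v‖) • h‖) := by ring
      _ = 2 * ‖v‖ + ε * (t * ‖h‖) := by rw [hyv]
  -- geometric inequalities from sunny + nonexpansive
  have hA : ‖v‖ ≤ ‖v + t • h₁‖ := by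
    have hzC : p + t • (x - p) ∈ C := by
      have hc := hC_convex (hEC hpE) hx (by linarith : (0:ℝ) ≤ 1 - t) htpos.le
        (by ring : (1 - t) + t = 1)
      have : (1 - t) • p + t • x = p + t • (x - p) := by module
      rwa [this] at hc
    have hs : Q₁ (p + t • (x - p)) = p := hQ₁_sunny x hx t htpos.le hzC
    have hr : Q₁ q = q := hQ₁_retr q hqE
    have hne' := hQ₁_ne (p + t • (x - p)) hzC q (hEC hqE)
    rw [hs, hr] at hne'
    have : p + t • (x - p) - q = v + t • h₁ := by rw [hv, hh1]; module
    rwa [this] at hne'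
  have hB : ‖v‖ ≤ ‖v + t • h₂‖ := by
    have hzC : q + t • (x - q) ∈ C := by
      have hc := hC_convex (hEC hqE) hx (by linarith : (0:ℝ) ≤ 1 - t) htpos.le
        (by ring : (1 - t) + t = 1)
      have : (1 - t) • q + t • x = q + t • (x - q) := by module
      rwa [this] at hc
    have hs : Q₂ (q + t • (x - q)) = q := hQ₂_sunny x hx t htpos.le hzC
    have hr : Q₂ p = p := hQ₂_retr p hpE
    have hne' := hQ₂_ne (q + t • (x - q)) hzC p (hEC hpE)
    rw [hs, hr] at hne'
    have : q + t • (x - q) - p = -(v + t • h₂) := by rw [hv, hh2]; module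
    rw [this, norm_neg] at hne'
    calc ‖v‖ = ‖q - p‖ := by rw [hv, norm_sub_rev]
      _ ≤ ‖v + t • h₂‖ := hne'
  have s1 := smooth h₁ (by rw [hM]; linarith [norm_nonneg h₂])
  have s2 := smooth h₂ (by rw [hM]; linarith [norm_nonneg h₁])
  have d1 : ‖v - t • h₁‖ ≤ ‖v‖ + ε * (t * ‖h₁‖) := by linarith
  have d2 : ‖v - t • h₂‖ ≤ ‖v‖ + ε * (t * ‖h₂‖) := by linarith
  have hsum : (v - t • h₁) + (v - t • h₂) = (2 + t) • v := by
    rw [hv, hh1, hh2]; module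
  have hnorm : (2 + t) * ‖v‖ = ‖(v - t • h₁) + (v - t • h₂)‖ := by
    rw [hsum, norm_smul, Real.norm_eq_abs, abs_of_pos (by linarith)]
  have tri : ‖(v - t • h₁) + (v - t • h₂)‖ ≤ ‖v - t • h₁‖ + ‖v - t • h₂‖ :=
    norm_add_le _ _
  -- conclude ‖v‖ ≤ ε * (‖h₁‖ + ‖h₂‖)
  have final : ‖v‖ ≤ ε * (‖h₁‖ + ‖h₂‖) := by
    have e : ε * (t * ‖h₁‖) + ε * (t * ‖h₂‖) = t * (ε * (‖h₁‖ + ‖h₂‖)) := by ring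
    have h1 : t * ‖v‖ ≤ t * (ε * (‖h₁‖ + ‖h₂‖)) := by linarith
    exact (mul_le_mul_iff_right₀ htpos).mp h1
  have hεM : ε * M = ‖v‖ := by rw [hε]; field_simp
  have hlt : ε * (‖h₁‖ + ‖h₂‖) < ε * M := by
    apply mul_lt_mul_of_pos_left _ hεpos
    rw [hM]; linarith
  linarith
end

section
/- Let X be a real Banach space, C ⊆ X a closed, convex, nonempty subset, and T : C → C a continuous pseudocontraction. Then for every λ > 0 and every y ∈ C there exists a unique z ∈ C with z + λ·(z − Tz) = y. In particular, for A := {(w, w − Tw) : w ∈ C}, one has C ⊆ ran(Id + λA) and J_{λA}y ∈ C for all y ∈ C. -/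
set_option maxHeartbeats 1600000
set_option linter.unusedSectionVars false

open Set

section ResolventAux

variable {X : Type*} [NormedAddCommGroup X] [NormedSpace ℝ X]

lemma res_cuc {C : Set X} {Q : X → X} (hQ : ContinuousOn Q C)
    {K : Set X} (hK : IsCompact K) (hKC : K ⊆ C) {θ : ℝ} (hθ : 0 < θ) :
    ∃ δ > 0, ∀ p ∈ K, ∀ z ∈ C, ‖z - p‖ ≤ δ → ‖Q z - Q p‖ ≤ θ := by
  have hc : ∀ p : X, ∃ δ : ℝ, 0 < δ ∧ (p ∈ K → ∀ z ∈ C, dist z p < δ → dist (Q z) (Q p) < θ / 2) := by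
    intro p
    by_cases hp : p ∈ K
    · obtain ⟨δ, hδ, hδ'⟩ := Metric.continuousOn_iff.mp hQ p (hKC hp) (θ / 2) (by linarith)
      exact ⟨δ, hδ, fun _ z hz hzp => hδ' z hz hzp⟩
    · exact ⟨1, one_pos, fun h => absurd h hp⟩
  choose δp hδp0 hδp using hc
  have hcov : K ⊆ ⋃ p ∈ K, Metric.ball p (δp p / 2) := by
    intro p hp
    exact Set.mem_biUnion hp (Metric.mem_ball_self (by linarith [hδp0 p]))
  obtain ⟨s, hsK, hsfin, hscov⟩ := hK.elim_finite_subcover_image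
    (fun p _ => Metric.isOpen_ball) hcov
  rcases Set.eq_empty_or_nonempty K with hKe | hKne
  · exact ⟨1, one_pos, by simp [hKe]⟩
  have hsne : s.Nonempty := by
    rcases hKne with ⟨p, hp⟩
    rcases Set.mem_iUnion₂.mp (hscov hp) with ⟨q, hq, _⟩
    exact ⟨q, hq⟩
  have hFne : hsfin.toFinset.Nonempty := by
    rw [Set.Finite.toFinset_nonempty]
    exact hsne
  set δ := hsfin.toFinset.inf' hFne (fun q => δp q / 2) with hδdef
  have hδpos : 0 < δ := by
    rw [hδdef, Finset.lt_inf'_iff]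
    intro q _
    linarith [hδp0 q]
  refine ⟨δ, hδpos, ?_⟩
  intro p hp z hz hzp
  rcases Set.mem_iUnion₂.mp (hscov hp) with ⟨q, hq, hpq⟩
  have hqK : q ∈ K := hsK hq
  have hpq' : dist p q < δp q / 2 := by simpa [Metric.mem_ball] using hpq
  have hδle : δ ≤ δp q / 2 := Finset.inf'_le _ (by simp [hq])
  have hzp' : dist z p ≤ δ := by rwa [dist_eq_norm]
  have hzq : dist z q < δp q := by
    calc dist z q ≤ dist z p + dist p q := dist_triangle z p q
      _ < δ + δp q / 2 := by linarith
      _ ≤ δp q := by linarith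
  have h1 : dist (Q z) (Q q) < θ / 2 := hδp q hqK z hz hzq
  have h2 : dist (Q p) (Q q) < θ / 2 := hδp q hqK p (hKC hp) (by linarith)
  have : dist (Q z) (Q p) ≤ dist (Q z) (Q q) + dist (Q p) (Q q) := dist_triangle_right _ _ _
  rw [← dist_eq_norm]
  linarith

lemma res_dlemma {C : Set X} {Q : X → X} {c : ℝ} (hc : 0 < c)
    (hQ : ContinuousOn Q C)
    (hSA : ∀ u ∈ C, ∀ v ∈ C, ∀ σ : ℝ, 0 ≤ σ →
      (1 + c * σ) * ‖u - v‖ ≤ ‖(u - v) + σ • (Q u - Q v)‖)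
    {a M ε₁ ε₂ : ℝ} (ha : 0 ≤ a) (hM : 0 ≤ M) (hε₁ : 0 ≤ ε₁) (hε₂ : 0 ≤ ε₂)
    {u₁ u₂ w₁ w₂ : ℝ → X}
    (hu₁C : ∀ t, 0 ≤ t → t ≤ a → u₁ t ∈ C)
    (hu₂C : ∀ t, 0 ≤ t → t ≤ a → u₂ t ∈ C)
    (hw₁ : ∀ t, 0 ≤ t → t ≤ a → ‖w₁ t + Q (u₁ t)‖ ≤ ε₁ ∧ ‖w₁ t‖ ≤ M)
    (hw₂ : ∀ t, 0 ≤ t → t ≤ a → ‖w₂ t + Q (u₂ t)‖ ≤ ε₂ ∧ ‖w₂ t‖ ≤ M)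
    (havg₁ : ∀ s t, 0 ≤ s → s ≤ t → t ≤ a → ∀ V : X, ∀ b : ℝ,
      (∀ τ, s ≤ τ → τ ≤ t → ‖w₁ τ - V‖ ≤ b) →
      ‖u₁ t - u₁ s - (t - s) • V‖ ≤ (t - s) * b)
    (havg₂ : ∀ s t, 0 ≤ s → s ≤ t → t ≤ a → ∀ V : X, ∀ b : ℝ,
      (∀ τ, s ≤ τ → τ ≤ t → ‖w₂ τ - V‖ ≤ b) →
      ‖u₂ t - u₂ s - (t - s) • V‖ ≤ (t - s) * b) :
    ∀ t, 0 ≤ t → t ≤ a →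
      ‖u₁ t - u₂ t‖ ≤ ‖u₁ 0 - u₂ 0‖ / (1 + c * t) + (ε₁ + ε₂) / c := by
  -- Lipschitz bounds
  have hlip : ∀ (u : ℝ → X) (w : ℝ → X),
      (∀ t, 0 ≤ t → t ≤ a → ‖w t‖ ≤ M) →
      (∀ s t, 0 ≤ s → s ≤ t → t ≤ a → ∀ V : X, ∀ b : ℝ,
        (∀ τ, s ≤ τ → τ ≤ t → ‖w τ - V‖ ≤ b) →
        ‖u t - u s - (t - s) • V‖ ≤ (t - s) * b) →
      ∀ s t, s ∈ Icc 0 a → t ∈ Icc 0 a → ‖u t - u s‖ ≤ M * |t - s| := by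
    intro u w hw havg s t hs ht
    rcases le_total s t with hst | hst
    · have := havg s t hs.1 hst ht.2 0 M
        (fun τ h1 h2 => by simpa using hw τ (le_trans hs.1 h1) (le_trans h2 ht.2))
      simp only [smul_zero, sub_zero] at this
      calc ‖u t - u s‖ ≤ (t - s) * M := this
        _ = M * |t - s| := by rw [abs_of_nonneg (by linarith)]; ring
    · have := havg t s ht.1 hst hs.2 0 M
        (fun τ h1 h2 => by simpa using hw τ (le_trans ht.1 h1) (le_trans h2 hs.2))
      simp only [smul_zero, sub_zero] at this
      rw [norm_sub_rev]
      calc ‖u s - u t‖ ≤ (s - t) * M := this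
        _ = M * |t - s| := by rw [abs_of_nonpos (by linarith)]; ring
  have hucont : ∀ (u : ℝ → X),
      (∀ s t, s ∈ Icc 0 a → t ∈ Icc 0 a → ‖u t - u s‖ ≤ M * |t - s|) →
      ContinuousOn u (Icc 0 a) := by
    intro u hl
    rw [Metric.continuousOn_iff]
    intro b hb η hη
    refine ⟨η / (M + 1), by positivity, fun x hx hxb => ?_⟩
    have h1 : ‖u x - u b‖ ≤ M * |x - b| := hl b x hb hx
    rw [dist_eq_norm] at hxb ⊢
    have h2 : |x - b| = ‖x - b‖ := rfl
    have h3 : M * |x - b| < M * (η / (M+1)) + η/(M+1) := by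
      nlinarith [abs_nonneg (x - b), hxb]
    have h4 : M * (η / (M+1)) + η/(M+1) = η := by field_simp
    linarith
  -- uniform continuity of Q ∘ u_i
  have hQUC : ∀ (u w : ℝ → X), (∀ t, 0 ≤ t → t ≤ a → u t ∈ C) →
      (∀ s t, s ∈ Icc 0 a → t ∈ Icc 0 a → ‖u t - u s‖ ≤ M * |t - s|) →
      ∀ θ : ℝ, 0 < θ → ∃ Δ₀ > 0, ∀ s t, s ∈ Icc 0 a → t ∈ Icc 0 a →
        |t - s| ≤ Δ₀ → ‖Q (u t) - Q (u s)‖ ≤ θ := by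
    intro u w huC hl θ hθ
    have hcont : ContinuousOn (fun τ => Q (u τ)) (Icc 0 a) := by
      apply ContinuousOn.comp hQ (hucont u hl)
      intro τ hτ; exact huC τ hτ.1 hτ.2
    have huc : UniformContinuousOn (fun τ => Q (u τ)) (Icc 0 a) :=
      isCompact_Icc.uniformContinuousOn_of_continuous hcont
    rw [Metric.uniformContinuousOn_iff_le] at huc
    obtain ⟨Δ₀, hΔ₀, hh⟩ := huc θ hθ
    refine ⟨Δ₀, hΔ₀, fun s t hs ht hts => ?_⟩
    have := hh t ht s hs (by rwa [Real.dist_eq])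
    rwa [dist_eq_norm] at this
  intro t ht0 hta
  rcases eq_or_lt_of_le ht0 with h0 | htpos
  · rw [← h0]
    simp only [mul_zero, add_zero, div_one]
    have : 0 ≤ (ε₁ + ε₂) / c := by positivity
    linarith
  -- main case
  apply le_of_forall_pos_le_add
  intro θ' hθ'
  set θ : ℝ := c * θ' / 2 with hθdef
  have hθ : 0 < θ := by positivity
  obtain ⟨Δ₁, hΔ₁, hUC₁⟩ := hQUC u₁ w₁ hu₁C
    (hlip u₁ w₁ (fun τ h1 h2 => (hw₁ τ h1 h2).2) havg₁) θ hθ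
  obtain ⟨Δ₂, hΔ₂, hUC₂⟩ := hQUC u₂ w₂ hu₂C
    (hlip u₂ w₂ (fun τ h1 h2 => (hw₂ τ h1 h2).2) havg₂) θ hθ
  set Δ₀ := min Δ₁ Δ₂ with hΔ₀def
  have hΔ₀ : 0 < Δ₀ := lt_min hΔ₁ hΔ₂
  obtain ⟨N, hN⟩ := exists_nat_ge (t / Δ₀)
  set n : ℕ := N + 1 with hndef
  have hn0 : 0 < (n:ℝ) := by positivity
  set Δ : ℝ := t / n with hΔdef
  have hΔpos : 0 < Δ := by positivity
  have hΔle : Δ ≤ Δ₀ := by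
    rw [hΔdef, div_le_iff₀ hn0]
    have : t / Δ₀ ≤ (n:ℝ) := by
      rw [hndef]; push_cast; linarith
    calc t = (t / Δ₀) * Δ₀ := by field_simp
      _ ≤ (n:ℝ) * Δ₀ := by nlinarith
      _ = Δ₀ * n := by ring
  set q : ℝ := 1 + c * Δ with hqdef
  have hq1 : 1 < q := by rw [hqdef]; nlinarith
  have hq0 : 0 < q := by linarith
  set E : ℝ := ε₁ + ε₂ + 2 * θ with hEdef
  have hE0 : 0 ≤ E := by positivity
  set m : ℝ → ℝ := fun τ => ‖u₁ τ - u₂ τ‖ with hmdef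
  -- key chained estimate
  have key : ∀ j : ℕ, j ≤ n → q ^ j * m (j * Δ) ≤ m 0 + (E / c) * (q ^ j - 1) := by
    intro j hj
    induction j with
    | zero => simp
    | succ j ih =>
      have hj' : j ≤ n := le_of_lt (Nat.lt_of_succ_le hj)
      have ihj := ih hj'
      -- the one-step estimate
      have hsle : (j:ℝ) * Δ ≤ (j+1:ℝ) * Δ := by nlinarith
      have hs0 : 0 ≤ (j:ℝ) * Δ := by positivity
      have hsa : ((j:ℝ)+1) * Δ ≤ a := by
        have h1 : ((j:ℝ)+1) ≤ n := by exact_mod_cast hj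
        have : ((j:ℝ)+1) * Δ ≤ (n:ℝ) * Δ := by nlinarith
        have hnt : (n:ℝ) * Δ = t := by rw [hΔdef]; field_simp
        linarith
    -- endpoints
      set s : ℝ := (j:ℝ) * Δ with hsdef
      set t' : ℝ := ((j:ℝ)+1) * Δ with ht'def
      have ht'0 : 0 ≤ t' := by positivity
      have hstep : t' - s = Δ := by rw [ht'def, hsdef]; ring
      have ht'mem : t' ∈ Icc 0 a := ⟨ht'0, hsa⟩
      have hsmem : s ∈ Icc 0 a := ⟨hs0, by linarith [hstep, hsa, hΔpos]⟩
      -- SA inequality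
      have hSAt := hSA (u₁ t') (hu₁C t' ht'0 hsa) (u₂ t') (hu₂C t' ht'0 hsa) Δ (le_of_lt hΔpos)
      -- decomposition bound
      have hA₁ : ‖u₁ t' - u₁ s - (t' - s) • (-(Q (u₁ t')))‖ ≤ (t' - s) * (ε₁ + θ) := by
        apply havg₁ s t' hs0 (by linarith [hstep, hΔpos]) hsa
        intro τ hτ1 hτ2
        have hτmem : τ ∈ Icc 0 a := ⟨le_trans hs0 hτ1, le_trans hτ2 hsa⟩
        have hd : |t' - τ| ≤ Δ₁ := by
          rw [abs_of_nonneg (by linarith)]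
          have : t' - τ ≤ Δ := by linarith [hstep]
          linarith [min_le_left Δ₁ Δ₂]
        have h1 := (hw₁ τ hτmem.1 hτmem.2).1
        have h2 := hUC₁ τ t' hτmem ht'mem hd
        calc ‖w₁ τ - -(Q (u₁ t'))‖ = ‖(w₁ τ + Q (u₁ τ)) + (Q (u₁ t') - Q (u₁ τ))‖ := by
              congr 1; abel
          _ ≤ ‖w₁ τ + Q (u₁ τ)‖ + ‖Q (u₁ t') - Q (u₁ τ)‖ := norm_add_le _ _
          _ ≤ ε₁ + θ := add_le_add h1 h2
      have hA₂ : ‖u₂ t' - u₂ s - (t' - s) • (-(Q (u₂ t')))‖ ≤ (t' - s) * (ε₂ + θ) := by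
        apply havg₂ s t' hs0 (by linarith [hstep, hΔpos]) hsa
        intro τ hτ1 hτ2
        have hτmem : τ ∈ Icc 0 a := ⟨le_trans hs0 hτ1, le_trans hτ2 hsa⟩
        have hd : |t' - τ| ≤ Δ₂ := by
          rw [abs_of_nonneg (by linarith)]
          have : t' - τ ≤ Δ := by linarith [hstep]
          linarith [min_le_right Δ₁ Δ₂]
        have h1 := (hw₂ τ hτmem.1 hτmem.2).1
        have h2 := hUC₂ τ t' hτmem ht'mem hd
        calc ‖w₂ τ - -(Q (u₂ t'))‖ = ‖(w₂ τ + Q (u₂ τ)) + (Q (u₂ t') - Q (u₂ τ))‖ := by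
              congr 1; abel
          _ ≤ ‖w₂ τ + Q (u₂ τ)‖ + ‖Q (u₂ t') - Q (u₂ τ)‖ := norm_add_le _ _
          _ ≤ ε₂ + θ := add_le_add h1 h2
      have hdecomp : (u₁ t' - u₂ t') + Δ • (Q (u₁ t') - Q (u₂ t')) =
          (u₁ s - u₂ s) + (u₁ t' - u₁ s - (t' - s) • (-(Q (u₁ t'))))
            - (u₂ t' - u₂ s - (t' - s) • (-(Q (u₂ t')))) := by
        rw [hstep]
        module
      have hstep2 : (1 + c * Δ) * m t' ≤ m s + Δ * E := by
        calc (1 + c * Δ) * m t' ≤ ‖(u₁ t' - u₂ t') + Δ • (Q (u₁ t') - Q (u₂ t'))‖ := hSAt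
          _ = ‖(u₁ s - u₂ s) + (u₁ t' - u₁ s - (t' - s) • (-(Q (u₁ t'))))
            - (u₂ t' - u₂ s - (t' - s) • (-(Q (u₂ t'))))‖ := by rw [hdecomp]
          _ ≤ ‖(u₁ s - u₂ s) + (u₁ t' - u₁ s - (t' - s) • (-(Q (u₁ t'))))‖
              + ‖u₂ t' - u₂ s - (t' - s) • (-(Q (u₂ t')))‖ := norm_sub_le _ _
          _ ≤ ‖u₁ s - u₂ s‖ + ‖u₁ t' - u₁ s - (t' - s) • (-(Q (u₁ t')))‖
              + ‖u₂ t' - u₂ s - (t' - s) • (-(Q (u₂ t')))‖ := by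
                linarith [norm_add_le (u₁ s - u₂ s) (u₁ t' - u₁ s - (t' - s) • (-(Q (u₁ t'))))]
          _ ≤ m s + (t' - s) * (ε₁ + θ) + (t' - s) * (ε₂ + θ) := by
                exact add_le_add (add_le_add le_rfl hA₁) hA₂
          _ = m s + Δ * E := by rw [hstep, hEdef]; ring
      -- combine with IH
      have hqj : (0:ℝ) < q ^ j := pow_pos hq0 j
      have hcast : ((j+1 : ℕ) : ℝ) = (j:ℝ) + 1 := by push_cast; ring
      calc q ^ (j+1) * m ((j+1 : ℕ) * Δ)
          = q ^ j * ((1 + c * Δ) * m t') := by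
            rw [hcast, ← ht'def, pow_succ, hqdef]; ring_nf
          _ ≤ q ^ j * (m s + Δ * E) := by
            apply mul_le_mul_of_nonneg_left hstep2 (le_of_lt hqj)
          _ = q ^ j * m s + q ^ j * Δ * E := by ring
          _ ≤ m 0 + (E / c) * (q ^ j - 1) + q ^ j * Δ * E := by linarith [ihj]
          _ = m 0 + (E / c) * (q ^ (j+1) - 1) := by
            rw [pow_succ, hqdef]
            field_simp
            ring
  -- conclude
  have hfin := key n le_rfl
  have hnt : (n:ℝ) * Δ = t := by rw [hΔdef]; field_simp
  rw [hnt] at hfin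
  have hber : 1 + c * t ≤ q ^ n := by
    have := one_add_mul_le_pow (a := c * Δ) (by nlinarith) n
    have hct : (n:ℝ) * (c * Δ) = c * t := by rw [← hnt]; ring
    rw [hqdef]
    nlinarith [this]
  have hqn : (0:ℝ) < q ^ n := pow_pos hq0 n
  have hct0 : (0:ℝ) < 1 + c * t := by nlinarith
  have hm0 : 0 ≤ m 0 := norm_nonneg _
  have h1 : m t ≤ m 0 / q ^ n + (E / c) * (1 - (q^n)⁻¹) := by
    have heq : m 0 / q ^ n + (E / c) * (1 - (q^n)⁻¹) = (m 0 + E / c * (q ^ n - 1)) / q ^ n := by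
      field_simp
    rw [heq, le_div_iff₀ hqn]
    nlinarith [hfin]
  have h2 : m 0 / q ^ n ≤ m 0 / (1 + c * t) := by
    apply div_le_div_of_nonneg_left hm0 hct0 hber
  have h3 : (E / c) * (1 - (q^n)⁻¹) ≤ E / c := by
    have hinv : 0 < (q^n)⁻¹ := by positivity
    have : 0 ≤ E / c := by positivity
    nlinarith
  have h4 : E / c = (ε₁ + ε₂) / c + θ' := by
    rw [hEdef, hθdef]
    field_simp
  calc m t ≤ m 0 / q ^ n + (E / c) * (1 - (q^n)⁻¹) := h1
    _ ≤ m 0 / (1 + c * t) + E / c := add_le_add h2 h3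
    _ = m 0 / (1 + c * t) + (ε₁ + ε₂) / c + θ' := by rw [h4]; ring

lemma res_polygon [CompleteSpace X] {C : Set X} (hC_closed : IsClosed C)
    {Q : X → X} (hQ : ContinuousOn Q C)
    (hInv : ∀ x ∈ C, ∀ h : ℝ, 0 ≤ h → h ≤ 1 → x - h • Q x ∈ C)
    {x₀ : X} (hx₀ : x₀ ∈ C) {r M ε : ℝ} (hr : 0 < r) (hM : 1 ≤ M)
    (hB : ∀ z ∈ C, ‖z - x₀‖ ≤ r → ‖Q z‖ ≤ M) (hε : 0 < ε) :
    (∃ z ∈ C, Q z = 0) ∨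
    ∃ u w : ℝ → X,
      u 0 = x₀ ∧
      (∀ t, 0 ≤ t → t ≤ min 1 (r / (4 * M)) → u t ∈ C ∧ ‖u t - x₀‖ ≤ r / 2) ∧
      (∀ t, 0 ≤ t → t ≤ min 1 (r / (4 * M)) → ‖w t + Q (u t)‖ ≤ ε ∧ ‖w t‖ ≤ M) ∧
      (∀ s t, 0 ≤ s → s ≤ t → t ≤ min 1 (r / (4 * M)) → ∀ V : X, ∀ b : ℝ,
        (∀ τ, s ≤ τ → τ ≤ t → ‖w τ - V‖ ≤ b) →
        ‖u t - u s - (t - s) • V‖ ≤ (t - s) * b) := by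
  classical
  by_cases hzero : ∃ z ∈ C, Q z = 0
  · exact Or.inl hzero
  push_neg at hzero
  right
  have hM0 : (0:ℝ) < M := lt_of_lt_of_le one_pos hM
  set a : ℝ := min 1 (r / (4 * M)) with ha_def
  have ha0 : 0 < a := lt_min one_pos (by positivity)
  have ha1 : a ≤ 1 := min_le_left _ _
  have haM : a * M ≤ r / 4 := by
    have h1 : a ≤ r / (4 * M) := min_le_right _ _
    rw [le_div_iff₀ (by positivity)] at h1
    linarith
  -- the step-size function
  set S : X → Set ℝ := fun x' =>
    {h : ℝ | 0 < h ∧ h ≤ a ∧ ∀ z ∈ C, ‖z - x'‖ ≤ h * ‖Q x'‖ → ‖Q z - Q x'‖ ≤ ε} with hS_def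
  set H : X → ℝ := fun x' => sSup (S x') / 2 with hH_def
  have hQpos : ∀ x' ∈ C, 0 < ‖Q x'‖ := fun x' hx' => norm_pos_iff.mpr (hzero x' hx')
  have hSne : ∀ x' ∈ C, (S x').Nonempty := by
    intro x' hx'
    obtain ⟨δ, hδ0, hδ⟩ := Metric.continuousOn_iff.mp hQ x' hx' ε hε
    refine ⟨min a (δ / 2 / ‖Q x'‖), ⟨?_, min_le_left _ _, ?_⟩⟩
    · have := hQpos x' hx'
      positivity
    · intro z hz hzx
      have h1 : min a (δ / 2 / ‖Q x'‖) * ‖Q x'‖ ≤ δ / 2 := by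
        have h2 : min a (δ / 2 / ‖Q x'‖) ≤ δ / 2 / ‖Q x'‖ := min_le_right _ _
        have h3 := hQpos x' hx'
        calc min a (δ / 2 / ‖Q x'‖) * ‖Q x'‖ ≤ (δ / 2 / ‖Q x'‖) * ‖Q x'‖ := by nlinarith
          _ = δ / 2 := by field_simp
      have h4 : dist z x' < δ := by
        rw [dist_eq_norm]
        linarith
      have := hδ z hz h4
      rw [dist_eq_norm] at this
      linarith
  have hSbdd : ∀ x', BddAbove (S x') := fun x' => ⟨a, fun h hh => hh.2.1⟩
  have hHpos : ∀ x' ∈ C, 0 < H x' := by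
    intro x' hx'
    obtain ⟨h, hh⟩ := hSne x' hx'
    have : h ≤ sSup (S x') := le_csSup (hSbdd x') hh
    have : 0 < sSup (S x') := lt_of_lt_of_le hh.1 this
    simp only [hH_def]
    linarith
  have hHlea : ∀ x' ∈ C, H x' ≤ a / 2 := by
    intro x' hx'
    have : sSup (S x') ≤ a := csSup_le (hSne x' hx') (fun h hh => hh.2.1)
    simp only [hH_def]
    linarith
  have hHadm : ∀ x' ∈ C, ∀ z ∈ C, ‖z - x'‖ ≤ H x' * ‖Q x'‖ → ‖Q z - Q x'‖ ≤ ε := by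
    intro x' hx' z hz hzx
    have h2 : H x' < sSup (S x') := by
      have := hHpos x' hx'
      simp only [hH_def] at this ⊢
      linarith
    obtain ⟨h', hh'S, hlt⟩ := exists_lt_of_lt_csSup (hSne x' hx') h2
    refine hh'S.2.2 z hz (le_trans hzx ?_)
    have := norm_nonneg (Q x')
    nlinarith
  have hHmax : ∀ x' ∈ C, ∀ ρ : ℝ, 0 < ρ →
      (∀ z ∈ C, ‖z - x'‖ ≤ ρ → ‖Q z - Q x'‖ ≤ ε) → min a (ρ / ‖Q x'‖) ≤ 2 * H x' := by
    intro x' hx' ρ hρ hosc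
    have hQp := hQpos x' hx'
    have hmem : min a (ρ / ‖Q x'‖) ∈ S x' := by
      refine ⟨by positivity, min_le_left _ _, ?_⟩
      intro z hz hzx
      refine hosc z hz (le_trans hzx ?_)
      have h2 : min a (ρ / ‖Q x'‖) ≤ ρ / ‖Q x'‖ := min_le_right _ _
      calc min a (ρ / ‖Q x'‖) * ‖Q x'‖ ≤ (ρ / ‖Q x'‖) * ‖Q x'‖ := by nlinarith
        _ = ρ := by field_simp
    have := le_csSup (hSbdd x') hmem
    simp only [hH_def]
    linarith
  -- the discrete polygon
  set F : X × ℝ → X × ℝ := fun p => (p.1 - H p.1 • Q p.1, p.2 + H p.1) with hF_def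
  set P : ℕ → X × ℝ := fun k => F^[k] (x₀, 0) with hP_def
  set x : ℕ → X := fun k => (P k).1 with hx_def
  set t : ℕ → ℝ := fun k => (P k).2 with ht_def
  have hx0 : x 0 = x₀ := rfl
  have ht0 : t 0 = 0 := rfl
  have hxsucc : ∀ k, x (k+1) = x k - H (x k) • Q (x k) := by
    intro k
    simp only [hx_def, hP_def, Function.iterate_succ_apply']
    rfl
  have htsucc : ∀ k, t (k+1) = t k + H (x k) := by
    intro k
    simp only [ht_def, hx_def, hP_def, Function.iterate_succ_apply']
    rfl
  have hxC : ∀ k, x k ∈ C := by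
    intro k
    induction k with
    | zero => exact hx₀
    | succ k ih =>
      rw [hxsucc k]
      exact hInv (x k) ih (H (x k)) (le_of_lt (hHpos _ ih)) (by linarith [hHlea _ ih, ha1])
  have hHk : ∀ k, 0 < H (x k) ∧ H (x k) ≤ a / 2 :=
    fun k => ⟨hHpos _ (hxC k), hHlea _ (hxC k)⟩
  have htmono : ∀ k, t k < t (k+1) := by
    intro k
    rw [htsucc k]
    linarith [(hHk k).1]
  have htMono : Monotone t := monotone_nat_of_le_succ (fun k => le_of_lt (htmono k))
  have htnn : ∀ k, 0 ≤ t k := fun k => ht0 ▸ htMono (Nat.zero_le k)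
  -- confinement
  have hconf : ∀ k, t k ≤ 2 * a → ‖x k - x₀‖ ≤ t k * M := by
    intro k
    induction k with
    | zero => simp [hx0, ht0]
    | succ k ih =>
      intro hk1
      have hk0 : t k ≤ 2 * a := le_trans (le_of_lt (htmono k)) hk1
      have ihk := ih hk0
      have hball : ‖x k - x₀‖ ≤ r := by
        have : t k * M ≤ 2 * a * M := by nlinarith [htnn k]
        nlinarith
      have hQk : ‖Q (x k)‖ ≤ M := hB _ (hxC k) hball
      calc ‖x (k+1) - x₀‖ = ‖(x k - x₀) - H (x k) • Q (x k)‖ := by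
            rw [hxsucc k]; congr 1; abel
        _ ≤ ‖x k - x₀‖ + ‖H (x k) • Q (x k)‖ := norm_sub_le _ _
        _ ≤ t k * M + H (x k) * M := by
            rw [norm_smul, Real.norm_eq_abs, abs_of_pos (hHk k).1]
            have h1 : H (x k) * ‖Q (x k)‖ ≤ H (x k) * M :=
              mul_le_mul_of_nonneg_left hQk (hHk k).1.le
            linarith
        _ = t (k+1) * M := by rw [htsucc k]; ring
  by_cases hreach : ∃ k, a ≤ t k
  case neg =>
    -- polygon never reaches time a : contradiction with hzero
    exfalso
    push_neg at hreach
    have htlta : ∀ k, t k < a := hreach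
    have hconf' : ∀ k, ‖x k - x₀‖ ≤ t k * M :=
      fun k => hconf k (by linarith [htlta k, ha0])
    have hball : ∀ k, ‖x k - x₀‖ ≤ r := by
      intro k
      have : t k * M ≤ a * M := by nlinarith [htnn k, htlta k]
      nlinarith [hconf' k]
    have hQbd : ∀ k, ‖Q (x k)‖ ≤ M := fun k => hB _ (hxC k) (hball k)
    have hxdiff : ∀ j k, j ≤ k → ‖x k - x j‖ ≤ (t k - t j) * M := by
      intro j k hjk
      induction k with
      | zero =>
        have : j = 0 := Nat.le_zero.mp hjk
        subst this
        simp
      | succ k ih =>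
        rcases Nat.lt_or_ge j (k+1) with hlt | hge
        · have hjk' : j ≤ k := Nat.lt_succ_iff.mp hlt
          have ihk := ih hjk'
          calc ‖x (k+1) - x j‖ = ‖(x k - x j) - H (x k) • Q (x k)‖ := by
                rw [hxsucc k]; congr 1; abel
            _ ≤ ‖x k - x j‖ + ‖H (x k) • Q (x k)‖ := norm_sub_le _ _
            _ ≤ (t k - t j) * M + H (x k) * M := by
                rw [norm_smul, Real.norm_eq_abs, abs_of_pos (hHk k).1]
                have h1 : H (x k) * ‖Q (x k)‖ ≤ H (x k) * M :=
                  mul_le_mul_of_nonneg_left (hQbd k) (hHk k).1.le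
                linarith
            _ = (t (k+1) - t j) * M := by rw [htsucc k]; ring
        · have : j = k+1 := le_antisymm hjk hge
          subst this
          simp
    -- limit point
    set B : ℝ := ⨆ k, t k with hB_def2
    have htB : ∀ k, t k ≤ B := fun k => le_ciSup ⟨a, fun v ⟨k, hk⟩ => hk ▸ le_of_lt (htlta k)⟩ k
    have htendB : Filter.Tendsto t Filter.atTop (nhds B) :=
      tendsto_atTop_ciSup htMono ⟨a, fun v ⟨k, hk⟩ => hk ▸ le_of_lt (htlta k)⟩
    have hxCauchy : CauchySeq x := by
      apply cauchySeq_of_le_tendsto_0 (fun N => (B - t N) * M)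
      · intro n m N hn hm
        rcases le_total n m with h | h
        · rw [dist_eq_norm, norm_sub_rev]
          calc ‖x m - x n‖ ≤ (t m - t n) * M := hxdiff n m h
            _ ≤ (B - t N) * M := by nlinarith [htB m, htMono hn]
        · rw [dist_eq_norm]
          calc ‖x n - x m‖ ≤ (t n - t m) * M := hxdiff m n h
            _ ≤ (B - t N) * M := by nlinarith [htB n, htMono hm]
      · have h1 : Filter.Tendsto (fun N => B - t N) Filter.atTop (nhds 0) := by
          have := htendB.const_sub B
          simpa using this
        have := h1.mul_const M
        simpa using this
    obtain ⟨xb, hxb⟩ := cauchySeq_tendsto_of_complete hxCauchy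
    have hxbC : xb ∈ C := hC_closed.mem_of_tendsto hxb (Filter.Eventually.of_forall hxC)
    obtain ⟨ρ, hρ0, hρ⟩ := Metric.continuousOn_iff.mp hQ xb hxbC (ε/2) (by linarith)
    obtain ⟨k₀, hk₀⟩ := (Metric.tendsto_atTop.mp hxb) (ρ/4) (by linarith)
    set η : ℝ := min a (ρ/(4*M)) / 2 with hη_def
    have hη0 : 0 < η := by
      have : 0 < min a (ρ/(4*M)) := lt_min ha0 (by positivity)
      simp only [hη_def]
      linarith
    have hHlarge : ∀ k, k₀ ≤ k → η ≤ H (x k) := by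
      intro k hk
      have hdk : dist (x k) xb < ρ/4 := hk₀ k hk
      have hosc : ∀ z ∈ C, ‖z - x k‖ ≤ ρ/4 → ‖Q z - Q (x k)‖ ≤ ε := by
        intro z hz hzx
        have hzb : dist z xb < ρ := by
          have h1' : dist z (x k) ≤ ρ/4 := by rw [dist_eq_norm]; exact hzx
          calc dist z xb ≤ dist z (x k) + dist (x k) xb := dist_triangle _ _ _
            _ < ρ/4 + ρ/4 := by linarith [hdk]
            _ ≤ ρ := by linarith
        have h1 := hρ z hz hzb
        have h2 := hρ (x k) (hxC k) (by linarith [hdk, hρ0])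
        rw [dist_eq_norm] at h1 h2
        calc ‖Q z - Q (x k)‖ = ‖(Q z - Q xb) - (Q (x k) - Q xb)‖ := by congr 1; abel
          _ ≤ ‖Q z - Q xb‖ + ‖Q (x k) - Q xb‖ := norm_sub_le _ _
          _ ≤ ε := by linarith
      have := hHmax (x k) (hxC k) (ρ/4) (by linarith) hosc
      have hq1 : ρ/(4*M) ≤ (ρ/4) / ‖Q (x k)‖ := by
        have h3 := hQpos _ (hxC k)
        have h4 := hQbd k
        rw [div_le_div_iff₀ (by positivity) h3]
        nlinarith
      have h5 : min a (ρ/(4*M)) ≤ min a ((ρ/4) / ‖Q (x k)‖) :=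
        le_min (min_le_left _ _) (le_trans (min_le_right _ _) hq1)
      simp only [hη_def]
      linarith
    obtain ⟨m, hm⟩ := exists_nat_gt ((a - t k₀) / η)
    have hstep : ∀ j : ℕ, t k₀ + j * η ≤ t (k₀ + j) := by
      intro j
      induction j with
      | zero => simp
      | succ j ih =>
        have := hHlarge (k₀ + j) (Nat.le_add_right _ _)
        have h2 := htsucc (k₀ + j)
        have h3 : (k₀ + (j+1)) = (k₀ + j) + 1 := by ring
        rw [h3, h2]
        push_cast
        linarith
    have := hstep m
    have hcontra : a < t (k₀ + m) := by
      have h1 : (a - t k₀) / η < m := hm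
      have h2 : a - t k₀ < m * η := by
        rw [div_lt_iff₀ hη0] at h1
        linarith
      linarith
    exact absurd hcontra (not_lt.mpr (le_of_lt (htlta _)))
  case pos =>
    -- the polygon reaches time a
    set N : ℕ := Nat.find hreach with hN_def
    have hNa : a ≤ t N := Nat.find_spec hreach
    have hNmin : ∀ k, k < N → t k < a := fun k hk => not_le.mp (Nat.find_min hreach hk)
    have hN0 : 0 < N := by
      rcases Nat.eq_zero_or_pos N with h | h
      · exfalso
        have := hNa
        rw [h, ht0] at this
        linarith
      · exact h
    have htk2a : ∀ k, k ≤ N → t k ≤ 2 * a := by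
      intro k hk
      rcases Nat.lt_or_ge k N with hlt | hge
      · linarith [hNmin k hlt]
      · have hkN : k = N := le_antisymm hk hge
        subst hkN
        obtain ⟨N', hN'⟩ : ∃ N', N = N' + 1 := ⟨N - 1, (Nat.succ_pred_eq_of_pos hN0).symm⟩
        have hN'lt : N' < N := by omega
        have := hNmin N' hN'lt
        rw [hN', htsucc N']
        have := (hHk N').2
        linarith
    have hconfN : ∀ k, k ≤ N → ‖x k - x₀‖ ≤ t k * M := fun k hk => hconf k (htk2a k hk)
    have hballN : ∀ k, k ≤ N → ‖x k - x₀‖ ≤ r/2 := by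
      intro k hk
      have h1 := hconfN k hk
      have h2 : t k * M ≤ 2 * a * M := by nlinarith [htnn k, htk2a k hk]
      nlinarith
    have hQbdN : ∀ k, k ≤ N → ‖Q (x k)‖ ≤ M :=
      fun k hk => hB _ (hxC k) (by linarith [hballN k hk])
    -- the index function
    have hKex : ∀ τ : ℝ, ∃ j, τ < t (j+1) ∨ N ≤ j := fun τ => ⟨N, Or.inr le_rfl⟩
    set K : ℝ → ℕ := fun τ => Nat.find (hKex τ) with hK_def
    have hKprop : ∀ τ, 0 ≤ τ → τ ≤ a → K τ ≤ N ∧ t (K τ) ≤ τ ∧ τ < t (K τ + 1) := by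
      intro τ hτ0 hτa
      have hfound := Nat.find_spec (hKex τ)
      have hKN : K τ ≤ N := by
        apply Nat.find_le
        left
        calc τ ≤ a := hτa
          _ ≤ t N := hNa
          _ < t (N+1) := htmono N
      have hlow : t (K τ) ≤ τ := by
        rcases Nat.eq_zero_or_pos (K τ) with h | h
        · rw [h, ht0]; exact hτ0
        · obtain ⟨j, hj⟩ : ∃ j, K τ = j + 1 := ⟨K τ - 1, (Nat.succ_pred_eq_of_pos h).symm⟩
          have hmin := Nat.find_min (hKex τ) (by omega : j < K τ)
          push_neg at hmin
          rw [hj]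
          exact hmin.1
      have hup : τ < t (K τ + 1) := by
        rcases hfound with h | h
        · exact h
        · have : K τ = N := le_antisymm hKN h
          rw [this]
          calc τ ≤ a := hτa
            _ ≤ t N := hNa
            _ < t (N+1) := htmono N
      exact ⟨hKN, hlow, hup⟩
    have hKcorner : ∀ k, k ≤ N → K (t k) = k := by
      intro k hk
      show Nat.find (hKex (t k)) = k
      rw [Nat.find_eq_iff]
      constructor
      · exact Or.inl (htmono k)
      · intro j hj
        push_neg
        constructor
        · exact htMono (by omega : j + 1 ≤ k)
        · omega
    -- the polygon function
    set u : ℝ → X := fun τ => x (K τ) - (τ - t (K τ)) • Q (x (K τ)) with hu_def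
    set w : ℝ → X := fun τ => -(Q (x (K τ))) with hw_def
    have hu_corner : ∀ k, k ≤ N → u (t k) = x k := by
      intro k hk
      simp only [hu_def, hKcorner k hk, sub_self, zero_smul, sub_zero]
    have hu0 : u 0 = x₀ := by
      have := hu_corner 0 (Nat.zero_le N)
      rw [ht0] at this
      rw [this, hx0]
    -- segment formula
    have hseg : ∀ k, k < N → ∀ τ, t k ≤ τ → τ ≤ t (k+1) →
        u τ = x k - (τ - t k) • Q (x k) := by
      intro k hk τ hτ1 hτ2
      rcases eq_or_lt_of_le hτ2 with heq | hlt
      · rw [heq, hu_corner (k+1) (by omega), hxsucc k, htsucc k]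
        module
      · have hKτ : K τ = k := by
          show Nat.find (hKex τ) = k
          rw [Nat.find_eq_iff]
          constructor
          · exact Or.inl hlt
          · intro j hj
            push_neg
            constructor
            · exact le_trans (htMono (by omega : j + 1 ≤ k)) hτ1
            · omega
        simp only [hu_def, hKτ]
    have hwseg : ∀ k, k < N → ∀ τ, t k ≤ τ → τ < t (k+1) → w τ = -(Q (x k)) := by
      intro k hk τ hτ1 hτ2
      have hKτ : K τ = k := by
        show Nat.find (hKex τ) = k
        rw [Nat.find_eq_iff]
        constructor
        · exact Or.inl hτ2
        · intro j hj
          push_neg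
          constructor
          · exact le_trans (htMono (by omega : j + 1 ≤ k)) hτ1
          · omega
      simp only [hw_def, hKτ]
    -- membership and bounds for u
    have humem : ∀ τ, 0 ≤ τ → τ ≤ a → u τ ∈ C ∧ ‖u τ - x₀‖ ≤ r/2 := by
      intro τ hτ0 hτa
      obtain ⟨hKN, hlow, hup⟩ := hKprop τ hτ0 hτa
      have hs' : 0 ≤ τ - t (K τ) := by linarith
      have hs'le : τ - t (K τ) ≤ H (x (K τ)) := by
        have := htsucc (K τ)
        linarith [hup]
      have hmem : u τ ∈ C := by
        show x (K τ) - (τ - t (K τ)) • Q (x (K τ)) ∈ C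
        exact hInv (x (K τ)) (hxC (K τ)) (τ - t (K τ)) hs'
          (by linarith [(hHk (K τ)).2, ha1])
      refine ⟨hmem, ?_⟩
      have hQk : ‖Q (x (K τ))‖ ≤ M := hQbdN (K τ) hKN
      calc ‖u τ - x₀‖ = ‖(x (K τ) - x₀) - (τ - t (K τ)) • Q (x (K τ))‖ := by
            show ‖x (K τ) - (τ - t (K τ)) • Q (x (K τ)) - x₀‖ = _
            congr 1; abel
        _ ≤ ‖x (K τ) - x₀‖ + ‖(τ - t (K τ)) • Q (x (K τ))‖ := norm_sub_le _ _
        _ ≤ t (K τ) * M + (τ - t (K τ)) * M := by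
            rw [norm_smul, Real.norm_eq_abs, abs_of_nonneg hs']
            have h6 := hconfN (K τ) hKN
            nlinarith [hQk]
        _ = τ * M := by ring
        _ ≤ a * M := by nlinarith [htnn (K τ)]
        _ ≤ r/2 := by linarith
    -- defect bounds for w
    have hwdef : ∀ τ, 0 ≤ τ → τ ≤ a → ‖w τ + Q (u τ)‖ ≤ ε ∧ ‖w τ‖ ≤ M := by
      intro τ hτ0 hτa
      obtain ⟨hKN, hlow, hup⟩ := hKprop τ hτ0 hτa
      have hs' : 0 ≤ τ - t (K τ) := by linarith
      have hs'le : τ - t (K τ) ≤ H (x (K τ)) := by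
        have := htsucc (K τ)
        linarith [hup]
      have hdist : ‖u τ - x (K τ)‖ ≤ H (x (K τ)) * ‖Q (x (K τ))‖ := by
        have heq2 : u τ - x (K τ) = -((τ - t (K τ)) • Q (x (K τ))) := by
          show x (K τ) - (τ - t (K τ)) • Q (x (K τ)) - x (K τ) = _
          abel
        rw [heq2, norm_neg, norm_smul, Real.norm_eq_abs, abs_of_nonneg hs']
        nlinarith [norm_nonneg (Q (x (K τ))), (hHk (K τ)).1]
      have hosc := hHadm (x (K τ)) (hxC (K τ)) (u τ) (humem τ hτ0 hτa).1 hdist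
      constructor
      · have heq3 : w τ + Q (u τ) = Q (u τ) - Q (x (K τ)) := by
          show -(Q (x (K τ))) + Q (u τ) = _
          abel
        rw [heq3]
        exact hosc
      · show ‖-(Q (x (K τ)))‖ ≤ M
        rw [norm_neg]
        exact hQbdN (K τ) hKN
    -- single-segment averaging
    have hAVGseg : ∀ k, k < N → ∀ s τ, t k ≤ s → s ≤ τ → τ ≤ t (k+1) → ∀ V : X, ∀ b : ℝ,
        ‖w s - V‖ ≤ b → ‖u τ - u s - (τ - s) • V‖ ≤ (τ - s) * b := by
      intro k hk s τ hs1 hsτ hτ2 V b hb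
      rcases eq_or_lt_of_le (le_trans hsτ hτ2) with heq | hlt
      · -- s = t (k+1), hence τ = s
        have hτs : τ = s := le_antisymm (by linarith [heq, hτ2]) hsτ
        rw [hτs]
        simp only [sub_self, zero_smul, sub_zero]
        have hbnn : 0 ≤ b := le_trans (norm_nonneg _) hb
        simp
      · have hws : w s = -(Q (x k)) := hwseg k hk s hs1 hlt
        have h1 := hseg k hk s hs1 (le_of_lt hlt)
        have h2 := hseg k hk τ (le_trans hs1 hsτ) hτ2
        have hkey : u τ - u s - (τ - s) • V = (τ - s) • (w s - V) := by
          rw [h1, h2, hws]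
          module
        rw [hkey, norm_smul, Real.norm_eq_abs, abs_of_nonneg (by linarith)]
        nlinarith [norm_nonneg (w s - V), hb, hsτ]
    -- corner induction for averaging
    have hA : ∀ j, j ≤ N → t j ≤ a → ∀ s, 0 ≤ s → s ≤ t j → ∀ V : X, ∀ b : ℝ,
        (∀ τ, s ≤ τ → τ ≤ t j → ‖w τ - V‖ ≤ b) →
        ‖u (t j) - u s - (t j - s) • V‖ ≤ (t j - s) * b := by
      intro j
      induction j with
      | zero =>
        intro _ _ s hs0 hs1 V b hb
        have hs : s = 0 := le_antisymm (by rwa [ht0] at hs1) hs0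
        subst hs
        rw [ht0]
        simp only [sub_self, zero_smul, sub_zero, zero_mul]
        simp
      | succ j ih =>
        intro hj1N ht_j1 s hs0 hsj1 V b hb
        have hjN : j < N := hj1N
        have htj_le : t j ≤ t (j+1) := le_of_lt (htmono j)
        rcases le_or_gt (t j) s with hcase | hcase
        · exact hAVGseg j hjN s (t (j+1)) hcase hsj1 le_rfl V b (hb s le_rfl hsj1)
        · have h1 := hAVGseg j hjN (t j) (t (j+1)) le_rfl htj_le le_rfl V b
            (hb (t j) (le_of_lt hcase) htj_le)
          have h2 := ih (by omega) (le_trans htj_le ht_j1) s hs0 (le_of_lt hcase) V b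
            (fun τ hτ1 hτ2 => hb τ hτ1 (le_trans hτ2 htj_le))
          have hdecomp : u (t (j+1)) - u s - (t (j+1) - s) • V =
              (u (t (j+1)) - u (t j) - (t (j+1) - t j) • V) +
              (u (t j) - u s - (t j - s) • V) := by
            module
          calc ‖u (t (j+1)) - u s - (t (j+1) - s) • V‖
              = ‖(u (t (j+1)) - u (t j) - (t (j+1) - t j) • V) +
                  (u (t j) - u s - (t j - s) • V)‖ := by rw [hdecomp]
            _ ≤ ‖u (t (j+1)) - u (t j) - (t (j+1) - t j) • V‖ +
                  ‖u (t j) - u s - (t j - s) • V‖ := norm_add_le _ _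
            _ ≤ (t (j+1) - t j) * b + (t j - s) * b := add_le_add h1 h2
            _ = (t (j+1) - s) * b := by ring
    -- general averaging
    have havg : ∀ s τ, 0 ≤ s → s ≤ τ → τ ≤ a → ∀ V : X, ∀ b : ℝ,
        (∀ σ, s ≤ σ → σ ≤ τ → ‖w σ - V‖ ≤ b) →
        ‖u τ - u s - (τ - s) • V‖ ≤ (τ - s) * b := by
      intro s τ hs0 hsτ hτa V b hb
      obtain ⟨hKN, hlow, hup⟩ := hKprop τ (le_trans hs0 hsτ) hτa
      set k := K τ with hk_def
      rcases Nat.lt_or_ge k N with hkN | hkN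
      · rcases le_or_gt s (t k) with hcase | hcase
        · -- split at t k
          have h1 := hAVGseg k hkN (t k) τ le_rfl hlow (le_of_lt hup) V b
            (hb (t k) hcase hlow)
          have h2 := hA k (le_of_lt hkN) (le_trans hlow hτa) s hs0 hcase V b
            (fun σ hσ1 hσ2 => hb σ hσ1 (le_trans hσ2 hlow))
          have hdecomp : u τ - u s - (τ - s) • V =
              (u τ - u (t k) - (τ - t k) • V) + (u (t k) - u s - (t k - s) • V) := by
            module
          calc ‖u τ - u s - (τ - s) • V‖
              = ‖(u τ - u (t k) - (τ - t k) • V) + (u (t k) - u s - (t k - s) • V)‖ := by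
                rw [hdecomp]
            _ ≤ ‖u τ - u (t k) - (τ - t k) • V‖ + ‖u (t k) - u s - (t k - s) • V‖ :=
                norm_add_le _ _
            _ ≤ (τ - t k) * b + (t k - s) * b := add_le_add h1 h2
            _ = (τ - s) * b := by ring
        · -- single segment
          exact hAVGseg k hkN s τ (le_of_lt hcase) hsτ (le_of_lt hup) V b (hb s le_rfl hsτ)
      · -- k = N : then τ = t N
        have hkN' : k = N := le_antisymm hKN hkN
        have hτN : τ = t N := by
          have h1 : t N ≤ τ := by rw [← hkN']; exact hlow
          have h2 : τ ≤ t N := le_trans hτa hNa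
          linarith
        rw [hτN]
        exact hA N le_rfl (by rw [← hτN]; exact hτa) s hs0 (by rw [← hτN]; exact hsτ) V b
          (fun σ hσ1 hσ2 => hb σ hσ1 (by rw [hτN]; exact hσ2))
    exact ⟨u, w, hu0, humem, hwdef, havg⟩

lemma res_local [CompleteSpace X] {C : Set X} (hC_closed : IsClosed C)
    {Q : X → X} {c : ℝ} (hc : 0 < c) (hQ : ContinuousOn Q C)
    (hInv : ∀ x ∈ C, ∀ h : ℝ, 0 ≤ h → h ≤ 1 → x - h • Q x ∈ C)
    (hSA : ∀ u ∈ C, ∀ v ∈ C, ∀ σ : ℝ, 0 ≤ σ →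
      (1 + c * σ) * ‖u - v‖ ≤ ‖(u - v) + σ • (Q u - Q v)‖)
    {x₀ : X} (hx₀ : x₀ ∈ C) {r M : ℝ} (hr : 0 < r) (hM : 1 ≤ M)
    (hB : ∀ z ∈ C, ‖z - x₀‖ ≤ r → ‖Q z‖ ≤ M) :
    (∃ z ∈ C, Q z = 0) ∨
    ∃ x₁ ∈ C, ‖Q x₁‖ ≤ ‖Q x₀‖ / (1 + c * min 1 (r / (4 * M))) ∧
      ‖x₁ - x₀‖ ≤ ((1 + c) / c) * (‖Q x₀‖ - ‖Q x₁‖) := by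
  classical
  by_cases hzero : ∃ z ∈ C, Q z = 0
  · exact Or.inl hzero
  right
  have hM0 : (0:ℝ) < M := lt_of_lt_of_le one_pos hM
  set a : ℝ := min 1 (r / (4 * M)) with ha_def
  have ha0 : 0 < a := lt_min one_pos (by positivity)
  have ha1 : a ≤ 1 := min_le_left _ _
  -- polygons
  set e : ℕ → ℝ := fun n => 1 / (n + 1) with he_def
  have he0 : ∀ n, 0 < e n := by
    intro n
    simp only [he_def]
    positivity
  have hetend : Filter.Tendsto e Filter.atTop (nhds 0) := by
    simp only [he_def]
    exact tendsto_one_div_add_atTop_nhds_zero_nat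
  have hemono : ∀ n m, n ≤ m → e m ≤ e n := by
    intro n m hnm
    simp only [he_def]
    have h1 : (0:ℝ) < n + 1 := by positivity
    have h2 : (n:ℝ) + 1 ≤ (m:ℝ) + 1 := by
      have := (Nat.cast_le (α := ℝ)).mpr hnm
      linarith
    exact one_div_le_one_div_of_le h1 h2
  have hpoly : ∀ n : ℕ, ∃ u w : ℝ → X,
      u 0 = x₀ ∧
      (∀ t, 0 ≤ t → t ≤ a → u t ∈ C ∧ ‖u t - x₀‖ ≤ r / 2) ∧
      (∀ t, 0 ≤ t → t ≤ a → ‖w t + Q (u t)‖ ≤ e n ∧ ‖w t‖ ≤ M) ∧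
      (∀ s t, 0 ≤ s → s ≤ t → t ≤ a → ∀ V : X, ∀ b : ℝ,
        (∀ τ, s ≤ τ → τ ≤ t → ‖w τ - V‖ ≤ b) →
        ‖u t - u s - (t - s) • V‖ ≤ (t - s) * b) := by
    intro n
    rcases res_polygon hC_closed hQ hInv hx₀ hr hM hB (he0 n) with h | h
    · exact absurd h hzero
    · exact h
  choose U W hU0 hUmem hWdef hAVG using hpoly
  -- pairwise comparison
  have hpair : ∀ n m : ℕ, ∀ τ, 0 ≤ τ → τ ≤ a → ‖U n τ - U m τ‖ ≤ (e n + e m) / c := by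
    intro n m τ h0 ha'
    have hd := res_dlemma hc hQ hSA (le_of_lt ha0) (le_of_lt hM0)
      (le_of_lt (he0 n)) (le_of_lt (he0 m))
      (fun t h1 h2 => (hUmem n t h1 h2).1) (fun t h1 h2 => (hUmem m t h1 h2).1)
      (hWdef n) (hWdef m) (hAVG n) (hAVG m) τ h0 ha'
    rw [hU0 n, hU0 m] at hd
    simp only [sub_self, norm_zero, zero_div] at hd
    linarith [hd]
  -- the limit function
  have hex : ∀ τ : ℝ, ∃ L : X, 0 ≤ τ → τ ≤ a →
      Filter.Tendsto (fun n => U n τ) Filter.atTop (nhds L) := by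
    intro τ
    by_cases hτ : 0 ≤ τ ∧ τ ≤ a
    · have hcauchy : CauchySeq (fun n => U n τ) := by
        apply cauchySeq_of_le_tendsto_0 (fun N => 2 * e N / c)
        · intro n m N hn hm
          rw [dist_eq_norm]
          calc ‖U n τ - U m τ‖ ≤ (e n + e m) / c := hpair n m τ hτ.1 hτ.2
            _ ≤ 2 * e N / c := by
                rw [div_le_div_iff₀ hc hc]
                nlinarith [hemono N n hn, hemono N m hm]
        · have h0 := (hetend.const_mul 2).div_const c
          have h1 : (2:ℝ) * 0 / c = 0 := by ring
          rw [h1] at h0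
          exact h0
      obtain ⟨L, hL⟩ := cauchySeq_tendsto_of_complete hcauchy
      exact ⟨L, fun _ _ => hL⟩
    · exact ⟨x₀, fun h1 h2 => absurd ⟨h1, h2⟩ hτ⟩
  choose u hu using hex
  -- distance from U n to u
  have hud : ∀ τ, 0 ≤ τ → τ ≤ a → ∀ n, ‖U n τ - u τ‖ ≤ e n / c := by
    intro τ h0 ha' n
    have h1 : Filter.Tendsto (fun m => ‖U n τ - U m τ‖) Filter.atTop (nhds ‖U n τ - u τ‖) :=
      ((hu τ h0 ha').const_sub (U n τ)).norm
    have h2 : Filter.Tendsto (fun m => (e n + e m) / c) Filter.atTop (nhds ((e n + 0) / c)) :=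
      ((hetend.const_add (e n)).div_const c)
    have h3 := le_of_tendsto_of_tendsto' h1 h2 (fun m => hpair n m τ h0 ha')
    simpa using h3
  have huC : ∀ τ, 0 ≤ τ → τ ≤ a → u τ ∈ C := by
    intro τ h0 ha'
    exact hC_closed.mem_of_tendsto (hu τ h0 ha')
      (Filter.Eventually.of_forall (fun n => (hUmem n τ h0 ha').1))
  have huball : ∀ τ, 0 ≤ τ → τ ≤ a → ‖u τ - x₀‖ ≤ r / 2 := by
    intro τ h0 ha'
    have h1 : Filter.Tendsto (fun n => ‖U n τ - x₀‖) Filter.atTop (nhds ‖u τ - x₀‖) :=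
      ((hu τ h0 ha').sub_const x₀).norm
    exact le_of_tendsto h1 (Filter.Eventually.of_forall (fun n => (hUmem n τ h0 ha').2))
  have hQbd_u : ∀ τ, 0 ≤ τ → τ ≤ a → ‖Q (u τ)‖ ≤ M := by
    intro τ h0 ha'
    exact hB _ (huC τ h0 ha') (by linarith [huball τ h0 ha'])
  have hu0 : u 0 = x₀ := by
    have h1 := hu 0 le_rfl (le_of_lt ha0)
    have h2 : Filter.Tendsto (fun n => U n 0) Filter.atTop (nhds x₀) := by
      have : (fun n => U n 0) = fun _ => x₀ := funext (fun n => hU0 n)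
      rw [this]
      exact tendsto_const_nhds
    exact tendsto_nhds_unique h1 h2
  -- Lipschitz property of u
  have hulip : ∀ s τ, 0 ≤ s → s ≤ τ → τ ≤ a → ‖u τ - u s‖ ≤ M * (τ - s) := by
    intro s τ h0 hsτ ha'
    have h1 : Filter.Tendsto (fun n => ‖U n τ - U n s‖) Filter.atTop (nhds ‖u τ - u s‖) :=
      ((hu τ (le_trans h0 hsτ) ha').sub (hu s h0 (le_trans hsτ ha'))).norm
    apply le_of_tendsto h1
    apply Filter.Eventually.of_forall
    intro n
    have h2 := hAVG n s τ h0 hsτ ha' 0 M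
      (fun σ hσ1 hσ2 => by
        simpa using (hWdef n σ (le_trans h0 hσ1) (le_trans hσ2 ha')).2)
    simpa [mul_comm] using h2
  have hucont : ContinuousOn u (Icc 0 a) := by
    rw [Metric.continuousOn_iff]
    intro b hb η hη
    refine ⟨η / (M + 1), by positivity, fun z hz hzb => ?_⟩
    rw [dist_eq_norm] at hzb ⊢
    have h1 : ‖u z - u b‖ ≤ M * |z - b| := by
      rcases le_total b z with h | h
      · have := hulip b z hb.1 h hz.2
        rwa [abs_of_nonneg (by linarith)]
      · have := hulip z b hz.1 h hb.2
        rw [abs_of_nonpos (by linarith), norm_sub_rev]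
        linarith [this]
    have h2 : |z - b| = ‖z - b‖ := rfl
    have h3 : M * |z - b| < M * (η / (M + 1)) + η / (M + 1) := by
      nlinarith [abs_nonneg (z - b), hzb]
    have h4 : M * (η / (M + 1)) + η / (M + 1) = η := by field_simp
    linarith
  -- uniform continuity of Q ∘ u
  have hQuUC : ∀ θ : ℝ, 0 < θ → ∃ Δ > 0, ∀ s τ, s ∈ Icc 0 a → τ ∈ Icc 0 a →
      |τ - s| ≤ Δ → ‖Q (u τ) - Q (u s)‖ ≤ θ := by
    intro θ hθ
    have hcont : ContinuousOn (fun τ => Q (u τ)) (Icc 0 a) := by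
      apply ContinuousOn.comp hQ hucont
      intro τ hτ
      exact huC τ hτ.1 hτ.2
    have huc : UniformContinuousOn (fun τ => Q (u τ)) (Icc 0 a) :=
      isCompact_Icc.uniformContinuousOn_of_continuous hcont
    rw [Metric.uniformContinuousOn_iff_le] at huc
    obtain ⟨Δ, hΔ, hh⟩ := huc θ hθ
    refine ⟨Δ, hΔ, fun s τ hs hτ hd => ?_⟩
    have := hh τ hτ s hs (by rwa [Real.dist_eq])
    rwa [dist_eq_norm] at this
  -- uniform convergence of Q ∘ U n
  have hULIM : ∀ θ : ℝ, 0 < θ → ∃ n₀ : ℕ, ∀ n, n₀ ≤ n → ∀ τ, 0 ≤ τ → τ ≤ a →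
      ‖Q (U n τ) - Q (u τ)‖ ≤ θ := by
    intro θ hθ
    have hKcomp : IsCompact (u '' Icc 0 a) := (isCompact_Icc).image_of_continuousOn hucont
    have hKC : u '' Icc 0 a ⊆ C := by
      rintro p ⟨τ, hτ, rfl⟩
      exact huC τ hτ.1 hτ.2
    obtain ⟨δ, hδ0, hδ⟩ := res_cuc hQ hKcomp hKC hθ
    obtain ⟨n₀, hn₀⟩ := (Filter.tendsto_atTop'.mp hetend) (Iio (δ * c))
      (Iio_mem_nhds (by positivity))
    refine ⟨n₀, fun n hn τ h0 ha' => ?_⟩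
    have h1 : ‖U n τ - u τ‖ ≤ δ := by
      have h2 := hud τ h0 ha' n
      have h3 : e n < δ * c := hn₀ n hn
      have : e n / c ≤ δ := by
        rw [div_le_iff₀ hc]
        linarith
      linarith
    exact hδ (u τ) ⟨τ, ⟨h0, ha'⟩, rfl⟩ (U n τ) (hUmem n τ h0 ha').1 h1
  -- limit averaging property
  have havg : ∀ s τ, 0 ≤ s → s ≤ τ → τ ≤ a → ∀ V : X, ∀ b : ℝ,
      (∀ σ, s ≤ σ → σ ≤ τ → ‖-(Q (u σ)) - V‖ ≤ b) →
      ‖u τ - u s - (τ - s) • V‖ ≤ (τ - s) * b := by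
    intro s τ hs0 hsτ hτa V b hb
    apply le_of_forall_pos_le_add
    intro θ hθ
    set θ₁ : ℝ := θ / (2 * (a + 1)) with hθ₁_def
    have hθ₁ : 0 < θ₁ := by positivity
    obtain ⟨n₀, hn₀⟩ := hULIM θ₁ hθ₁
    obtain ⟨n₁, hn₁⟩ := (Filter.tendsto_atTop'.mp hetend)
      (Iio (θ / (2 * (a + 2/c + 1)))) (Iio_mem_nhds (by positivity))
    set n := max n₀ n₁ with hn_def
    have hen : e n < θ / (2 * (a + 2/c + 1)) := hn₁ n (le_max_right _ _)
    -- apply polygon averaging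
    have h1 := hAVG n s τ hs0 hsτ hτa V (b + e n + θ₁) ?_
    · have h2 : ‖u τ - u s - (τ - s) • V‖ ≤
          ‖U n τ - U n s - (τ - s) • V‖ + ‖u τ - U n τ‖ + ‖u s - U n s‖ := by
        have hid : u τ - u s - (τ - s) • V =
            (U n τ - U n s - (τ - s) • V) + (u τ - U n τ) - (u s - U n s) := by abel
        rw [hid]
        calc ‖(U n τ - U n s - (τ - s) • V) + (u τ - U n τ) - (u s - U n s)‖
            ≤ ‖(U n τ - U n s - (τ - s) • V) + (u τ - U n τ)‖ + ‖u s - U n s‖ :=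
              norm_sub_le _ _
          _ ≤ ‖U n τ - U n s - (τ - s) • V‖ + ‖u τ - U n τ‖ + ‖u s - U n s‖ := by
              linarith [norm_add_le (U n τ - U n s - (τ - s) • V) (u τ - U n τ)]
      have h3 : ‖u τ - U n τ‖ ≤ e n / c := by
        rw [norm_sub_rev]
        exact hud τ (le_trans hs0 hsτ) hτa n
      have h4 : ‖u s - U n s‖ ≤ e n / c := by
        rw [norm_sub_rev]
        exact hud s hs0 (le_trans hsτ hτa) n
      have h5 : (τ - s) * (b + e n + θ₁) + 2 * (e n / c) ≤ (τ - s) * b + θ := by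
        have h6 : (τ - s) * (e n + θ₁) ≤ a * e n + a * θ₁ := by
          have h7 : τ - s ≤ a := by linarith
          have h8 : 0 ≤ τ - s := by linarith
          nlinarith [he0 n, hθ₁]
        have h9 : a * θ₁ ≤ θ / 2 := by
          have h9a : θ₁ * (2 * (a + 1)) = θ := by rw [hθ₁_def]; field_simp
          nlinarith [hθ₁, ha0]
        have h10 : a * e n + 2 * (e n / c) ≤ θ / 2 := by
          have h11 : a * e n + 2 * (e n / c) = e n * (a + 2 / c) := by field_simp
          rw [h11]
          have h12 : e n * (a + 2/c) ≤ θ / (2 * (a + 2/c + 1)) * (a + 2/c) := by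
            apply mul_le_mul_of_nonneg_right (le_of_lt hen)
            positivity
          have h13 : θ / (2 * (a + 2/c + 1)) * (a + 2/c) ≤ θ / 2 := by
            rw [div_mul_eq_mul_div, div_le_div_iff₀ (by positivity) (by norm_num)]
            nlinarith [sq_nonneg (a + 2/c)]
          linarith
        nlinarith [h6, h9, h10]
      calc ‖u τ - u s - (τ - s) • V‖
          ≤ ‖U n τ - U n s - (τ - s) • V‖ + ‖u τ - U n τ‖ + ‖u s - U n s‖ := h2
        _ ≤ (τ - s) * (b + e n + θ₁) + e n / c + e n / c := by linarith [h1, h3, h4]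
        _ ≤ (τ - s) * b + θ := by linarith [h5]
    · -- hypothesis for polygon averaging
      intro σ hσ1 hσ2
      have hσ0 : 0 ≤ σ := le_trans hs0 hσ1
      have hσa : σ ≤ a := le_trans hσ2 hτa
      have ha1' := (hWdef n σ hσ0 hσa).1
      have ha2' := hn₀ n (le_max_left _ _) σ hσ0 hσa
      have ha3' := hb σ hσ1 hσ2
      calc ‖W n σ - V‖
          = ‖(W n σ + Q (U n σ)) + (Q (u σ) - Q (U n σ)) + (-(Q (u σ)) - V)‖ := by
            congr 1; abel
        _ ≤ ‖(W n σ + Q (U n σ)) + (Q (u σ) - Q (U n σ))‖ + ‖-(Q (u σ)) - V‖ :=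
            norm_add_le _ _
        _ ≤ ‖W n σ + Q (U n σ)‖ + ‖Q (u σ) - Q (U n σ)‖ + ‖-(Q (u σ)) - V‖ := by
            linarith [norm_add_le (W n σ + Q (U n σ)) (Q (u σ) - Q (U n σ))]
        _ ≤ e n + θ₁ + b := by
            rw [norm_sub_rev] at ha2'
            linarith
        _ = b + e n + θ₁ := by ring
  -- decay of differences
  have hdecay : ∀ h : ℝ, 0 < h → h ≤ a → ∀ τ, 0 ≤ τ → τ + h ≤ a →
      ‖u (τ + h) - u τ‖ ≤ ‖u h - u 0‖ / (1 + c * τ) := by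
    intro h h0 hha τ hτ0 hτh
    have hd := res_dlemma hc hQ hSA (a := a - h) (M := M) (ε₁ := (0:ℝ)) (ε₂ := (0:ℝ))
      (by linarith) (le_of_lt hM0) le_rfl le_rfl
      (u₁ := fun σ => u (σ + h)) (u₂ := u)
      (w₁ := fun σ => -(Q (u (σ + h)))) (w₂ := fun σ => -(Q (u σ)))
      (fun σ h1 h2 => huC (σ + h) (by linarith) (by linarith))
      (fun σ h1 h2 => huC σ h1 (by linarith))
      (fun σ h1 h2 => by
        constructor
        · simp
        · rw [norm_neg]
          exact hQbd_u (σ + h) (by linarith) (by linarith))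
      (fun σ h1 h2 => by
        constructor
        · simp
        · rw [norm_neg]
          exact hQbd_u σ h1 (by linarith))
      (by
        intro s t hs0 hst hta V b hb
        have h1 := havg (s + h) (t + h) (by linarith) (by linarith) (by linarith) V b
          (fun σ hσ1 hσ2 => by
            have h3 := hb (σ - h) (by linarith) (by linarith)
            have h4 : σ - h + h = σ := by ring
            simpa [h4] using h3)
        have h2 : t + h - (s + h) = t - s := by ring
        rwa [h2] at h1)
      (by
        intro s t hs0 hst hta V b hb
        exact havg s t hs0 hst (by linarith) V b hb)
      τ hτ0 (by linarith)
    simp only [zero_add, add_zero] at hd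
    calc ‖u (τ + h) - u τ‖ ≤ ‖u h - u 0‖ / (1 + c * τ) + 0 / c := hd
      _ = ‖u h - u 0‖ / (1 + c * τ) := by simp
  -- decay of the defect
  have hspeed : ∀ τ, 0 ≤ τ → τ ≤ a → ‖Q (u τ)‖ ≤ ‖Q x₀‖ / (1 + c * τ) := by
    intro τ hτ0 hτa
    rcases eq_or_lt_of_le hτ0 with h0 | hτpos
    · rw [← h0, hu0]
      simp
    set D : ℝ := ‖Q x₀‖ with hD_def
    have hD0 : 0 ≤ D := norm_nonneg _
    apply le_of_forall_pos_le_add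
    intro η hη
    set θ : ℝ := min 1 (η / (2 + c * (D + 1))) with hθ_def
    have hθ0 : 0 < θ := lt_min one_pos (by positivity)
    have hθ1 : θ ≤ 1 := min_le_left _ _
    have hθη : θ * (2 + c * (D + 1)) ≤ η := by
      have h1 : θ ≤ η / (2 + c * (D + 1)) := min_le_right _ _
      rw [← le_div_iff₀ (by positivity)]
      exact h1
    obtain ⟨Δ, hΔ0, hΔ⟩ := hQuUC θ hθ0
    set h : ℝ := min Δ (min τ θ) with hh_def
    have hh0 : 0 < h := lt_min hΔ0 (lt_min hτpos hθ0)
    have hhτ : h ≤ τ := le_trans (min_le_right _ _) (min_le_left _ _)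
    have hhθ : h ≤ θ := le_trans (min_le_right _ _) (min_le_right _ _)
    have hhΔ : h ≤ Δ := min_le_left _ _
    have hha : h ≤ a := le_trans hhτ hτa
    -- averaging on [τ - h, τ]
    have hstep1 : ‖u τ - u (τ - h) - h • (-(Q (u τ)))‖ ≤ h * θ := by
      have := havg (τ - h) τ (by linarith) (by linarith) hτa (-(Q (u τ))) θ
        (fun σ hσ1 hσ2 => by
          have hmem1 : σ ∈ Icc 0 a := ⟨by linarith, by linarith⟩
          have hmem2 : τ ∈ Icc 0 a := ⟨hτ0, hτa⟩
          have hd2 : |τ - σ| ≤ Δ := by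
            rw [abs_of_nonneg (by linarith)]
            linarith
          have h3 := hΔ σ τ hmem1 hmem2 hd2
          calc ‖-(Q (u σ)) - -(Q (u τ))‖ = ‖Q (u τ) - Q (u σ)‖ := by
                congr 1; abel
            _ ≤ θ := h3)
      have h4 : τ - (τ - h) = h := by ring
      rwa [h4] at this
    have hlow : h * ‖Q (u τ)‖ ≤ ‖u τ - u (τ - h)‖ + h * θ := by
      have h5 : h • (-(Q (u τ))) = -(h • Q (u τ)) := by rw [smul_neg]
      have h6 : ‖h • Q (u τ)‖ = h * ‖Q (u τ)‖ := by
        rw [norm_smul, Real.norm_eq_abs, abs_of_pos hh0]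
      calc h * ‖Q (u τ)‖ = ‖h • Q (u τ)‖ := h6.symm
        _ = ‖(u τ - u (τ - h) - h • (-(Q (u τ)))) - (u τ - u (τ - h))‖ := by
            congr 1
            rw [h5]
            abel
        _ ≤ ‖u τ - u (τ - h) - h • (-(Q (u τ)))‖ + ‖u τ - u (τ - h)‖ := norm_sub_le _ _
        _ ≤ ‖u τ - u (τ - h)‖ + h * θ := by linarith [hstep1]
    -- decay of differences applied at τ - h
    have hstep2 : ‖u τ - u (τ - h)‖ ≤ ‖u h - u 0‖ / (1 + c * (τ - h)) := by
      have := hdecay h hh0 hha (τ - h) (by linarith) (by linarith)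
      have h7 : τ - h + h = τ := by ring
      rwa [h7] at this
    -- bound on ‖u h - u 0‖
    have hstep3 : ‖u h - u 0‖ ≤ h * (D + θ) := by
      have h8 := havg 0 h le_rfl (le_of_lt hh0) hha (-(Q (u 0))) θ
        (fun σ hσ1 hσ2 => by
          have hmem1 : σ ∈ Icc 0 a := ⟨hσ1, by linarith⟩
          have hmem2 : (0:ℝ) ∈ Icc 0 a := ⟨le_rfl, le_of_lt ha0⟩
          have hd2 : |σ - 0| ≤ Δ := by
            rw [sub_zero, abs_of_nonneg hσ1]
            linarith
          have h3 := hΔ 0 σ hmem2 hmem1 (by rwa [sub_zero] at hd2 ⊢)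
          calc ‖-(Q (u σ)) - -(Q (u 0))‖ = ‖Q (u 0) - Q (u σ)‖ := by
                congr 1; abel
            _ = ‖Q (u σ) - Q (u 0)‖ := norm_sub_rev _ _
            _ ≤ θ := h3)
      have h9 : ‖u h - u 0‖ ≤ ‖u h - u 0 - (h - 0) • (-(Q (u 0)))‖ + ‖(h - 0) • (-(Q (u 0)))‖ := by
        calc ‖u h - u 0‖ = ‖(u h - u 0 - (h - 0) • (-(Q (u 0)))) + (h - 0) • (-(Q (u 0)))‖ := by
              congr 1; abel
          _ ≤ _ := norm_add_le _ _
      have h10 : ‖(h - 0) • (-(Q (u 0)))‖ = h * D := by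
        rw [sub_zero, norm_smul, norm_neg, Real.norm_eq_abs, abs_of_pos hh0, hu0]
      have h11 : ‖u h - u 0 - (h - 0) • (-(Q (u 0)))‖ ≤ (h - 0) * θ := h8
      rw [sub_zero] at h11
      calc ‖u h - u 0‖ ≤ ‖u h - u 0 - (h - 0) • (-(Q (u 0)))‖ + ‖(h - 0) • (-(Q (u 0)))‖ := h9
        _ ≤ h * θ + h * D := by rw [h10]; linarith [h11]
        _ = h * (D + θ) := by ring
    -- combine
    set d1 : ℝ := 1 + c * (τ - h) with hd1_def
    set d2 : ℝ := 1 + c * τ with hd2_def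
    have hd1_1 : 1 ≤ d1 := by
      rw [hd1_def]
      nlinarith [mul_nonneg hc.le (sub_nonneg.mpr hhτ)]
    have hd2_1 : 1 ≤ d2 := by
      rw [hd2_def]
      nlinarith [mul_nonneg hc.le hτ0]
    have hd1_0 : 0 < d1 := by linarith
    have hd2_0 : 0 < d2 := by linarith
    have hd12 : d2 - d1 = c * h := by rw [hd1_def, hd2_def]; ring
    have hcomb : h * ‖Q (u τ)‖ ≤ h * (D + θ) / d1 + h * θ := by
      calc h * ‖Q (u τ)‖ ≤ ‖u τ - u (τ - h)‖ + h * θ := hlow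
        _ ≤ ‖u h - u 0‖ / d1 + h * θ := by
            have := hstep2
            have hmono2 : ‖u h - u 0‖ / (1 + c * (τ - h)) = ‖u h - u 0‖ / d1 := by rw [hd1_def]
            linarith [hmono2 ▸ this]
        _ ≤ h * (D + θ) / d1 + h * θ := by
            have h14 : ‖u h - u 0‖ / d1 ≤ h * (D + θ) / d1 := by
              rw [div_le_div_iff₀ hd1_0 hd1_0]
              nlinarith [hstep3]
            linarith
    have hA : ‖Q (u τ)‖ ≤ (D + θ) / d1 + θ := by
      have h12 : h * ((D + θ) / d1 + θ) = h * (D + θ) / d1 + h * θ := by ring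
      have h13 : h * ‖Q (u τ)‖ ≤ h * ((D + θ) / d1 + θ) := by rw [h12]; exact hcomb
      exact le_of_mul_le_mul_left (by linarith [h13]) hh0
    -- final numeric estimate
    have hsplit : (D + θ) / d1 - (D + θ) / d2 = (D + θ) * (c * h) / (d1 * d2) := by
      field_simp
      ring
    have hbound1 : (D + θ) * (c * h) / (d1 * d2) ≤ (D + θ) * (c * h) := by
      apply div_le_self (by positivity)
      nlinarith
    have hbound2 : (D + θ) * (c * h) ≤ (D + 1) * (c * θ) := by
      have h22 : D + θ ≤ D + 1 := by linarith
      have h23 : c * h ≤ c * θ := by nlinarith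
      have h24 : (0:ℝ) ≤ c * h := by positivity
      calc (D + θ) * (c * h) ≤ (D + 1) * (c * h) := by nlinarith [hD0]
        _ ≤ (D + 1) * (c * θ) := by nlinarith [hD0]
    have hbound3 : (D + θ) / d2 ≤ D / d2 + θ := by
      have h20 : (D + θ) / d2 = D / d2 + θ / d2 := by ring
      have h21 : θ / d2 ≤ θ := div_le_self hθ0.le hd2_1
      linarith
    calc ‖Q (u τ)‖ ≤ (D + θ) / d1 + θ := hA
      _ = (D + θ) / d2 + ((D + θ) / d1 - (D + θ) / d2) + θ := by ring
      _ ≤ D / d2 + θ + (D + 1) * (c * θ) + θ := by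
          rw [hsplit]
          linarith [hbound1, hbound2, hbound3]
      _ ≤ D / d2 + η := by
          have : θ * (2 + c * (D + 1)) = θ + (D + 1) * (c * θ) + θ - θ + θ := by ring
          nlinarith [hθη]
      _ = ‖Q x₀‖ / (1 + c * τ) + η := by rw [hD_def, hd2_def]
  -- arc length bound
  have harc : ‖u a - x₀‖ ≤ a * ‖Q x₀‖ := by
    have h1 := havg 0 a le_rfl (le_of_lt ha0) le_rfl 0 ‖Q x₀‖
      (fun σ hσ1 hσ2 => by
        have := hspeed σ hσ1 hσ2
        have h2 : ‖Q x₀‖ / (1 + c * σ) ≤ ‖Q x₀‖ := by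
          apply div_le_self (norm_nonneg _)
          nlinarith
        simp only [sub_zero, norm_neg]
        linarith)
    simp only [smul_zero, sub_zero] at h1
    rw [hu0] at h1
    simpa using h1
  -- assemble
  refine ⟨u a, huC a (le_of_lt ha0) le_rfl, ?_, ?_⟩
  · exact hspeed a (le_of_lt ha0) le_rfl
  · set D : ℝ := ‖Q x₀‖ with hD_def
    set B1 : ℝ := ‖Q (u a)‖ with hB1_def
    have hB1_0 : 0 ≤ B1 := norm_nonneg _
    have hD0 : 0 ≤ D := norm_nonneg _
    have hBa : B1 ≤ D / (1 + c * a) := hspeed a (le_of_lt ha0) le_rfl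
    have hca : (0:ℝ) < 1 + c * a := by nlinarith
    have hm : B1 * (1 + c * a) ≤ D := by
      rw [div_eq_mul_inv] at hBa
      calc B1 * (1 + c * a) ≤ (D * (1 + c * a)⁻¹) * (1 + c * a) := by nlinarith
        _ = D := by field_simp
    have h1a : (0:ℝ) ≤ 1 - a := by linarith
    have hE : 0 ≤ D - B1 - c * a * B1 := by nlinarith
    have h2 : 0 ≤ 1 + c - a * c := by nlinarith
    have h3 : 0 ≤ c * a * B1 * (1 - a) * c :=
      mul_nonneg (mul_nonneg (mul_nonneg (mul_nonneg hc.le ha0.le) hB1_0) h1a) hc.le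
    have hnum : 0 ≤ c * a * B1 * (1 - a) * c + (D - B1 - c * a * B1) * (1 + c - a * c) := by
      nlinarith [mul_nonneg hE h2]
    have h1 : ((1 + c) / c) * (D - B1) - a * D =
        (c * a * B1 * (1 - a) * c + (D - B1 - c * a * B1) * (1 + c - a * c)) / c := by
      field_simp
      ring
    have h4 : 0 ≤ ((1 + c) / c) * (D - B1) - a * D := by
      rw [h1]
      exact div_nonneg hnum hc.le
    calc ‖u a - x₀‖ ≤ a * D := harc
      _ ≤ ((1 + c) / c) * (D - B1) := by linarith

lemma res_exists_zero [CompleteSpace X] {C : Set X} (hC_closed : IsClosed C)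
    (hC_ne : C.Nonempty)
    {Q : X → X} {c : ℝ} (hc : 0 < c) (hQ : ContinuousOn Q C)
    (hInv : ∀ x ∈ C, ∀ h : ℝ, 0 ≤ h → h ≤ 1 → x - h • Q x ∈ C)
    (hSA : ∀ u ∈ C, ∀ v ∈ C, ∀ σ : ℝ, 0 ≤ σ →
      (1 + c * σ) * ‖u - v‖ ≤ ‖(u - v) + σ • (Q u - Q v)‖) :
    ∃ z ∈ C, Q z = 0 := by
  classical
  by_contra hzero
  push_neg at hzero
  -- local radius with oscillation at most 1
  set R : X → Set ℝ := fun x =>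
    {ρ : ℝ | 0 < ρ ∧ ρ ≤ 1 ∧ ∀ z ∈ C, ‖z - x‖ ≤ ρ → ‖Q z - Q x‖ ≤ 1} with hR_def
  set rr : X → ℝ := fun x => sSup (R x) / 2 with hrr_def
  have hRne : ∀ x ∈ C, (R x).Nonempty := by
    intro x hx
    obtain ⟨δ, hδ0, hδ⟩ := Metric.continuousOn_iff.mp hQ x hx 1 one_pos
    refine ⟨min 1 (δ/2), ⟨lt_min one_pos (by linarith), min_le_left _ _, ?_⟩⟩
    intro z hz hzx
    have h1 : dist z x < δ := by
      rw [dist_eq_norm]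
      calc ‖z - x‖ ≤ min 1 (δ/2) := hzx
        _ ≤ δ/2 := min_le_right _ _
        _ < δ := by linarith
    have := hδ z hz h1
    rw [dist_eq_norm] at this
    linarith
  have hRbdd : ∀ x, BddAbove (R x) := fun x => ⟨1, fun ρ hρ => hρ.2.1⟩
  have hrr0 : ∀ x ∈ C, 0 < rr x := by
    intro x hx
    obtain ⟨ρ, hρ⟩ := hRne x hx
    have := le_csSup (hRbdd x) hρ
    simp only [hrr_def]
    linarith [hρ.1]
  have hrr1 : ∀ x ∈ C, rr x ≤ 1/2 := by
    intro x hx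
    have : sSup (R x) ≤ 1 := csSup_le (hRne x hx) (fun ρ hρ => hρ.2.1)
    simp only [hrr_def]
    linarith
  have hrradm : ∀ x ∈ C, ∀ z ∈ C, ‖z - x‖ ≤ rr x → ‖Q z - Q x‖ ≤ 1 := by
    intro x hx z hz hzx
    have h2 : rr x < sSup (R x) := by
      have := hrr0 x hx
      simp only [hrr_def] at this ⊢
      linarith
    obtain ⟨ρ, hρR, hlt⟩ := exists_lt_of_lt_csSup (hRne x hx) h2
    exact hρR.2.2 z hz (by linarith)
  have hrrmax : ∀ x ∈ C, ∀ ρ, ρ ∈ R x → ρ ≤ 2 * rr x := by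
    intro x hx ρ hρ
    have := le_csSup (hRbdd x) hρ
    simp only [hrr_def]
    linarith
  -- one improvement step
  have hstep : ∀ x : X, ∃ x' : X, x ∈ C → (x' ∈ C ∧
      ‖Q x'‖ ≤ ‖Q x‖ / (1 + c * min 1 (rr x / (4 * (‖Q x‖ + 1)))) ∧
      ‖x' - x‖ ≤ ((1 + c) / c) * (‖Q x‖ - ‖Q x'‖)) := by
    intro x
    by_cases hx : x ∈ C
    · have hMx : (1:ℝ) ≤ ‖Q x‖ + 1 := by linarith [norm_nonneg (Q x)]
      have hBx : ∀ z ∈ C, ‖z - x‖ ≤ rr x → ‖Q z‖ ≤ ‖Q x‖ + 1 := by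
        intro z hz hzx
        have := hrradm x hx z hz hzx
        calc ‖Q z‖ = ‖(Q z - Q x) + Q x‖ := by congr 1; abel
          _ ≤ ‖Q z - Q x‖ + ‖Q x‖ := norm_add_le _ _
          _ ≤ ‖Q x‖ + 1 := by linarith
      rcases res_local hC_closed hc hQ hInv hSA hx (hrr0 x hx) hMx hBx with h | ⟨x₁, h1, h2, h3⟩
      · obtain ⟨z, hz, hQz⟩ := h
        exact absurd hQz (hzero z hz)
      · exact ⟨x₁, fun _ => ⟨h1, h2, h3⟩⟩
    · exact ⟨x, fun h => absurd h hx⟩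
  choose G hG using hstep
  -- iterate
  obtain ⟨z₀, hz₀⟩ := hC_ne
  set z : ℕ → X := fun n => G^[n] z₀ with hz_def
  have hz0 : z 0 = z₀ := rfl
  have hzsucc : ∀ n, z (n+1) = G (z n) := by
    intro n
    simp only [hz_def, Function.iterate_succ_apply']
  have hzC : ∀ n, z n ∈ C := by
    intro n
    induction n with
    | zero => exact hz₀
    | succ n ih =>
      rw [hzsucc n]
      exact (hG (z n) ih).1
  set δ : ℕ → ℝ := fun n => ‖Q (z n)‖ with hδ_def
  have hδ0 : ∀ n, 0 ≤ δ n := fun n => norm_nonneg _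
  set A : ℕ → ℝ := fun n => min 1 (rr (z n) / (4 * (‖Q (z n)‖ + 1))) with hA_def
  have hA0 : ∀ n, 0 < A n := by
    intro n
    apply lt_min one_pos
    have h1 := hrr0 (z n) (hzC n)
    have h2 : (0:ℝ) < ‖Q (z n)‖ + 1 := by linarith [norm_nonneg (Q (z n))]
    positivity
  have hA1 : ∀ n, A n ≤ 1 := fun n => min_le_left _ _
  have hdec : ∀ n, δ (n+1) ≤ δ n / (1 + c * A n) := by
    intro n
    show ‖Q (z (n+1))‖ ≤ ‖Q (z n)‖ / (1 + c * A n)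
    rw [hzsucc n]
    exact (hG (z n) (hzC n)).2.1
  have hdist : ∀ n, ‖z (n+1) - z n‖ ≤ ((1 + c) / c) * (δ n - δ (n+1)) := by
    intro n
    show ‖z (n+1) - z n‖ ≤ ((1 + c) / c) * (‖Q (z n)‖ - ‖Q (z (n+1))‖)
    rw [hzsucc n]
    exact (hG (z n) (hzC n)).2.2
  have hmono : ∀ n, δ (n+1) ≤ δ n := by
    intro n
    have h1 := hdec n
    have h2 : (0:ℝ) < 1 + c * A n := by nlinarith [hA0 n, hc]
    have h3 : δ n / (1 + c * A n) ≤ δ n := by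
      apply div_le_self (hδ0 n)
      nlinarith [hA0 n]
    linarith
  have hanti : ∀ n m, n ≤ m → δ m ≤ δ n := by
    intro n m hnm
    induction m with
    | zero =>
      have : n = 0 := Nat.le_zero.mp hnm
      rw [this]
    | succ m ih =>
      rcases Nat.lt_or_ge n (m+1) with h | h
      · exact le_trans (hmono m) (ih (Nat.lt_succ_iff.mp h))
      · have : n = m+1 := le_antisymm hnm h
        rw [this]
  -- telescoping distance bound
  have htel : ∀ n m, n ≤ m → ‖z m - z n‖ ≤ ((1 + c) / c) * (δ n - δ m) := by
    intro n m hnm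
    induction m with
    | zero =>
      have : n = 0 := Nat.le_zero.mp hnm
      subst this
      simp
    | succ m ih =>
      rcases Nat.lt_or_ge n (m+1) with h | h
      · have hnm' : n ≤ m := Nat.lt_succ_iff.mp h
        have ihm := ih hnm'
        calc ‖z (m+1) - z n‖ = ‖(z (m+1) - z m) + (z m - z n)‖ := by congr 1; abel
          _ ≤ ‖z (m+1) - z m‖ + ‖z m - z n‖ := norm_add_le _ _
          _ ≤ ((1 + c) / c) * (δ m - δ (m+1)) + ((1 + c) / c) * (δ n - δ m) := by
              linarith [hdist m]
          _ = ((1 + c) / c) * (δ n - δ (m+1)) := by ring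
      · have : n = m+1 := le_antisymm hnm h
        subst this
        simp
  -- limit of δ
  have hδbdd : BddBelow (Set.range δ) := ⟨0, fun v ⟨n, hn⟩ => hn ▸ hδ0 n⟩
  have hδanti : Antitone δ := antitone_nat_of_succ_le hmono
  have hδtend : Filter.Tendsto δ Filter.atTop (nhds (⨅ n, δ n)) :=
    tendsto_atTop_ciInf hδanti hδbdd
  set δinf : ℝ := ⨅ n, δ n with hδinf_def
  have hδinfle : ∀ n, δinf ≤ δ n := fun n => ciInf_le hδbdd n
  -- z is Cauchy
  have hzCauchy : CauchySeq z := by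
    apply cauchySeq_of_le_tendsto_0 (fun N => ((1 + c) / c) * (δ N - δinf))
    · intro n m N hn hm
      rcases le_total n m with h | h
      · rw [dist_eq_norm, norm_sub_rev]
        calc ‖z m - z n‖ ≤ ((1 + c) / c) * (δ n - δ m) := htel n m h
          _ ≤ ((1 + c) / c) * (δ N - δinf) := by
              have h1 := hanti N n hn
              have h2 := hδinfle m
              have h3 : (0:ℝ) ≤ (1 + c) / c := by positivity
              nlinarith
      · rw [dist_eq_norm]
        calc ‖z n - z m‖ ≤ ((1 + c) / c) * (δ m - δ n) := htel m n h
          _ ≤ ((1 + c) / c) * (δ N - δinf) := by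
              have h1 := hanti N m hm
              have h2 := hδinfle n
              have h3 : (0:ℝ) ≤ (1 + c) / c := by positivity
              nlinarith
    · have h1 : Filter.Tendsto (fun N => δ N - δinf) Filter.atTop (nhds 0) := by
        have := hδtend.sub_const δinf
        simpa using this
      have := h1.const_mul ((1 + c) / c)
      simpa using this
  obtain ⟨zb, hzb⟩ := cauchySeq_tendsto_of_complete hzCauchy
  have hzbC : zb ∈ C := hC_closed.mem_of_tendsto hzb (Filter.Eventually.of_forall hzC)
  -- δinf = ‖Q zb‖
  have hQtend : Filter.Tendsto (fun n => Q (z n)) Filter.atTop (nhds (Q zb)) := by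
    have h1 : Filter.Tendsto z Filter.atTop (nhdsWithin zb C) := by
      rw [tendsto_nhdsWithin_iff]
      exact ⟨hzb, Filter.Eventually.of_forall hzC⟩
    exact (hQ zb hzbC).tendsto.comp h1
  have hδlim : Filter.Tendsto δ Filter.atTop (nhds ‖Q zb‖) := hQtend.norm
  have hδinfval : δinf = ‖Q zb‖ := tendsto_nhds_unique hδtend hδlim
  have hδinfpos : 0 < δinf := by
    rw [hδinfval]
    exact norm_pos_iff.mpr (hzero zb hzbC)
  -- eventual lower bound on the improvement rate
  obtain ⟨dρ, hdρ0, hdρ⟩ := Metric.continuousOn_iff.mp hQ zb hzbC (1/2) (by norm_num)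
  obtain ⟨n₀, hn₀⟩ := (Metric.tendsto_atTop.mp hzb) (dρ/4) (by linarith)
  set ρs : ℝ := min 1 (dρ/4) with hρs_def
  have hρs0 : 0 < ρs := lt_min one_pos (by linarith)
  have hrrlow : ∀ n, n₀ ≤ n → ρs / 2 ≤ rr (z n) := by
    intro n hn
    have hdn := hn₀ n hn
    have hmem : ρs ∈ R (z n) := by
      refine ⟨hρs0, min_le_left _ _, ?_⟩
      intro w hw hwz
      have hwzb : dist w zb < dρ := by
        have h1 : dist w (z n) ≤ dρ/4 := by
          rw [dist_eq_norm]
          exact le_trans hwz (by simp only [hρs_def]; exact min_le_right _ _)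
        calc dist w zb ≤ dist w (z n) + dist (z n) zb := dist_triangle _ _ _
          _ < dρ/4 + dρ/4 := by linarith [hdn]
          _ ≤ dρ := by linarith
      have h2 := hdρ w hw hwzb
      have h3 := hdρ (z n) (hzC n) (by linarith [hdn, hdρ0])
      rw [dist_eq_norm] at h2 h3
      calc ‖Q w - Q (z n)‖ = ‖(Q w - Q zb) - (Q (z n) - Q zb)‖ := by congr 1; abel
        _ ≤ ‖Q w - Q zb‖ + ‖Q (z n) - Q zb‖ := norm_sub_le _ _
        _ ≤ 1 := by linarith
    have := hrrmax (z n) (hzC n) ρs hmem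
    linarith
  have hδ0bd : ∀ n, δ n ≤ δ 0 := fun n => hanti 0 n (Nat.zero_le n)
  set abar : ℝ := min 1 ((ρs/2) / (4 * (δ 0 + 1))) with habar_def
  have habar0 : 0 < abar := by
    apply lt_min one_pos
    have h1 : (0:ℝ) < δ 0 + 1 := by linarith [hδ0 0]
    positivity
  have hAlow : ∀ n, n₀ ≤ n → abar ≤ A n := by
    intro n hn
    apply le_min (min_le_left _ _)
    calc abar ≤ (ρs/2) / (4 * (δ 0 + 1)) := min_le_right _ _
      _ ≤ rr (z n) / (4 * (‖Q (z n)‖ + 1)) := by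
          apply div_le_div₀ (le_trans (by positivity) (hrrlow n hn))
            (hrrlow n hn) (by positivity)
          have := hδ0bd n
          simp only [hδ_def] at this
          nlinarith
  -- geometric decay beyond n₀
  have hgeo : ∀ m : ℕ, δ (n₀ + m) ≤ δ n₀ / (1 + c * abar)^m := by
    intro m
    induction m with
    | zero => simp
    | succ m ih =>
      have h1 := hdec (n₀ + m)
      have h2 : abar ≤ A (n₀ + m) := hAlow (n₀ + m) (Nat.le_add_right _ _)
      have h3 : (0:ℝ) < 1 + c * abar := by nlinarith
      have h4 : (0:ℝ) < 1 + c * A (n₀ + m) := by nlinarith [hA0 (n₀ + m)]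
      have h5 : δ (n₀ + m) / (1 + c * A (n₀ + m)) ≤ δ (n₀ + m) / (1 + c * abar) := by
        apply div_le_div_of_nonneg_left (hδ0 _) h3
        nlinarith
      have h6 : (n₀ + (m+1)) = (n₀ + m) + 1 := by ring
      rw [h6]
      calc δ ((n₀ + m) + 1) ≤ δ (n₀ + m) / (1 + c * A (n₀ + m)) := h1
        _ ≤ δ (n₀ + m) / (1 + c * abar) := h5
        _ ≤ (δ n₀ / (1 + c * abar)^m) / (1 + c * abar) := by
            apply div_le_div_of_nonneg_right ih h3.le
        _ = δ n₀ / (1 + c * abar)^(m+1) := by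
            rw [div_div, pow_succ]
  -- contradiction
  have hq1 : (1:ℝ) < 1 + c * abar := by nlinarith
  obtain ⟨m, hm⟩ := pow_unbounded_of_one_lt (δ n₀ / δinf) hq1
  have h7 : (0:ℝ) < (1 + c * abar)^m := by positivity
  have h8 : δ n₀ / (1 + c * abar)^m < δinf := by
    rw [div_lt_iff₀ h7]
    rw [div_lt_iff₀ hδinfpos] at hm
    nlinarith
  have h9 := hgeo m
  have h10 := hδinfle (n₀ + m)
  linarith

end ResolventAux

theorem resolvent_exists_unique_in_C
    {X : Type*} [NormedAddCommGroup X] [NormedSpace ℝ X] [CompleteSpace X]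
    (C : Set X) (hC_closed : IsClosed C) (hC_convex : Convex ℝ C)
    (hC_ne : C.Nonempty)
    (T : X → X) (hT_maps : ∀ x ∈ C, T x ∈ C)
    (hT_cont : ContinuousOn T C)
    (hT_psc : ∀ x ∈ C, ∀ y ∈ C, ∀ t : ℝ, 0 < t →
      t * ‖x - y‖ ≤ ‖(t + 1) • (x - y) - (T x - T y)‖) :
    ∀ lam : ℝ, 0 < lam → ∀ y ∈ C,
      ∃! z : X, z ∈ C ∧ z + lam • (z - T z) = y := by
  intro lam hlam y hy
  have hl1 : (0:ℝ) < 1 + lam := by linarith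
  set c : ℝ := (1 + lam)⁻¹ with hc_def
  have hc : 0 < c := inv_pos.mpr hl1
  set P : X → X := fun z => (1 + lam)⁻¹ • (y + lam • T z) with hP_def
  set Q : X → X := fun z => z - P z with hQ_def
  -- P maps C into C
  have hPC : ∀ x ∈ C, P x ∈ C := by
    intro x hx
    have h1 : P x = (1 + lam)⁻¹ • y + (lam / (1 + lam)) • T x := by
      simp only [hP_def, smul_add, smul_smul]
      rw [div_eq_inv_mul]
    rw [h1]
    have := hC_convex hy (hT_maps x hx) (le_of_lt (inv_pos.mpr hl1))
      (le_of_lt (div_pos hlam hl1)) (by field_simp)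
    exact this
  -- continuity of Q on C
  have hQcont : ContinuousOn Q C := by
    apply ContinuousOn.sub continuousOn_id
    exact (continuousOn_const.add (hT_cont.const_smul lam)).const_smul _
  -- invariance
  have hInv : ∀ x ∈ C, ∀ h : ℝ, 0 ≤ h → h ≤ 1 → x - h • Q x ∈ C := by
    intro x hx h h0 h1
    have hxq : x - h • Q x = (1 - h) • x + h • P x := by
      simp only [hQ_def]
      module
    rw [hxq]
    exact hC_convex hx (hPC x hx) (by linarith) h0 (by ring)
  -- strong accretivity
  have hSA : ∀ u ∈ C, ∀ v ∈ C, ∀ σ : ℝ, 0 ≤ σ →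
      (1 + c * σ) * ‖u - v‖ ≤ ‖(u - v) + σ • (Q u - Q v)‖ := by
    intro u hu v hv σ hσ
    rcases eq_or_lt_of_le hσ with h0 | hσpos
    · simp [← h0]
    · set t : ℝ := (1 + lam + σ) / (σ * lam) with ht_def
      have hσl : 0 < σ * lam := mul_pos hσpos hlam
      have ht : 0 < t := div_pos (by linarith) hσl
      set μ : ℝ := σ * lam / (1 + lam) with hμ_def
      have hμ : 0 < μ := div_pos hσl hl1
      have hkey : (u - v) + σ • (Q u - Q v) = μ • ((t + 1) • (u - v) - (T u - T v)) := by
        simp only [hQ_def, hP_def, hμ_def, ht_def]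
        match_scalars
        all_goals (field_simp; try ring)
      have h2 : ‖(u - v) + σ • (Q u - Q v)‖ = μ * ‖(t + 1) • (u - v) - (T u - T v)‖ := by
        rw [hkey, norm_smul, Real.norm_eq_abs, abs_of_pos hμ]
      have h3 := hT_psc u hu v hv t ht
      have h4 : (1 + c * σ) = μ * t := by
        simp only [hμ_def, ht_def, hc_def]
        field_simp
      rw [h2, h4]
      calc μ * t * ‖u - v‖ = μ * (t * ‖u - v‖) := by ring
        _ ≤ μ * ‖(t + 1) • (u - v) - (T u - T v)‖ := by
            exact mul_le_mul_of_nonneg_left h3 (le_of_lt hμ)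
  -- existence
  obtain ⟨z, hzC, hzQ⟩ := res_exists_zero hC_closed hC_ne hc hQcont hInv hSA
  -- z = P z means z solves the equation
  have hzP : z = P z := by
    have h0 : z - P z = 0 := by simpa [hQ_def] using hzQ
    exact sub_eq_zero.mp h0
  have heq : ∀ x : X, x = P x ↔ x + lam • (x - T x) = y := by
    intro x
    constructor
    · intro h
      have h' := congrArg (fun v : X => (1 + lam) • v) h
      simp only [hP_def, smul_smul, mul_inv_cancel₀ (ne_of_gt hl1), one_smul] at h'
      linear_combination (norm := module) h'
    · intro h
      have h2 : y + lam • T x = (1 + lam) • x := by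
        linear_combination (norm := module) h.symm
      show x = P x
      simp only [hP_def, h2, smul_smul, inv_mul_cancel₀ (ne_of_gt hl1), one_smul]
  refine ⟨z, ⟨hzC, (heq z).mp hzP⟩, ?_⟩
  rintro z' ⟨hz'C, hz'eq⟩
  have hz'Q : Q z' = 0 := by
    have h0 := (heq z').mpr hz'eq
    simp only [hQ_def]
    rw [sub_eq_zero]
    exact h0
  have hz1Q : Q z = 0 := by
    simp only [hQ_def]
    rw [sub_eq_zero]
    exact hzP
  have := hSA z' hz'C z hzC 1 zero_le_one
  rw [hz'Q, hz1Q] at this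
  simp only [sub_zero, smul_zero, add_zero] at this
  have hnn : ‖z' - z‖ ≤ 0 := by nlinarith [norm_nonneg (z' - z)]
  have : z' - z = 0 := norm_le_zero_iff.mp hnn
  exact sub_eq_zero.mp this
end

section
/- Let X be a real Banach space which is uniformly convex and uniformly smooth with modulus τ. Let C ⊆ X be a closed, convex, bounded, nonempty subset. Let A ⊆ X × X be an accretive operator such that for every λ > 0 and every y ∈ C there exists a point J_λ y ∈ C with (J_λ y, (y − J_λ y)/λ) ∈ A (i.e. C ⊆ ran(Id + λA) and the resolvent J_{λA} maps C into C). Let x ∈ C. Then for every sequence (λ_n) ⊆ (0,∞) with λ_n → ∞, the sequence (J_{λ_n} x) is Cauchy. -/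
open Filter

section ResolventHelpers

variable {X : Type*} [NormedAddCommGroup X] [NormedSpace ℝ X]

lemma respriv_unit_norm {z : X} (hz : z ≠ 0) : ‖‖z‖⁻¹ • z‖ = 1 := by
  rw [norm_smul, norm_inv, norm_norm, inv_mul_cancel₀ (norm_ne_zero_iff.2 hz)]

lemma respriv_unit_diff_bound (a c : X) (ha : a ≠ 0) (hc : c ≠ 0) :
    ‖‖a‖⁻¹ • a - ‖c‖⁻¹ • c‖ ≤ 2 * ‖a - c‖ / ‖a‖ := by
  have hna : (0:ℝ) < ‖a‖ := norm_pos_iff.2 ha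
  have hnc : (0:ℝ) < ‖c‖ := norm_pos_iff.2 hc
  have h1 : ‖a‖⁻¹ • a - ‖c‖⁻¹ • c = ‖a‖⁻¹ • (a - c) + (‖a‖⁻¹ - ‖c‖⁻¹) • c := by
    rw [smul_sub, sub_smul]; abel
  rw [h1]
  have h2 : ‖(‖a‖⁻¹ - ‖c‖⁻¹) • c‖ ≤ ‖a - c‖ / ‖a‖ := by
    rw [norm_smul, Real.norm_eq_abs]
    have : |‖a‖⁻¹ - ‖c‖⁻¹| = |‖c‖ - ‖a‖| / (‖a‖ * ‖c‖) := by
      rw [eq_div_iff (by positivity), ← abs_of_pos (show (0:ℝ) < ‖a‖ * ‖c‖ by positivity),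
        ← abs_mul]
      congr 1
      field_simp
    rw [this]
    have h3 : |‖c‖ - ‖a‖| ≤ ‖a - c‖ := by
      rw [abs_sub_comm]; exact abs_norm_sub_norm_le a c
    calc |‖c‖ - ‖a‖| / (‖a‖ * ‖c‖) * ‖c‖ = |‖c‖ - ‖a‖| / ‖a‖ := by field_simp
      _ ≤ ‖a - c‖ / ‖a‖ := by gcongr
  calc ‖‖a‖⁻¹ • (a - c) + (‖a‖⁻¹ - ‖c‖⁻¹) • c‖
      ≤ ‖‖a‖⁻¹ • (a - c)‖ + ‖(‖a‖⁻¹ - ‖c‖⁻¹) • c‖ := norm_add_le _ _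
    _ ≤ ‖a - c‖ / ‖a‖ + ‖a - c‖ / ‖a‖ := by
        gcongr
        rw [norm_smul, norm_inv, norm_norm, inv_mul_eq_div]
    _ = 2 * ‖a - c‖ / ‖a‖ := by ring

variable {τ : ℝ → ℝ} (hτ_pos : ∀ ε : ℝ, 0 < ε → 0 < τ ε)
variable (hX_us : ∀ ε : ℝ, 0 < ε → ∀ x y : X, ‖x‖ = 1 → ‖y‖ ≤ τ ε →
      ‖x + y‖ + ‖x - y‖ ≤ 2 + ε * ‖y‖)

include hτ_pos hX_us in
lemma respriv_lemA (z w : X) (hz : z ≠ 0) (H : ∀ t : ℝ, 0 < t → ‖z‖ ≤ ‖z + t • w‖)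
    (f : X →L[ℝ] ℝ) (hf : ‖f‖ = 1) (hfz : f z = ‖z‖) : 0 ≤ f w := by
  rcases eq_or_ne w 0 with rfl | hw
  · simp
  have hnz : (0:ℝ) < ‖z‖ := norm_pos_iff.2 hz
  have hnw : (0:ℝ) < ‖w‖ := norm_pos_iff.2 hw
  have key : ∀ ε : ℝ, 0 < ε → -(ε * ‖w‖) ≤ f w := by
    intro ε hε
    set c : ℝ := τ ε / ‖w‖ with hc
    have hcpos : 0 < c := div_pos (hτ_pos ε hε) hnw
    set u : X := ‖z‖⁻¹ • z with hu
    set y : X := c • w with hy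
    have hun : ‖u‖ = 1 := respriv_unit_norm hz
    have hyn : ‖y‖ = τ ε := by
      rw [hy, norm_smul, Real.norm_eq_abs, abs_of_pos hcpos, hc]
      field_simp
    have hfu : f u = 1 := by
      rw [hu, map_smul, smul_eq_mul, hfz, inv_mul_cancel₀ hnz.ne']
    have h1 : (1:ℝ) ≤ ‖u + y‖ := by
      have huy : u + y = ‖z‖⁻¹ • (z + (c * ‖z‖) • w) := by
        rw [hu, hy, smul_add, smul_smul]
        congr 2
        field_simp
      rw [huy, norm_smul, norm_inv, norm_norm]
      calc (1:ℝ) = ‖z‖⁻¹ * ‖z‖ := (inv_mul_cancel₀ hnz.ne').symm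
        _ ≤ ‖z‖⁻¹ * ‖z + (c * ‖z‖) • w‖ := by
            gcongr
            exact H _ (by positivity)
    have h2 := hX_us ε hε u y hun (le_of_eq hyn)
    have h3 : f (u - y) ≤ ‖u - y‖ := by
      calc f (u - y) ≤ |f (u - y)| := le_abs_self _
        _ ≤ ‖f‖ * ‖u - y‖ := f.le_opNorm _
        _ = ‖u - y‖ := by rw [hf, one_mul]
    have h4 : f (u - y) = 1 - c * f w := by
      rw [map_sub, hfu, hy, map_smul, smul_eq_mul]
    have h5 : 1 - c * f w ≤ 1 + ε * τ ε := by
      rw [← h4]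
      calc f (u - y) ≤ ‖u - y‖ := h3
        _ ≤ 2 + ε * ‖y‖ - ‖u + y‖ := by linarith
        _ ≤ 1 + ε * τ ε := by rw [hyn]; linarith
    have h6 : -(ε * τ ε) ≤ c * f w := by linarith
    have h7 : c * (-(ε * ‖w‖)) = -(ε * τ ε) := by
      rw [hc]; field_simp
    nlinarith [h6, h7, hcpos]
  by_contra hcon
  push_neg at hcon
  have hpos : 0 < -f w / (2 * ‖w‖) := div_pos (by linarith) (by positivity)
  have hk := key _ hpos
  have heq : -(-f w / (2 * ‖w‖) * ‖w‖) = f w / 2 := by field_simp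
  rw [heq] at hk
  linarith

include hτ_pos hX_us in
lemma respriv_dual_cmp (ε : ℝ) (hε : 0 < ε) (u v : X) (f h : X →L[ℝ] ℝ)
    (hu : ‖u‖ = 1) (hf : ‖f‖ = 1) (hh : ‖h‖ = 1)
    (hfu : f u = 1) (hhv : h v = 1) (w : X) :
    f w - h w ≤ (ε + ‖u - v‖ / τ ε) * ‖w‖ := by
  have hτ := hτ_pos ε hε
  have key : ∀ y : X, ‖y‖ ≤ τ ε → f y - h y ≤ ε * ‖y‖ + ‖u - v‖ := by
    intro y hy
    have h2 := hX_us ε hε u y hu hy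
    have hfy : f y ≤ ‖u + y‖ - 1 := by
      have : f (u + y) ≤ ‖u + y‖ := by
        calc f (u + y) ≤ |f (u + y)| := le_abs_self _
          _ ≤ ‖f‖ * ‖u + y‖ := f.le_opNorm _
          _ = ‖u + y‖ := by rw [hf, one_mul]
      rw [map_add, hfu] at this; linarith
    have hhy : h (u - y) ≤ ‖u - y‖ := by
      calc h (u - y) ≤ |h (u - y)| := le_abs_self _
        _ ≤ ‖h‖ * ‖u - y‖ := h.le_opNorm _
        _ = ‖u - y‖ := by rw [hh, one_mul]
    have hhu : 1 - ‖u - v‖ ≤ h u := by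
      have : h (v - u) ≤ ‖u - v‖ := by
        calc h (v - u) ≤ |h (v - u)| := le_abs_self _
          _ ≤ ‖h‖ * ‖v - u‖ := h.le_opNorm _
          _ = ‖u - v‖ := by rw [hh, one_mul, norm_sub_rev]
      rw [map_sub, hhv] at this; linarith
    have : h (u - y) = h u - h y := by rw [map_sub]
    linarith
  rcases eq_or_ne w 0 with rfl | hw
  · simp
  have hnw : (0:ℝ) < ‖w‖ := norm_pos_iff.2 hw
  set y : X := (τ ε / ‖w‖) • w with hy
  have hyn : ‖y‖ = τ ε := by
    rw [hy, norm_smul, Real.norm_eq_abs, abs_of_pos (by positivity)]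
    field_simp
  have h1 := key y (le_of_eq hyn)
  have h2 : f y - h y = (τ ε / ‖w‖) * (f w - h w) := by
    rw [hy, map_smul, map_smul, smul_eq_mul, smul_eq_mul]; ring
  rw [h2, hyn] at h1
  rw [div_mul_eq_mul_div, div_le_iff₀ hnw] at h1
  have h5 : τ ε * ((ε + ‖u - v‖ / τ ε) * ‖w‖) = (ε * τ ε + ‖u - v‖) * ‖w‖ := by
    field_simp
  rw [← mul_le_mul_iff_right₀ hτ, h5]
  nlinarith [h1]

include hτ_pos hX_us in
lemma respriv_smooth_upper (ε : ℝ) (hε : 0 < ε) (b v : X) (g : X →L[ℝ] ℝ) (t : ℝ)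
    (hb : b ≠ 0) (hg : ‖g‖ = 1) (hgb : g b = ‖b‖) (ht : 0 ≤ t)
    (hcond : t * ‖v‖ ≤ τ ε * ‖b‖) :
    ‖b + t • v‖ ≤ ‖b‖ + t * g v + ε * (t * ‖v‖) := by
  have hnb : (0:ℝ) < ‖b‖ := norm_pos_iff.2 hb
  set u : X := ‖b‖⁻¹ • b with hu
  set y : X := (t / ‖b‖) • v with hy
  have hun : ‖u‖ = 1 := respriv_unit_norm hb
  have hyn : ‖y‖ = t * ‖v‖ / ‖b‖ := by
    rw [hy, norm_smul, Real.norm_eq_abs, abs_of_nonneg (by positivity)]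
    ring
  have hyτ : ‖y‖ ≤ τ ε := by rw [hyn, div_le_iff₀ hnb]; nlinarith
  have hgu : g u = 1 := by
    rw [hu, map_smul, smul_eq_mul, hgb, inv_mul_cancel₀ hnb.ne']
  have h2 := hX_us ε hε u y hun hyτ
  have h3 : g (u - y) ≤ ‖u - y‖ := by
    calc g (u - y) ≤ |g (u - y)| := le_abs_self _
      _ ≤ ‖g‖ * ‖u - y‖ := g.le_opNorm _
      _ = ‖u - y‖ := by rw [hg, one_mul]
  have h4 : g (u - y) = 1 - g y := by rw [map_sub, hgu]
  have h5 : ‖u + y‖ ≤ 1 + g y + ε * ‖y‖ := by linarith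
  have h6 : b + t • v = ‖b‖ • (u + y) := by
    rw [smul_add, hu, hy, smul_smul, smul_smul]
    congr 2
    · rw [mul_inv_cancel₀ hnb.ne', one_smul]
    · field_simp
  have h7 : g y = t / ‖b‖ * g v := by rw [hy, map_smul, smul_eq_mul]
  rw [h6, norm_smul, Real.norm_eq_abs, abs_of_pos hnb]
  calc ‖b‖ * ‖u + y‖ ≤ ‖b‖ * (1 + g y + ε * ‖y‖) := by nlinarith
    _ = ‖b‖ + t * g v + ε * (t * ‖v‖) := by
        rw [h7, hyn]
        field_simp

end ResolventHelpers

set_option maxHeartbeats 2000000 in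
theorem resolvents_cauchy
    {X : Type*} [NormedAddCommGroup X] [NormedSpace ℝ X] [CompleteSpace X]
    (η : ℝ → ℝ) (hη_range : ∀ ε : ℝ, 0 < ε → ε ≤ 2 → 0 < η ε ∧ η ε ≤ 1)
    (hX_uc : ∀ ε : ℝ, 0 < ε → ε ≤ 2 → ∀ x y : X, ‖x‖ ≤ 1 → ‖y‖ ≤ 1 →
      ε ≤ ‖x - y‖ → ‖(1 / 2 : ℝ) • (x + y)‖ ≤ 1 - η ε)
    (τ : ℝ → ℝ) (hτ_pos : ∀ ε : ℝ, 0 < ε → 0 < τ ε)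
    (hX_us : ∀ ε : ℝ, 0 < ε → ∀ x y : X, ‖x‖ = 1 → ‖y‖ ≤ τ ε →
      ‖x + y‖ + ‖x - y‖ ≤ 2 + ε * ‖y‖)
    (C : Set X) (hC_closed : IsClosed C) (hC_convex : Convex ℝ C)
    (hC_bdd : Bornology.IsBounded C) (hC_ne : C.Nonempty)
    (A : Set (X × X))
    (hA_acc : ∀ lam : ℝ, 0 < lam → ∀ p ∈ A, ∀ q ∈ A,
      ‖p.1 - q.1‖ ≤ ‖p.1 - q.1 + lam • (p.2 - q.2)‖)
    (J : ℝ → X → X)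
    (hJ : ∀ lam : ℝ, 0 < lam → ∀ y ∈ C,
      J lam y ∈ C ∧ (J lam y, (1 / lam) • (y - J lam y)) ∈ A)
    (x : X) (hx : x ∈ C) :
    ∀ lamSeq : ℕ → ℝ, (∀ n, 0 < lamSeq n) →
      Filter.Tendsto lamSeq Filter.atTop Filter.atTop →
      CauchySeq (fun n => J (lamSeq n) x) := by
  intro lamSeq hlam hlamTop
  classical
  obtain ⟨D₀, hD₀⟩ := Metric.isBounded_iff.1 hC_bdd
  obtain ⟨D, hD⟩ : ∃ D : ℝ, D = max D₀ 1 := ⟨_, rfl⟩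
  have hD1 : (1:ℝ) ≤ D := hD ▸ le_max_right _ _
  have hDpos : (0:ℝ) < D := lt_of_lt_of_le one_pos hD1
  have hCD : ∀ u ∈ C, ∀ v ∈ C, ‖u - v‖ ≤ D := by
    intro u hu v hv
    rw [← dist_eq_norm]
    exact le_trans (hD₀ hu hv) (hD ▸ le_max_left _ _)
  obtain ⟨xs, hxs⟩ : ∃ xs : ℕ → X, xs = fun n => J (lamSeq n) x := ⟨_, rfl⟩
  have hxsC : ∀ n, xs n ∈ C := fun n => hxs ▸ (hJ _ (hlam n) x hx).1
  have hxsval : ∀ n, xs n = J (lamSeq n) x := fun n => by rw [hxs]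
  -- uniqueness of resolvents
  have hres_uniq : ∀ lam : ℝ, 0 < lam → ∀ y ∈ C, ∀ u : X,
      (u, (1 / lam) • (y - u)) ∈ A → u = J lam y := by
    intro lam hlam' y hy u hu
    have hmem := (hJ lam hlam' y hy).2
    have hineq := hA_acc lam hlam' (u, (1 / lam) • (y - u)) hu
      (J lam y, (1 / lam) • (y - J lam y)) hmem
    simp only at hineq
    have hcalc : u - J lam y
        + lam • ((1 / lam) • (y - u) - (1 / lam) • (y - J lam y)) = 0 := by
      have h1 : (1 / lam) • (y - u) - (1 / lam) • (y - J lam y)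
          = (1 / lam) • (J lam y - u) := by
        rw [← smul_sub]
        congr 1
        abel
      rw [h1, smul_smul]
      have h2 : lam * (1 / lam) = 1 := by field_simp
      rw [h2, one_smul]
      abel
    rw [hcalc, norm_zero] at hineq
    exact sub_eq_zero.1 (norm_le_zero_iff.1 hineq)
  -- nonexpansiveness
  have hnonexp : ∀ lam : ℝ, 0 < lam → ∀ y ∈ C, ∀ z ∈ C,
      ‖J lam y - J lam z‖ ≤ ‖y - z‖ := by
    intro lam hlam' y hy z hz
    have h1 := (hJ lam hlam' y hy).2
    have h2 := (hJ lam hlam' z hz).2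
    have hineq := hA_acc lam hlam' (J lam y, (1 / lam) • (y - J lam y)) h1
      (J lam z, (1 / lam) • (z - J lam z)) h2
    simp only at hineq
    have hcalc : J lam y - J lam z
        + lam • ((1 / lam) • (y - J lam y) - (1 / lam) • (z - J lam z)) = y - z := by
      have h3 : (1 / lam) • (y - J lam y) - (1 / lam) • (z - J lam z)
          = (1 / lam) • ((y - J lam y) - (z - J lam z)) := by
        rw [← smul_sub]
      rw [h3, smul_smul]
      have h4 : lam * (1 / lam) = 1 := by field_simp
      rw [h4, one_smul]
      abel
    rw [hcalc] at hineq
    exact hineq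
  obtain ⟨Phi, hPhi⟩ : ∃ Phi : X → ℝ,
      Phi = fun y => Filter.limsup (fun n => ‖y - xs n‖) Filter.atTop := ⟨_, rfl⟩
  have hbddu : ∀ y ∈ C, Filter.IsBoundedUnder (· ≤ ·) Filter.atTop
      (fun n => ‖y - xs n‖) := by
    intro y hy
    exact Filter.isBoundedUnder_of ⟨D, fun n => hCD y hy (xs n) (hxsC n)⟩
  have hPhi_le : ∀ y : X, ∀ r : ℝ,
      (∀ᶠ n in Filter.atTop, ‖y - xs n‖ ≤ r) → Phi y ≤ r := by
    intro y r h
    simp only [hPhi]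
    exact Filter.limsup_le_of_le
      (Filter.IsCoboundedUnder.of_frequently_ge
        (Filter.Frequently.of_forall fun n => norm_nonneg _)) h
  have hPhi_ev : ∀ y ∈ C, ∀ e : ℝ, 0 < e →
      ∀ᶠ n in Filter.atTop, ‖y - xs n‖ < Phi y + e := by
    intro y hy e he
    exact Filter.eventually_lt_of_limsup_lt
      (show Filter.limsup (fun n => ‖y - xs n‖) Filter.atTop < Phi y + e by
        simp only [hPhi]; linarith) (hbddu y hy)
  have hPhi0 : ∀ y ∈ C, 0 ≤ Phi y := by
    intro y hy
    simp only [hPhi]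
    exact Filter.le_limsup_of_frequently_le
      (Filter.Frequently.of_forall fun n => norm_nonneg _) (hbddu y hy)
  have hPhiD : ∀ y ∈ C, Phi y ≤ D := fun y hy =>
    hPhi_le y D (Filter.Eventually.of_forall fun n => hCD y hy (xs n) (hxsC n))
  obtain ⟨m, hm⟩ : ∃ m : ℝ, m = sInf (Phi '' C) := ⟨_, rfl⟩
  have hPhiCne : (Phi '' C).Nonempty := ⟨Phi x, x, hx, rfl⟩
  have hPhiCbdd : BddBelow (Phi '' C) := by
    refine ⟨0, ?_⟩
    rintro a ⟨y, hy, rfl⟩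
    exact hPhi0 y hy
  have hm_le : ∀ y ∈ C, m ≤ Phi y := fun y hy => hm ▸ csInf_le hPhiCbdd ⟨y, hy, rfl⟩
  have hm0 : 0 ≤ m := hm ▸ le_csInf hPhiCne (by rintro a ⟨y, hy, rfl⟩; exact hPhi0 y hy)
  have hmD : m ≤ D := le_trans (hm_le x hx) (hPhiD x hx)
  have key : ∀ s : ℝ, 0 < s → s ≤ D → ∃ p ∈ C, Phi p ≤ s / 4 := by
    intro s hs hsD
    obtain ⟨θ, hθdef⟩ : ∃ θ : ℝ, θ = s / 32 := ⟨_, rfl⟩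
    have hθpos : 0 < θ := by rw [hθdef]; positivity
    obtain ⟨ε, hεdef⟩ : ∃ ε : ℝ, ε = s / (32 * D) := ⟨_, rfl⟩
    have hεpos : 0 < ε := by rw [hεdef]; positivity
    obtain ⟨τ₀, hτ₀def⟩ : ∃ τ₀ : ℝ, τ₀ = τ ε := ⟨_, rfl⟩
    have hτ₀pos : 0 < τ₀ := hτ₀def ▸ hτ_pos ε hεpos
    obtain ⟨t, htdef⟩ : ∃ t : ℝ, t = min (τ₀ * θ / D) (s / (32 * D)) := ⟨_, rfl⟩
    have htpos : 0 < t := htdef ▸ lt_min (by positivity) (by positivity)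
    have htD : t * D ≤ s / 32 := by
      have h1 : t ≤ s / (32 * D) := htdef ▸ min_le_right _ _
      rw [le_div_iff₀ (by positivity)] at h1
      linarith
    have htτθ : t * D ≤ τ₀ * θ := by
      have h1 : t ≤ τ₀ * θ / D := htdef ▸ min_le_left _ _
      rw [le_div_iff₀ hDpos] at h1
      linarith
    have ht1 : t ≤ 1 := by
      have h1 : t ≤ s / (32 * D) := htdef ▸ min_le_right _ _
      rw [le_div_iff₀ (by positivity)] at h1
      nlinarith
    obtain ⟨ρ, hρdef⟩ : ∃ ρ : ℝ, ρ = min (θ / 2) (θ * τ₀ * s / (256 * D)) := ⟨_, rfl⟩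
    have hρpos : 0 < ρ := hρdef ▸ lt_min (by positivity) (by positivity)
    have hρθ2 : ρ ≤ θ / 2 := hρdef ▸ min_le_left _ _
    have hρD : ρ ≤ D := by
      have : θ / 2 ≤ D := by
        rw [hθdef]
        linarith
      linarith
    have hρE : 4 * ρ * D / (θ * τ₀) ≤ s / 64 := by
      have h1 : ρ ≤ θ * τ₀ * s / (256 * D) := hρdef ▸ min_le_right _ _
      rw [le_div_iff₀ (by positivity)] at h1
      rw [div_le_iff₀ (by positivity)]
      nlinarith
    obtain ⟨η₀, hη₀def⟩ : ∃ η₀ : ℝ, η₀ = η (ρ / (2 * D)) := ⟨_, rfl⟩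
    have hη₀arg_pos : 0 < ρ / (2 * D) := by positivity
    have hη₀arg_le : ρ / (2 * D) ≤ 2 := by
      rw [div_le_iff₀ (by positivity)]
      linarith
    obtain ⟨hη₀pos, hη₀le⟩ : 0 < η₀ ∧ η₀ ≤ 1 :=
      hη₀def ▸ hη_range _ hη₀arg_pos hη₀arg_le
    obtain ⟨δ, hδdef⟩ : ∃ δ : ℝ, δ = min (min (ρ / 8) (ρ * η₀ / 16)) (t * s / 64) :=
      ⟨_, rfl⟩
    have hδpos : 0 < δ := hδdef ▸
      lt_min (lt_min (by positivity) (by positivity)) (by positivity)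
    have hδρ8 : δ ≤ ρ / 8 := hδdef ▸ le_trans (min_le_left _ _) (min_le_left _ _)
    have hδη : δ ≤ ρ * η₀ / 16 := hδdef ▸ le_trans (min_le_left _ _) (min_le_right _ _)
    have hδt : δ ≤ t * s / 64 := hδdef ▸ min_le_right _ _
    have hδs : δ ≤ s / 32 := by
      have : ρ / 8 ≤ s / 32 := by
        rw [hθdef] at hρθ2
        linarith
      linarith
    obtain ⟨p, hpC, hpδ⟩ : ∃ p ∈ C, Phi p < m + δ := by
      obtain ⟨a, ⟨p, hpC, rfl⟩, ha⟩ :=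
        exists_lt_of_csInf_lt hPhiCne (hm ▸ lt_add_of_pos_right m hδpos)
      exact ⟨p, hpC, by rw [hm]; exact ha⟩
    refine ⟨p, hpC, ?_⟩
    -- Step 1: uniform convexity: approximate minimizers are close
    have hdiam : ∀ y₁ ∈ C, ∀ y₂ ∈ C, Phi y₁ < m + δ → Phi y₂ < m + δ →
        ‖y₁ - y₂‖ ≤ ρ := by
      intro y₁ hy₁ y₂ hy₂ h₁ h₂
      by_contra hcon
      push_neg at hcon
      rcases le_or_gt m (ρ / 4) with hm4 | hm4
      · -- small infimum case
        obtain ⟨n, hn₁, hn₂⟩ :=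
          ((hPhi_ev y₁ hy₁ δ hδpos).and (hPhi_ev y₂ hy₂ δ hδpos)).exists
        have htri : ‖y₁ - y₂‖ ≤ ‖y₁ - xs n‖ + ‖y₂ - xs n‖ := by
          have hsplit : y₁ - y₂ = (y₁ - xs n) - (y₂ - xs n) := by abel
          rw [hsplit]
          exact norm_sub_le _ _
        linarith
      · -- main case : use uniform convexity
        have hRpos : 0 < m + 2 * δ := by linarith
        have hRD : m + 2 * δ ≤ 2 * D := by
          have : δ ≤ D := by linarith [hρD]
          linarith
        have hε₀pos : 0 < ρ / (2 * D) := by positivity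
        have hε₀le : ρ / (2 * D) ≤ 2 := by
          rw [div_le_iff₀ (by positivity)]
          linarith [hρD]
        have hev2 : ∀ᶠ n in Filter.atTop,
            ‖(1 / 2 : ℝ) • (y₁ + y₂) - xs n‖ ≤ (m + 2 * δ) * (1 - η₀) := by
          filter_upwards [hPhi_ev y₁ hy₁ δ hδpos, hPhi_ev y₂ hy₂ δ hδpos]
            with n hn₁ hn₂
          have hb₁ : ‖y₁ - xs n‖ ≤ m + 2 * δ := by linarith
          have hb₂ : ‖y₂ - xs n‖ ≤ m + 2 * δ := by linarith
          have hu1 : ‖(m + 2 * δ)⁻¹ • (y₁ - xs n)‖ ≤ 1 := by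
            rw [norm_smul, Real.norm_eq_abs, abs_of_pos (by positivity),
              inv_mul_le_iff₀ hRpos, mul_one]
            exact hb₁
          have hu2 : ‖(m + 2 * δ)⁻¹ • (y₂ - xs n)‖ ≤ 1 := by
            rw [norm_smul, Real.norm_eq_abs, abs_of_pos (by positivity),
              inv_mul_le_iff₀ hRpos, mul_one]
            exact hb₂
          have hsep : ρ / (2 * D) ≤
              ‖(m + 2 * δ)⁻¹ • (y₁ - xs n) - (m + 2 * δ)⁻¹ • (y₂ - xs n)‖ := by
            rw [← smul_sub, norm_smul, Real.norm_eq_abs, abs_of_pos (by positivity)]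
            have heq : (y₁ - xs n) - (y₂ - xs n) = y₁ - y₂ := by abel
            rw [heq, inv_mul_eq_div]
            exact div_le_div₀ (norm_nonneg _) hcon.le hRpos hRD
          have huc := hX_uc (ρ / (2 * D)) hε₀pos hε₀le _ _ hu1 hu2 hsep
          rw [← hη₀def] at huc
          have hscale : (1 / 2 : ℝ) • ((m + 2 * δ)⁻¹ • (y₁ - xs n)
                + (m + 2 * δ)⁻¹ • (y₂ - xs n))
              = (m + 2 * δ)⁻¹ • ((1 / 2 : ℝ) • (y₁ + y₂) - xs n) := by
            module
          rw [hscale] at huc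
          rw [norm_smul, Real.norm_eq_abs, abs_of_pos (by positivity),
            inv_mul_le_iff₀ hRpos] at huc
          exact huc
        have hmidC : (1 / 2 : ℝ) • (y₁ + y₂) ∈ C := by
          have hmideq : (1 / 2 : ℝ) • (y₁ + y₂)
              = (1 / 2 : ℝ) • y₁ + (1 / 2 : ℝ) • y₂ := smul_add _ _ _
          rw [hmideq]
          exact hC_convex hy₁ hy₂ (by norm_num) (by norm_num) (by norm_num)
        have hfin : m ≤ (m + 2 * δ) * (1 - η₀) :=
          (hm_le _ hmidC).trans (hPhi_le _ _ hev2)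
        nlinarith [hfin, hδη, mul_lt_mul_of_pos_right hm4 hη₀pos,
          mul_nonneg hδpos.le hη₀pos.le, mul_pos hρpos hη₀pos]
    -- Step 2: p is an approximate fixed point of all resolvents
    have hfixPhi : ∀ s' : ℝ, 0 < s' → Phi (J s' p) ≤ Phi p := by
      intro s' hs'
      have key2 : ∀ e : ℝ, 0 < e → Phi (J s' p) ≤ Phi p + 2 * e := by
        intro e he
        apply hPhi_le
        have hev1 : ∀ᶠ n in Filter.atTop, s' ≤ lamSeq n :=
          hlamTop.eventually_ge_atTop s'
        have hev2 : ∀ᶠ n in Filter.atTop, s' * D / e ≤ lamSeq n :=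
          hlamTop.eventually_ge_atTop _
        filter_upwards [hev1, hev2, hPhi_ev p hpC e he] with n h1 h2 h3
        have hνpos := hlam n
        have hrat0 : 0 ≤ s' / lamSeq n := by positivity
        have hrat1 : s' / lamSeq n ≤ 1 := by
          rw [div_le_one hνpos]
          exact h1
        have hwC : (s' / lamSeq n) • x + (1 - s' / lamSeq n) • xs n ∈ C :=
          hC_convex hx (hxsC n) hrat0 (by linarith) (by ring)
        have hxw : xs n = J s' ((s' / lamSeq n) • x + (1 - s' / lamSeq n) • xs n) := by
          apply hres_uniq s' hs' _ hwC
          have hmem := (hJ (lamSeq n) hνpos x hx).2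
          rw [← hxsval n] at hmem
          have heq : (1 / s') • (((s' / lamSeq n) • x + (1 - s' / lamSeq n) • xs n)
              - xs n) = (1 / lamSeq n) • (x - xs n) := by
            have h4 : ((s' / lamSeq n) • x + (1 - s' / lamSeq n) • xs n) - xs n
                = (s' / lamSeq n) • (x - xs n) := by
              rw [smul_sub]
              module
            rw [h4, smul_smul]
            congr 1
            field_simp
          rw [heq]
          exact hmem
        have hstep : ‖J s' p - xs n‖ ≤ ‖p - xs n‖ + (s' / lamSeq n) * ‖x - xs n‖ := by
          calc ‖J s' p - xs n‖
              = ‖J s' p - J s' ((s' / lamSeq n) • x + (1 - s' / lamSeq n) • xs n)‖ := by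
                rw [← hxw]
            _ ≤ ‖p - ((s' / lamSeq n) • x + (1 - s' / lamSeq n) • xs n)‖ :=
                hnonexp s' hs' p hpC _ hwC
            _ ≤ ‖p - xs n‖ + (s' / lamSeq n) * ‖x - xs n‖ := by
                have h5 : p - ((s' / lamSeq n) • x + (1 - s' / lamSeq n) • xs n)
                    = (p - xs n) - (s' / lamSeq n) • (x - xs n) := by
                  rw [smul_sub]
                  module
                rw [h5]
                refine le_trans (norm_sub_le _ _) ?_
                rw [norm_smul, Real.norm_eq_abs, abs_of_nonneg hrat0]
        have hlast : (s' / lamSeq n) * ‖x - xs n‖ ≤ e := by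
          have hxD : ‖x - xs n‖ ≤ D := hCD x hx (xs n) (hxsC n)
          have h6 : s' * D ≤ e * lamSeq n := by
            rw [div_le_iff₀ he] at h2
            linarith
          calc (s' / lamSeq n) * ‖x - xs n‖ ≤ (s' / lamSeq n) * D := by
                exact mul_le_mul_of_nonneg_left hxD hrat0
            _ ≤ e := by
                rw [div_mul_eq_mul_div, div_le_iff₀ hνpos]
                linarith
        linarith
      by_contra hcon
      push_neg at hcon
      have := key2 ((Phi (J s' p) - Phi p) / 4) (by linarith)
      linarith
    have hJsp : ∀ s' : ℝ, 0 < s' → ‖J s' p - p‖ ≤ ρ := by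
      intro s' hs'
      exact hdiam (J s' p) (hJ s' hs' p hpC).1 p hpC
        (lt_of_le_of_lt (hfixPhi s' hs') hpδ) hpδ
    obtain ⟨E, hEdef⟩ : ∃ E : ℝ, E = ρ + 2 * ε * D + 4 * ρ * D / (θ * τ₀) := ⟨_, rfl⟩
    have hEb : E ≤ 3 * s / 32 := by
      have h2εD : 2 * ε * D = s / 16 := by
        rw [hεdef]
        field_simp
        ring
      have hρs64 : ρ ≤ s / 64 := by
        rw [hθdef] at hρθ2
        linarith
      rw [hEdef]
      linarith [hρE]
    have hxpD : ‖x - p‖ ≤ D := by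
      rw [norm_sub_rev]
      exact hCD p hpC x hx
    -- Steps 4+5 : main estimate
    have claim5 : ∀ n : ℕ, θ ≤ ‖p - xs n‖ →
        ‖(p - xs n) + t • (x - p)‖ ≤ (1 - t) * ‖p - xs n‖ + t * E := by
      intro n hbn
      have hνpos := hlam n
      have hJpC : J (lamSeq n) p ∈ C := (hJ (lamSeq n) hνpos p hpC).1
      have hJpp : ‖J (lamSeq n) p - p‖ ≤ ρ := hJsp (lamSeq n) hνpos
      have hbpos : 0 < ‖p - xs n‖ := lt_of_lt_of_le hθpos hbn
      have hbne : p - xs n ≠ 0 := norm_pos_iff.1 hbpos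
      have hxnp : ‖xs n - p‖ = ‖p - xs n‖ := norm_sub_rev _ _
      have htr : ‖xs n - p‖ ≤ ‖xs n - J (lamSeq n) p‖ + ‖J (lamSeq n) p - p‖ := by
        have h0 := dist_triangle (xs n) (J (lamSeq n) p) p
        rw [dist_eq_norm, dist_eq_norm, dist_eq_norm] at h0
        exact h0
      have hzlow : θ / 2 ≤ ‖xs n - J (lamSeq n) p‖ := by
        rw [hxnp] at htr
        linarith [hρθ2]
      have hzpos : 0 < ‖xs n - J (lamSeq n) p‖ :=
        lt_of_lt_of_le (by linarith) hzlow
      have hzne : xs n - J (lamSeq n) p ≠ 0 := norm_pos_iff.1 hzpos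
      obtain ⟨f, hf1, hfz'⟩ := exists_dual_vector ℝ (xs n - J (lamSeq n) p) (norm_ne_zero_iff.2 hzne)
      have hfz : f (xs n - J (lamSeq n) p) = ‖xs n - J (lamSeq n) p‖ := by
        exact_mod_cast hfz'
      have hacc : ∀ t' : ℝ, 0 < t' → ‖xs n - J (lamSeq n) p‖ ≤
          ‖xs n - J (lamSeq n) p + t' • ((1 / lamSeq n) • (x - xs n)
            - (1 / lamSeq n) • (p - J (lamSeq n) p))‖ := by
        intro t' ht'
        have hp1 := (hJ (lamSeq n) hνpos x hx).2
        rw [← hxsval n] at hp1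
        have hp2 := (hJ (lamSeq n) hνpos p hpC).2
        exact hA_acc t' ht' _ hp1 _ hp2
      have hfw := respriv_lemA hτ_pos hX_us _ _ hzne hacc f hf1 hfz
      have hfv : 0 ≤ f ((x - xs n) - (p - J (lamSeq n) p)) := by
        have heq : (1 / lamSeq n) • (x - xs n) - (1 / lamSeq n) • (p - J (lamSeq n) p)
            = (1 / lamSeq n) • ((x - xs n) - (p - J (lamSeq n) p)) :=
          (smul_sub _ _ _).symm
        rw [heq, map_smul, smul_eq_mul] at hfw
        calc (0:ℝ) ≤ lamSeq n * ((1 / lamSeq n)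
              * f ((x - xs n) - (p - J (lamSeq n) p))) :=
            mul_nonneg hνpos.le hfw
          _ = f ((x - xs n) - (p - J (lamSeq n) p)) := by
            field_simp
      have hfxp : ‖p - xs n‖ - ρ ≤ f (x - p) := by
        have hsum : x - p = ((x - xs n) - (p - J (lamSeq n) p))
            + (xs n - J (lamSeq n) p) := by abel
        rw [hsum, map_add, hfz]
        rw [hxnp] at htr
        linarith
      obtain ⟨g, hg1, hgb'⟩ := exists_dual_vector ℝ (p - xs n) (norm_ne_zero_iff.2 hbne)
      have hgb : g (p - xs n) = ‖p - xs n‖ := by exact_mod_cast hgb'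
      have hvne : xs n - p ≠ 0 := by
        rw [← neg_sub]
        exact neg_ne_zero.2 hbne
      have hgneg : (-g) (xs n - p) = ‖xs n - p‖ := by
        have hns : xs n - p = -(p - xs n) := by abel
        rw [hns]
        simp only [ContinuousLinearMap.neg_apply, map_neg, neg_neg]
        rw [hgb, norm_neg]
      have hgneg1 : ‖-g‖ = 1 := by rw [norm_neg, hg1]
      have hfu1 : f (‖xs n - J (lamSeq n) p‖⁻¹ • (xs n - J (lamSeq n) p)) = 1 := by
        rw [map_smul, smul_eq_mul, hfz, inv_mul_cancel₀ hzpos.ne']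
      have hhv1 : (-g) (‖xs n - p‖⁻¹ • (xs n - p)) = 1 := by
        rw [map_smul, smul_eq_mul, hgneg, inv_mul_cancel₀ (by rw [hxnp]; exact hbpos.ne')]
      have hcmp := respriv_dual_cmp hτ_pos hX_us ε hεpos _ _ f (-g)
        (respriv_unit_norm hzne) hf1 hgneg1 hfu1 hhv1 (x - p)
      have huv : ‖‖xs n - J (lamSeq n) p‖⁻¹ • (xs n - J (lamSeq n) p)
          - ‖xs n - p‖⁻¹ • (xs n - p)‖ ≤ 4 * ρ / θ := by
        refine le_trans (respriv_unit_diff_bound _ _ hzne hvne) ?_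
        have heq2 : (xs n - J (lamSeq n) p) - (xs n - p) = p - J (lamSeq n) p := by
          abel
        rw [heq2]
        have h9 : ‖p - J (lamSeq n) p‖ ≤ ρ := by rw [norm_sub_rev]; exact hJpp
        calc 2 * ‖p - J (lamSeq n) p‖ / ‖xs n - J (lamSeq n) p‖
            ≤ 2 * ρ / (θ / 2) :=
              div_le_div₀ (by linarith) (by linarith) (by linarith) hzlow
          _ = 4 * ρ / θ := by
              field_simp
              ring
      have hbound : f (x - p) - (-g) (x - p) ≤ ε * D + 4 * ρ * D / (θ * τ₀) := by
        refine le_trans hcmp ?_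
        have hfac : ε + ‖‖xs n - J (lamSeq n) p‖⁻¹ • (xs n - J (lamSeq n) p)
            - ‖xs n - p‖⁻¹ • (xs n - p)‖ / τ ε ≤ ε + (4 * ρ / θ) / τ₀ := by
          rw [← hτ₀def]
          exact add_le_add_right ((div_le_div_iff_of_pos_right hτ₀pos).2 huv) ε
        have hfacnn : (0:ℝ) ≤ ε + (4 * ρ / θ) / τ₀ :=
          add_nonneg hεpos.le (div_nonneg (div_nonneg (by linarith) hθpos.le) hτ₀pos.le)
        refine le_trans (mul_le_mul hfac hxpD (norm_nonneg _) hfacnn) ?_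
        have : (ε + (4 * ρ / θ) / τ₀) * D = ε * D + 4 * ρ * D / (θ * τ₀) := by
          field_simp
        rw [this]
      have hgxp : g (x - p) ≤ -‖p - xs n‖ + ρ + ε * D + 4 * ρ * D / (θ * τ₀) := by
        have hng : (-g) (x - p) = -g (x - p) := rfl
        rw [hng] at hbound
        linarith
      have hcond : t * ‖x - p‖ ≤ τ ε * ‖p - xs n‖ := by
        calc t * ‖x - p‖ ≤ t * D := mul_le_mul_of_nonneg_left hxpD htpos.le
          _ ≤ τ₀ * θ := htτθ
          _ ≤ τ ε * ‖p - xs n‖ := by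
              rw [← hτ₀def]
              exact mul_le_mul_of_nonneg_left hbn hτ₀pos.le
      have hsm := respriv_smooth_upper hτ_pos hX_us ε hεpos (p - xs n) (x - p) g t
        hbne hg1 hgb htpos.le hcond
      have h10 : t * g (x - p) ≤
          t * (-‖p - xs n‖ + ρ + ε * D + 4 * ρ * D / (θ * τ₀)) :=
        mul_le_mul_of_nonneg_left hgxp htpos.le
      have h11 : ε * (t * ‖x - p‖) ≤ ε * (t * D) :=
        mul_le_mul_of_nonneg_left (mul_le_mul_of_nonneg_left hxpD htpos.le) hεpos.le
      calc ‖(p - xs n) + t • (x - p)‖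
          ≤ ‖p - xs n‖ + t * g (x - p) + ε * (t * ‖x - p‖) := hsm
        _ ≤ (1 - t) * ‖p - xs n‖ + t * E := by
            rw [hEdef]
            have e1 : t * (-‖p - xs n‖ + ρ + ε * D + 4 * ρ * D / (θ * τ₀))
                = -(t * ‖p - xs n‖) + t * ρ + t * (ε * D)
                  + t * (4 * ρ * D / (θ * τ₀)) := by ring
            have e2 : ε * (t * D) = t * (ε * D) := by ring
            have e3 : (1 - t) * ‖p - xs n‖ = ‖p - xs n‖ - t * ‖p - xs n‖ := by ring
            have e4 : t * (ρ + 2 * (ε * D) + 4 * ρ * D / (θ * τ₀))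
                = t * ρ + t * (ε * D) + t * (ε * D)
                  + t * (4 * ρ * D / (θ * τ₀)) := by ring
            have e5 : t * (ρ + 2 * ε * D + 4 * ρ * D / (θ * τ₀))
                = t * (ρ + 2 * (ε * D) + 4 * ρ * D / (θ * τ₀)) := by ring
            rw [e1] at h10
            rw [e2] at h11
            rw [e5, e4, e3]
            linarith [h10, h11]
    -- Assembly
    obtain ⟨yt, hytdef⟩ : ∃ yt : X, yt = p + t • (x - p) := ⟨_, rfl⟩
    have hytC : yt ∈ C := by
      have hid : yt = (1 - t) • p + t • x := by
        rw [hytdef]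
        module
      rw [hid]
      exact hC_convex hpC hx (by linarith) htpos.le (by ring)
    have hev : ∀ᶠ n in Filter.atTop,
        ‖yt - xs n‖ ≤ max ((1 - t) * (Phi p + δ) + t * E) (θ + t * D) := by
      filter_upwards [hPhi_ev p hpC δ hδpos] with n hn
      have hid : yt - xs n = (p - xs n) + t • (x - p) := by
        rw [hytdef]
        abel
      by_cases hcase : θ ≤ ‖p - xs n‖
      · refine le_trans ?_ (le_max_left _ _)
        rw [hid]
        refine le_trans (claim5 n hcase) ?_
        have h1t : (0:ℝ) ≤ 1 - t := by linarith
        have h2 := mul_le_mul_of_nonneg_left hn.le h1t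
        linarith
      · push_neg at hcase
        refine le_trans ?_ (le_max_right _ _)
        rw [hid]
        calc ‖(p - xs n) + t • (x - p)‖ ≤ ‖p - xs n‖ + ‖t • (x - p)‖ := norm_add_le _ _
          _ ≤ θ + t * D := by
              rw [norm_smul, Real.norm_eq_abs, abs_of_pos htpos]
              have : t * ‖x - p‖ ≤ t * D := by
                exact mul_le_mul_of_nonneg_left hxpD htpos.le
              linarith
    have hPhiyt : Phi yt ≤ max ((1 - t) * (Phi p + δ) + t * E) (θ + t * D) :=
      hPhi_le yt _ hev
    have hmyt : m ≤ max ((1 - t) * (Phi p + δ) + t * E) (θ + t * D) :=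
      le_trans (hm_le yt hytC) hPhiyt
    rcases le_max_iff.1 hmyt with hcase | hcase
    · -- m ≤ (1-t)(Phi p + δ) + t E
      have hexp : (1 - t) * (Phi p + δ) = Phi p + δ - t * Phi p - t * δ := by ring
      rw [hexp] at hcase
      have htδ : 0 ≤ t * δ := mul_nonneg htpos.le hδpos.le
      have h1 : t * Phi p < 2 * δ + t * E := by linarith
      have h3 : t * E ≤ t * (3 * s / 32) := mul_le_mul_of_nonneg_left hEb htpos.le
      have h4 : (2:ℝ) * δ ≤ t * s / 32 := by linarith
      have h2 : t * Phi p ≤ t * (s / 8) := by nlinarith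
      have h6 := (mul_le_mul_iff_right₀ htpos).1 h2
      linarith
    · -- m ≤ θ + t D
      have : Phi p < θ + t * D + δ := by linarith
      rw [hθdef] at this
      linarith [htD, hδs]
  have hgoal : CauchySeq xs := by
    rw [Metric.cauchySeq_iff]
    intro e he
    obtain ⟨p, hpC, hpPhi⟩ := key (min e D) (lt_min he hDpos) (min_le_right _ _)
    have hev := hPhi_ev p hpC (min e D / 4) (by positivity)
    obtain ⟨N, hN⟩ := Filter.eventually_atTop.1 hev
    refine ⟨N, fun a ha b hb => ?_⟩
    have h1 := hN a ha
    have h2 := hN b hb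
    have hmin : min e D ≤ e := min_le_left _ _
    have hminpos : 0 < min e D := lt_min he hDpos
    calc dist (xs a) (xs b) ≤ dist (xs a) p + dist p (xs b) := dist_triangle _ _ _
      _ = ‖p - xs a‖ + ‖p - xs b‖ := by
          rw [dist_eq_norm, dist_eq_norm, norm_sub_rev]
      _ < (Phi p + min e D / 4) + (Phi p + min e D / 4) := by linarith
      _ ≤ e := by linarith
  rw [hxs] at hgoal
  exact hgoal
end

section
/- Let X be a real Banach space which is uniformly convex and uniformly smooth with modulus τ. Let C ⊆ X be a closed, convex, nonempty subset (not necessarily bounded). Let A ⊆ X × X be an accretive operator such that for every λ > 0 and every y ∈ C there exists a point J_λ y ∈ C with (J_λ y, (y − J_λ y)/λ) ∈ A. Let x ∈ C and let p ∈ C be a zero of A, i.e. (p, 0) ∈ A. Then for every sequence (λ_n) ⊆ (0,∞) with λ_n → ∞, the sequence (J_{λ_n} x) is Cauchy. -/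
open Filter

set_option maxHeartbeats 1600000 in
theorem resolvents_cauchy_unbounded
    {X : Type*} [NormedAddCommGroup X] [NormedSpace ℝ X] [CompleteSpace X]
    (η : ℝ → ℝ) (hη_range : ∀ ε : ℝ, 0 < ε → ε ≤ 2 → 0 < η ε ∧ η ε ≤ 1)
    (hX_uc : ∀ ε : ℝ, 0 < ε → ε ≤ 2 → ∀ x y : X, ‖x‖ ≤ 1 → ‖y‖ ≤ 1 →
      ε ≤ ‖x - y‖ → ‖(1 / 2 : ℝ) • (x + y)‖ ≤ 1 - η ε)
    (τ : ℝ → ℝ) (hτ_pos : ∀ ε : ℝ, 0 < ε → 0 < τ ε)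
    (hX_us : ∀ ε : ℝ, 0 < ε → ∀ x y : X, ‖x‖ = 1 → ‖y‖ ≤ τ ε →
      ‖x + y‖ + ‖x - y‖ ≤ 2 + ε * ‖y‖)
    (C : Set X) (hC_closed : IsClosed C) (hC_convex : Convex ℝ C)
    (hC_ne : C.Nonempty)
    (A : Set (X × X))
    (hA_acc : ∀ lam : ℝ, 0 < lam → ∀ p ∈ A, ∀ q ∈ A,
      ‖p.1 - q.1‖ ≤ ‖p.1 - q.1 + lam • (p.2 - q.2)‖)
    (J : ℝ → X → X)
    (hJ : ∀ lam : ℝ, 0 < lam → ∀ y ∈ C,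
      J lam y ∈ C ∧ (J lam y, (1 / lam) • (y - J lam y)) ∈ A)
    (x : X) (hx : x ∈ C) (p : X) (hpC : p ∈ C) (hp_zero : (p, (0 : X)) ∈ A) :
    ∀ lamSeq : ℕ → ℝ, (∀ n, 0 < lamSeq n) →
      Filter.Tendsto lamSeq Filter.atTop Filter.atTop →
      CauchySeq (fun n => J (lamSeq n) x) := by
  intro lam hlam hTend
  classical
  -- nonexpansiveness-type consequence of accretivity
  have hNE : ∀ s : ℝ, 0 < s → ∀ u bu v bv : X, (u, bu) ∈ A → (v, bv) ∈ A →
      ‖u - v‖ ≤ ‖(u + s • bu) - (v + s • bv)‖ := by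
    intro s hs u bu v bv h1 h2
    have h := hA_acc s hs (u, bu) h1 (v, bv) h2
    have he : (u - v) + s • (bu - bv) = (u + s • bu) - (v + s • bv) := by
      rw [smul_sub]; abel
    simpa [he] using h
  have huniq : ∀ s : ℝ, 0 < s → ∀ u bu v bv : X, (u, bu) ∈ A → (v, bv) ∈ A →
      u + s • bu = v + s • bv → u = v := by
    intro s hs u bu v bv h1 h2 he
    have h := hNE s hs u bu v bv h1 h2
    rw [he, sub_self, norm_zero] at h
    exact sub_eq_zero.mp (norm_le_zero_iff.mp h)
  set xs : ℕ → X := fun n => J (lam n) x with hxs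
  have hxsC : ∀ n, xs n ∈ C := fun n => (hJ (lam n) (hlam n) x hx).1
  have hxsA : ∀ n, (xs n, (1 / lam n) • (x - xs n)) ∈ A :=
    fun n => (hJ (lam n) (hlam n) x hx).2
  have hxs_eq : ∀ n, xs n + (lam n) • ((1 / lam n) • (x - xs n)) = x := by
    intro n
    rw [smul_smul, mul_one_div_cancel (hlam n).ne', one_smul]
    abel
  set K : ℝ := ‖x - p‖ with hK
  have hK0 : 0 ≤ K := norm_nonneg _
  have hKb : ∀ n, ‖xs n - p‖ ≤ K := by
    intro n
    have h := hNE (lam n) (hlam n) (xs n) _ p 0 (hxsA n) hp_zero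
    rw [hxs_eq n, smul_zero, add_zero] at h
    exact h
  have hx2K : ∀ n, ‖x - xs n‖ ≤ 2 * K := by
    intro n
    calc ‖x - xs n‖ ≤ ‖x - p‖ + ‖p - xs n‖ := norm_sub_le_norm_sub_add_norm_sub x p (xs n)
    _ ≤ K + K := add_le_add hK.ge (by rw [norm_sub_rev]; exact hKb n)
    _ = 2 * K := by ring
  -- the asymptotic radius function
  set ψ : X → ℝ := fun z => limsup (fun n => ‖xs n - z‖) atTop with hψ
  have hbdd : ∀ z : X, IsBoundedUnder (· ≤ ·) atTop (fun n => ‖xs n - z‖) := by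
    intro z
    refine isBoundedUnder_of ⟨K + ‖p - z‖, fun n => ?_⟩
    calc ‖xs n - z‖ ≤ ‖xs n - p‖ + ‖p - z‖ := norm_sub_le_norm_sub_add_norm_sub _ _ _
    _ ≤ K + ‖p - z‖ := by gcongr; exact hKb n
  have hcob : ∀ z : X, IsCoboundedUnder (· ≤ ·) atTop (fun n => ‖xs n - z‖) := by
    intro z
    exact (isBoundedUnder_of ⟨0, fun n => norm_nonneg _⟩ :
      IsBoundedUnder (· ≥ ·) atTop fun n => ‖xs n - z‖).isCoboundedUnder_le
  have hpsile : ∀ (z : X) (c : ℝ), (∀ᶠ n in atTop, ‖xs n - z‖ ≤ c) → ψ z ≤ c :=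
    fun z c h => limsup_le_of_le (hcob z) h
  have hpsiev : ∀ (z : X) (c : ℝ), ψ z < c → ∀ᶠ n in atTop, ‖xs n - z‖ < c :=
    fun z c h => eventually_lt_of_limsup_lt h (hbdd z)
  have hpsi0 : ∀ z : X, 0 ≤ ψ z := fun z =>
    le_limsup_of_frequently_le
      ((Eventually.of_forall fun n => norm_nonneg (xs n - z)).frequently) (hbdd z)
  have hlip : ∀ a b : X, ψ a ≤ ψ b + ‖b - a‖ := by
    intro a b
    refine le_of_forall_pos_le_add fun δ hδ => ?_
    have hev := hpsiev b (ψ b + δ) (by linarith)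
    refine hpsile a _ ?_
    filter_upwards [hev] with n hn
    calc ‖xs n - a‖ = ‖(xs n - b) + (b - a)‖ := by rw [sub_add_sub_cancel]
    _ ≤ ‖xs n - b‖ + ‖b - a‖ := norm_add_le _ _
    _ ≤ ψ b + ‖b - a‖ + δ := by linarith
  -- the set over which we minimize
  set B : Set X := C ∩ Metric.closedBall p K with hB
  have hmemB : ∀ z : X, z ∈ B ↔ z ∈ C ∧ ‖z - p‖ ≤ K := by
    intro z
    rw [hB, Set.mem_inter_iff, Metric.mem_closedBall, dist_eq_norm]
  have hpB : p ∈ B := (hmemB p).mpr ⟨hpC, by simp [hK0]⟩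
  have hxB : x ∈ B := (hmemB x).mpr ⟨hx, hK.ge⟩
  have hxsB : ∀ n, xs n ∈ B := fun n => (hmemB _).mpr ⟨hxsC n, hKb n⟩
  have hBconv : Convex ℝ B := hC_convex.inter (convex_closedBall p K)
  have hBclosed : IsClosed B := hC_closed.inter Metric.isClosed_closedBall
  set S : Set ℝ := ψ '' B with hS
  have hSne : S.Nonempty := ⟨ψ p, p, hpB, rfl⟩
  have hSbd : BddBelow S := ⟨0, by rintro s ⟨z, _, rfl⟩; exact hpsi0 z⟩
  set d : ℝ := sInf S with hd
  have hd0 : 0 ≤ d := le_csInf hSne (by rintro s ⟨z, _, rfl⟩; exact hpsi0 z)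
  have hdle : ∀ z ∈ B, d ≤ ψ z := fun z hz => csInf_le hSbd ⟨z, hz, rfl⟩
  -- uniform convexity : midpoint estimate
  have hmid : ∀ (z₁ z₂ a : X) (R ε₀ : ℝ), 0 < R → 0 < ε₀ → ε₀ ≤ 2 →
      ε₀ * R ≤ ‖z₁ - z₂‖ → ‖a - z₁‖ ≤ R → ‖a - z₂‖ ≤ R →
      ‖a - (1 / 2 : ℝ) • (z₁ + z₂)‖ ≤ (1 - η ε₀) * R := by
    intro z₁ z₂ a R ε₀ hR hε hε2 hsep h1 h2
    have hRne : R ≠ 0 := hR.ne'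
    set u : X := R⁻¹ • (a - z₁) with hu
    set v : X := R⁻¹ • (a - z₂) with hv
    have hun : ‖u‖ ≤ 1 := by
      rw [hu, norm_smul, norm_inv, Real.norm_of_nonneg hR.le]
      rw [inv_mul_le_iff₀ hR, mul_one]; exact h1
    have hvn : ‖v‖ ≤ 1 := by
      rw [hv, norm_smul, norm_inv, Real.norm_of_nonneg hR.le]
      rw [inv_mul_le_iff₀ hR, mul_one]; exact h2
    have huv : ε₀ ≤ ‖u - v‖ := by
      have he : u - v = R⁻¹ • (z₂ - z₁) := by rw [hu, hv, ← smul_sub]; congr 1; abel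
      rw [he, norm_smul, norm_inv, Real.norm_of_nonneg hR.le, norm_sub_rev]
      rw [inv_mul_eq_div, le_div_iff₀ hR]
      exact hsep
    have key := hX_uc ε₀ hε hε2 u v hun hvn huv
    have hrep : a - (1 / 2 : ℝ) • (z₁ + z₂) = R • ((1 / 2 : ℝ) • (u + v)) := by
      rw [hu, hv]
      match_scalars <;> field_simp <;> ring
    rw [hrep, norm_smul, Real.norm_of_nonneg hR.le]
    calc R * ‖(1 / 2 : ℝ) • (u + v)‖ ≤ R * (1 - η ε₀) := by gcongr
    _ = (1 - η ε₀) * R := mul_comm _ _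
  have hd2 : (0:ℝ) < d + 2 := by linarith
  -- two near-minimizers are close
  have htwo : ∀ ε : ℝ, 0 < ε → ∀ γ : ℝ, 0 < γ → γ ≤ 1 →
      γ < η (min ε (2 * (d + 2)) / (d + 2)) * (min ε (2 * (d + 2))) / 4 →
      ∀ z₁ z₂, z₁ ∈ B → z₂ ∈ B → ψ z₁ < d + γ → ψ z₂ < d + γ → ‖z₁ - z₂‖ ≤ ε := by
    intro ε hε γ hγ hγ1 hγη z₁ z₂ h1B h2B h1 h2
    by_contra hcon
    push_neg at hcon
    set ε' : ℝ := min ε (2 * (d + 2)) with hε'def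
    set ε₀ : ℝ := ε' / (d + 2) with hε₀def
    have hε'pos : 0 < ε' := lt_min hε (by linarith)
    have hε'le : ε' ≤ ε := min_le_left _ _
    have hε₀pos : 0 < ε₀ := div_pos hε'pos hd2
    have hε₀2 : ε₀ ≤ 2 := by
      rw [hε₀def, div_le_iff₀ hd2]
      calc ε' ≤ 2 * (d + 2) := min_le_right _ _
      _ = 2 * (d + 2) := rfl
    have hηpos : 0 < η ε₀ := (hη_range ε₀ hε₀pos hε₀2).1
    set R : ℝ := d + 2 * γ with hRdef
    have hR : 0 < R := by linarith
    have hev1 : ∀ᶠ n in atTop, ‖xs n - z₁‖ < R := hpsiev z₁ R (by rw [hRdef]; linarith)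
    have hev2 : ∀ᶠ n in atTop, ‖xs n - z₂‖ < R := hpsiev z₂ R (by rw [hRdef]; linarith)
    obtain ⟨n₀, hn₁, hn₂⟩ := (hev1.and hev2).exists
    have htri : ‖z₁ - z₂‖ ≤ 2 * R := by
      calc ‖z₁ - z₂‖ = ‖(z₁ - xs n₀) + (xs n₀ - z₂)‖ := by rw [sub_add_sub_cancel]
      _ ≤ ‖z₁ - xs n₀‖ + ‖xs n₀ - z₂‖ := norm_add_le _ _
      _ ≤ R + R := by
          rw [norm_sub_rev]
          exact add_le_add hn₁.le hn₂.le
      _ = 2 * R := by ring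
    have hsep : ε₀ * R ≤ ‖z₁ - z₂‖ := by
      have hRd2 : R ≤ d + 2 := by rw [hRdef]; linarith
      have : ε₀ * R ≤ ε₀ * (d + 2) := by gcongr
      have he2 : ε₀ * (d + 2) = ε' := by rw [hε₀def]; field_simp
      calc ε₀ * R ≤ ε' := by rw [← he2]; exact this
      _ ≤ ε := hε'le
      _ ≤ ‖z₁ - z₂‖ := hcon.le
    set m : X := (1 / 2 : ℝ) • (z₁ + z₂) with hm
    have hmB : m ∈ B := by
      have := hBconv h1B h2B (by norm_num : (0:ℝ) ≤ 1/2) (by norm_num : (0:ℝ) ≤ 1/2)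
        (by norm_num : (1:ℝ)/2 + 1/2 = 1)
      rw [hm, smul_add]
      exact this
    have hψm : ψ m ≤ (1 - η ε₀) * R := by
      apply hpsile
      filter_upwards [hev1, hev2] with n h1' h2'
      exact hmid z₁ z₂ (xs n) R ε₀ hR hε₀pos hε₀2 hsep h1'.le h2'.le
    have hdm : d ≤ ψ m := hdle m hmB
    have h2γ : η ε₀ * R ≤ 2 * γ := by nlinarith
    have hεR : ε' < 2 * R := lt_of_lt_of_le (lt_of_le_of_lt hε'le hcon) htri
    have hfin : η ε₀ * ε' < 4 * γ := by nlinarith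
    linarith [hγη, hfin]
  -- minimizing sequence
  have hminseq : ∀ k : ℕ, ∃ z, z ∈ B ∧ ψ z < d + 1 / ((k:ℝ) + 1) := by
    intro k
    have hpos : (0:ℝ) < 1 / ((k:ℝ) + 1) := by positivity
    obtain ⟨s, hsS, hs⟩ := exists_lt_of_csInf_lt hSne (by linarith : sInf S < d + 1 / ((k:ℝ)+1))
    obtain ⟨z, hzB, rfl⟩ := hsS
    exact ⟨z, hzB, hs⟩
  choose zs hzsB hzsψ using hminseq
  have hzsCauchy : CauchySeq zs := by
    rw [Metric.cauchySeq_iff]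
    intro ε hε
    have hε2' : 0 < ε / 2 := by linarith
    have hmin2 : 0 < min (ε/2) (2 * (d + 2)) := lt_min hε2' (by linarith)
    have hε₀pos : 0 < min (ε/2) (2 * (d + 2)) / (d + 2) := div_pos hmin2 hd2
    have hε₀2 : min (ε/2) (2 * (d + 2)) / (d + 2) ≤ 2 := by
      rw [div_le_iff₀ hd2]; exact min_le_right _ _
    have hηpos : 0 < η (min (ε/2) (2 * (d + 2)) / (d + 2)) := (hη_range _ hε₀pos hε₀2).1
    have hγbarpos : 0 < η (min (ε/2) (2 * (d + 2)) / (d + 2)) * (min (ε/2) (2 * (d + 2))) / 4 := by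
      positivity
    obtain ⟨N, hN⟩ := exists_nat_one_div_lt hγbarpos
    refine ⟨N, fun m hm n hn => ?_⟩
    have hmono : ∀ j : ℕ, N ≤ j → (1:ℝ) / ((j:ℝ) + 1) ≤ 1 / ((N:ℝ) + 1) := by
      intro j hj
      apply one_div_le_one_div_of_le (by positivity)
      have : (N:ℝ) ≤ (j:ℝ) := Nat.cast_le.mpr hj
      linarith
    have hγ1 : (1:ℝ) / ((N:ℝ) + 1) ≤ 1 := by
      rw [div_le_one (by positivity)]
      have : (0:ℝ) ≤ (N:ℝ) := Nat.cast_nonneg N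
      linarith
    have hNpos : (0:ℝ) < 1 / ((N:ℝ)+1) := by positivity
    have ham : ψ (zs m) < d + 1 / ((N:ℝ)+1) := by
      have h1 := hzsψ m
      have h2 := hmono m hm
      linarith
    have han : ψ (zs n) < d + 1 / ((N:ℝ)+1) := by
      have h1 := hzsψ n
      have h2 := hmono n hn
      linarith
    have hkey := htwo (ε/2) hε2' (1 / ((N:ℝ)+1)) hNpos hγ1
      hN (zs m) (zs n) (hzsB m) (hzsB n) ham han
    rw [dist_eq_norm]
    linarith
  obtain ⟨q, hq⟩ := cauchySeq_tendsto_of_complete hzsCauchy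
  have hqB : q ∈ B := hBclosed.mem_of_tendsto hq (Eventually.of_forall hzsB)
  have hψq : ψ q ≤ d := by
    refine le_of_forall_pos_le_add fun δ hδ => ?_
    obtain ⟨k₀, hk₀⟩ := exists_nat_one_div_lt (show (0:ℝ) < δ/2 by linarith)
    obtain ⟨N₁, hN₁⟩ := (Metric.tendsto_atTop.mp hq) (δ/2) (by linarith)
    set k := max k₀ N₁ with hk
    have h1 : (1:ℝ) / ((k:ℝ) + 1) < δ/2 := by
      apply lt_of_le_of_lt _ hk₀
      apply one_div_le_one_div_of_le (by positivity)
      have : (k₀:ℝ) ≤ (k:ℝ) := Nat.cast_le.mpr (le_max_left _ _)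
      linarith
    have h2 : ‖zs k - q‖ < δ/2 := by
      rw [← dist_eq_norm]
      exact hN₁ k (le_max_right _ _)
    calc ψ q ≤ ψ (zs k) + ‖zs k - q‖ := hlip q (zs k)
    _ ≤ (d + 1/((k:ℝ)+1)) + ‖zs k - q‖ := by linarith [hzsψ k]
    _ ≤ d + δ := by linarith
  -- uniqueness of the asymptotic center
  have hmin_unique : ∀ z ∈ B, ψ z ≤ d → z = q := by
    intro z hzB hz
    by_contra hne
    have he : 0 < ‖z - q‖ := norm_pos_iff.mpr (sub_ne_zero.mpr hne)
    set ε : ℝ := ‖z - q‖ / 2 with hεdef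
    have hε : 0 < ε := by positivity
    have hmin2 : 0 < min ε (2 * (d + 2)) := lt_min hε (by linarith)
    have hε₀pos : 0 < min ε (2 * (d + 2)) / (d + 2) := div_pos hmin2 hd2
    have hε₀2 : min ε (2 * (d + 2)) / (d + 2) ≤ 2 := by
      rw [div_le_iff₀ hd2]; exact min_le_right _ _
    have hηpos : 0 < η (min ε (2 * (d + 2)) / (d + 2)) := (hη_range _ hε₀pos hε₀2).1
    have hγbarpos : 0 < η (min ε (2 * (d + 2)) / (d + 2)) * (min ε (2 * (d + 2))) / 4 := by
      positivity
    set γbar : ℝ := η (min ε (2 * (d + 2)) / (d + 2)) * (min ε (2 * (d + 2))) / 4 with hγbar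
    have hγpos : 0 < min 1 (γbar / 2) := lt_min one_pos (by linarith)
    have hγ1 : min 1 (γbar / 2) ≤ 1 := min_le_left _ _
    have hγlt : min 1 (γbar / 2) < γbar := lt_of_le_of_lt (min_le_right _ _) (by linarith)
    have hfinal := htwo ε hε (min 1 (γbar / 2)) hγpos hγ1 hγlt z q hzB hqB
      (by linarith) (by linarith [hψq])
    rw [hεdef] at hfinal
    linarith
  -- q is a zero of A
  have hqC : q ∈ C := ((hmemB q).mp hqB).1
  have hqK : ‖q - p‖ ≤ K := ((hmemB q).mp hqB).2
  obtain ⟨hq'C, hq'A0⟩ := hJ 1 one_pos q hqC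
  have hq'A : (J 1 q, q - J 1 q) ∈ A := by simpa using hq'A0
  have hq'B : J 1 q ∈ B := by
    refine (hmemB _).mpr ⟨hq'C, ?_⟩
    have h := hNE 1 one_pos (J 1 q) (q - J 1 q) p 0 hq'A hp_zero
    simp only [one_smul, smul_zero, add_zero] at h
    have he : J 1 q + (q - J 1 q) = q := by abel
    rw [he] at h
    exact h.trans hqK
  have hψq' : ψ (J 1 q) ≤ d := by
    refine le_of_forall_pos_le_add fun δ hδ => ?_
    refine hpsile _ _ ?_
    have hev1 : ∀ᶠ n in atTop, ‖xs n - q‖ < d + δ/2 := hpsiev q _ (by linarith)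
    have hev3 : ∀ᶠ n in atTop, max 1 (4*K/δ) ≤ lam n := hTend.eventually_ge_atTop _
    filter_upwards [hev1, hev3] with n h1 h3
    have hμ1 : 1 ≤ lam n := le_trans (le_max_left _ _) h3
    have hμK : 4*K/δ ≤ lam n := le_trans (le_max_right _ _) h3
    have hμpos := hlam n
    set yn : X := (1/lam n) • x + (1 - 1/lam n) • xs n with hyn
    have hynC : yn ∈ C := by
      refine hC_convex hx (hxsC n) (by positivity) ?_ (by ring)
      have : 1/lam n ≤ 1 := by
        rw [div_le_one hμpos]; exact hμ1
      linarith
    obtain ⟨hJ1yC, hJ1yA0⟩ := hJ 1 one_pos yn hynC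
    have hJ1yA : (J 1 yn, yn - J 1 yn) ∈ A := by simpa using hJ1yA0
    have hid : xs n = J 1 yn := by
      refine huniq 1 one_pos _ _ _ _ (hxsA n) hJ1yA ?_
      rw [one_smul, one_smul]
      rw [hyn]
      match_scalars <;> field_simp <;> ring
    have hnear : ‖xs n - J 1 q‖ ≤ ‖yn - q‖ := by
      rw [hid]
      have h := hNE 1 one_pos (J 1 yn) (yn - J 1 yn) (J 1 q) (q - J 1 q) hJ1yA hq'A
      rw [one_smul, one_smul] at h
      have he : J 1 yn + (yn - J 1 yn) - (J 1 q + (q - J 1 q)) = yn - q := by abel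
      rw [he] at h
      exact h
    have hyq : ‖yn - q‖ ≤ ‖xs n - q‖ + (1/lam n) * ‖x - xs n‖ := by
      have he : yn - q = (xs n - q) + (1/lam n) • (x - xs n) := by
        rw [hyn]; match_scalars <;> field_simp <;> ring
      rw [he]
      calc ‖(xs n - q) + (1/lam n) • (x - xs n)‖
          ≤ ‖xs n - q‖ + ‖(1/lam n) • (x - xs n)‖ := norm_add_le _ _
      _ = ‖xs n - q‖ + (1/lam n) * ‖x - xs n‖ := by
          rw [norm_smul, Real.norm_of_nonneg (by positivity)]
    have hsmall : (1/lam n) * ‖x - xs n‖ ≤ δ/2 := by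
      have h2K := hx2K n
      have h4K : 4*K ≤ δ * lam n := by
        rw [div_le_iff₀ hδ] at hμK
        linarith [hμK]
      have h0 : 0 < lam n := hμpos
      rw [div_mul_eq_mul_div, div_le_iff₀ h0]
      calc 1 * ‖x - xs n‖ = ‖x - xs n‖ := one_mul _
      _ ≤ 2*K := h2K
      _ ≤ δ/2 * lam n := by linarith
    calc ‖xs n - J 1 q‖ ≤ ‖yn - q‖ := hnear
    _ ≤ ‖xs n - q‖ + (1/lam n) * ‖x - xs n‖ := hyq
    _ ≤ (d + δ/2) + δ/2 := add_le_add h1.le hsmall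
    _ = d + δ := by ring
  have hqfix : J 1 q = q := hmin_unique (J 1 q) hq'B hψq'
  have hq_zero : (q, (0:X)) ∈ A := by
    have := hq'A
    rw [hqfix, sub_self] at this
    exact this
  -- the growth inequality from accretivity with the zero q
  have hgrow : ∀ n, ∀ t : ℝ, 0 < t →
      (1 + t) * ‖xs n - q‖ ≤ ‖(xs n - q) + t • (x - q)‖ := by
    intro n t ht
    have h1t : (0:ℝ) < 1 + t := by linarith
    have hs : (0:ℝ) < t / (1 + t) := by positivity
    have h := hNE ((t/(1+t)) * lam n) (mul_pos hs (hlam n)) (xs n) _ q 0 (hxsA n) hq_zero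
    rw [smul_zero, add_zero] at h
    have he : xs n + ((t/(1+t)) * lam n) • ((1/lam n) • (x - xs n)) - q
        = (xs n - q) + (t/(1+t)) • (x - xs n) := by
      rw [smul_smul]
      have : t/(1+t) * lam n * (1/lam n) = t/(1+t) := by
        field_simp [h1t.ne', (hlam n).ne']
      rw [this]; abel
    rw [he] at h
    have he2 : (1+t) • ((xs n - q) + (t/(1+t)) • (x - xs n)) = (xs n - q) + t • (x - q) := by
      match_scalars <;> field_simp <;> ring
    calc (1 + t) * ‖xs n - q‖ ≤ (1+t) * ‖(xs n - q) + (t/(1+t)) • (x - xs n)‖ := by gcongr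
    _ = ‖(1+t) • ((xs n - q) + (t/(1+t)) • (x - xs n))‖ := by
        rw [norm_smul, Real.norm_of_nonneg h1t.le]
    _ = ‖(xs n - q) + t • (x - q)‖ := by rw [he2]
  have hd_le0 : d ≤ 0 := by
    by_contra hdpos
    push_neg at hdpos
    set D : ℝ := ‖x - q‖ with hD
    by_cases hD0 : D = 0
    · -- x = q, so all resolvents equal x
      have hxq : x = q := by
        rw [← sub_eq_zero]
        exact norm_eq_zero.mp hD0
      have hall : ∀ n, xs n = q := by
        intro n
        refine huniq (lam n) (hlam n) _ _ _ _ (hxsA n) hq_zero ?_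
        rw [smul_zero, add_zero, hxs_eq n]
        exact hxq
      have : ψ q ≤ 0 := hpsile q 0 (Eventually.of_forall fun n => by
        rw [hall n, sub_self, norm_zero])
      linarith [hdle q hqB]
    · have hDpos : 0 < D := lt_of_le_of_ne (norm_nonneg _) (Ne.symm hD0)
      have hε : (0:ℝ) < d / (2*D) := by positivity
      have hτ := hτ_pos (d/(2*D)) hε
      set t : ℝ := min (τ (d/(2*D)) * d/(2*D)) (min (d/(4*D)) 1) with ht_def
      have ht : 0 < t := by
        apply lt_min (by positivity) (lt_min (by positivity) one_pos)
      have ht1 : t ≤ 1 := le_trans (min_le_right _ _) (min_le_right _ _)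
      have htD4 : t * D ≤ d/4 := by
        have h1 : t ≤ d/(4*D) := le_trans (min_le_right _ _) (min_le_left _ _)
        calc t * D ≤ (d/(4*D)) * D := by gcongr
        _ = d/4 := by field_simp
      have htτ : t * D ≤ τ (d/(2*D)) * d / 2 := by
        have h1 : t ≤ τ (d/(2*D)) * d/(2*D) := min_le_left _ _
        calc t * D ≤ (τ (d/(2*D)) * d/(2*D)) * D := by gcongr
        _ = τ (d/(2*D)) * d / 2 := by field_simp
      set zt : X := q + t • (x - q) with hzt
      have hztB : zt ∈ B := by
        have hmem := hBconv hqB hxB (by linarith : (0:ℝ) ≤ 1 - t) (le_of_lt ht)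
          (by ring : (1 - t) + t = 1)
        have he : (1-t) • q + t • x = zt := by rw [hzt]; match_scalars <;> ring
        rw [← he]
        exact hmem
      have hdzt : d ≤ ψ zt := hdle zt hztB
      have hδ : 0 < t*d/4 := by positivity
      have hev : ∀ᶠ n in atTop, ‖xs n - q‖ < d + t*d/4 :=
        hpsiev q _ (lt_of_le_of_lt hψq (by linarith))
      have hub : ψ zt ≤ d - min (t*d/4) (d/4) := by
        refine hpsile _ _ ?_
        filter_upwards [hev] with n hn
        have hrepr : xs n - zt = (xs n - q) - t • (x - q) := by
          rw [hzt]; abel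
        by_cases hw : ‖xs n - q‖ < d/2
        · -- small case
          have : ‖xs n - zt‖ ≤ ‖xs n - q‖ + t * D := by
            rw [hrepr]
            calc ‖(xs n - q) - t • (x - q)‖ ≤ ‖xs n - q‖ + ‖t • (x - q)‖ := norm_sub_le _ _
            _ = ‖xs n - q‖ + t * D := by
                rw [norm_smul, Real.norm_of_nonneg ht.le, hD]
          have hmin : min (t*d/4) (d/4) ≤ d/4 := min_le_right _ _
          calc ‖xs n - zt‖ ≤ ‖xs n - q‖ + t * D := this
          _ ≤ d/2 + d/4 := by linarith
          _ ≤ d - min (t*d/4) (d/4) := by linarith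
        · -- main case : uniform smoothness
          push_neg at hw
          have hwpos : 0 < ‖xs n - q‖ := lt_of_lt_of_le (by linarith) hw
          have hwne : ‖xs n - q‖ ≠ 0 := hwpos.ne'
          set w : X := xs n - q with hwdef
          set wh : X := ‖w‖⁻¹ • w with hwh
          set hh : X := ‖w‖⁻¹ • (t • (x - q)) with hhh
          have hwh1 : ‖wh‖ = 1 := by
            rw [hwh, norm_smul, norm_inv, Real.norm_of_nonneg (norm_nonneg w)]
            field_simp
          have hhn : ‖hh‖ = t * D / ‖w‖ := by
            rw [hhh, norm_smul, norm_smul, norm_inv,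
              Real.norm_of_nonneg (norm_nonneg w), Real.norm_of_nonneg ht.le, hD]
            ring
          have hhle : ‖hh‖ ≤ τ (d/(2*D)) := by
            rw [hhn]
            rw [div_le_iff₀ hwpos]
            calc t * D ≤ τ (d/(2*D)) * d / 2 := htτ
            _ = τ (d/(2*D)) * (d/2) := by ring
            _ ≤ τ (d/(2*D)) * ‖w‖ := by gcongr
          have hus := hX_us (d/(2*D)) hε wh hh hwh1 hhle
          have hplus : ‖wh + hh‖ = ‖w + t • (x - q)‖ / ‖w‖ := by
            rw [hwh, hhh, ← smul_add, norm_smul, norm_inv,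
              Real.norm_of_nonneg (norm_nonneg w)]
            ring
          have hminus : ‖wh - hh‖ = ‖w - t • (x - q)‖ / ‖w‖ := by
            rw [hwh, hhh, ← smul_sub, norm_smul, norm_inv,
              Real.norm_of_nonneg (norm_nonneg w)]
            ring
          have hhn2 : ‖hh‖ * ‖w‖ = t * D := by
            rw [hhn]; field_simp
          have hsum : ‖w + t • (x - q)‖ + ‖w - t • (x - q)‖
              ≤ 2 * ‖w‖ + (d/(2*D)) * (t * D) := by
            have h2 := mul_le_mul_of_nonneg_right hus (norm_nonneg w)
            rw [add_mul, hplus, hminus] at h2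
            rw [div_mul_cancel₀ _ hwne, div_mul_cancel₀ _ hwne] at h2
            calc ‖w + t • (x - q)‖ + ‖w - t • (x - q)‖
                ≤ (2 + d/(2*D) * ‖hh‖) * ‖w‖ := by linarith [h2]
            _ = 2 * ‖w‖ + d/(2*D) * (‖hh‖ * ‖w‖) := by ring
            _ = 2 * ‖w‖ + (d/(2*D)) * (t * D) := by rw [hhn2]
          have hgr := hgrow n t ht
          rw [← hwdef] at hgr
          have hmain : ‖w - t • (x - q)‖ ≤ (1 - t) * ‖w‖ + t * d/2 := by
            have hεtD : (d/(2*D)) * (t * D) = t * d / 2 := by field_simp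
            rw [hεtD] at hsum
            linarith
          have hwub : ‖w‖ < d + t*d/4 := hn
          calc ‖xs n - zt‖ = ‖w - t • (x - q)‖ := by rw [hrepr, hwdef]
          _ ≤ (1 - t) * ‖w‖ + t * d/2 := hmain
          _ ≤ (1 - t) * (d + t*d/4) + t * d/2 := by
              have h1t : (0:ℝ) ≤ 1 - t := by linarith
              gcongr
          _ = d + t*d/4 - t*d/2 - t*(t*d/4) + t*d/2 - t*d/2 := by ring
          _ ≤ d - t*d/4 := by nlinarith
          _ ≤ d - min (t*d/4) (d/4) := by
              have : min (t*d/4) (d/4) ≤ t*d/4 := min_le_left _ _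
              linarith
      have hminpos : 0 < min (t*d/4) (d/4) := lt_min hδ (by linarith)
      linarith
  -- conclude
  have hψq0 : ψ q ≤ 0 := le_trans hψq hd_le0
  have htendq : Tendsto xs atTop (nhds q) := by
    rw [Metric.tendsto_atTop]
    intro ε hε
    have hev := hpsiev q ε (lt_of_le_of_lt hψq0 hε)
    rw [eventually_atTop] at hev
    obtain ⟨N, hN⟩ := hev
    exact ⟨N, fun n hn => by rw [dist_eq_norm]; exact hN n hn⟩
  exact htendq.cauchySeq
end
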